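/- arXiv:1608.02170 — 11 statements merged into one kernel-verified Lean document; each statement's English description precedes it below -/
import Mathlib

section
/- Let a > 1, h ≥ 1 and ℓ ≥ 1 be integers. Then gcd(a^ℓ + 1, a^h − 1) equals 1 if h/gcd(ℓ,h) is odd and a is even; equals 2 if h/gcd(ℓ,h) is odd and a is odd; and equals a^{gcd(ℓ,h)} + 1 if h/gcd(ℓ,h) is even. -/
/-!
Write `d = gcd ℓ h`, `b = a ^ d`, `ℓ = d m`, `h = d n` with `m, n` coprime. Modulo
`g = gcd (b ^ m + 1) (b ^ n - 1)` we have `b ^ m = -1` and `b ^ n = 1`, hence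
`b ^ gcd (2m) n = b ^ gcd 2 n = 1`. For odd `n` this gives `b = 1`, so `1 = -1` and `g ∣ 2`;
the parity of `a` then decides between `1` and `2`. For even `n`, `m` is odd and `b ^ 2 = 1`, so
`b = b ^ m = -1` and `g ∣ b + 1`; conversely `b + 1` divides both `b ^ m + 1` and `b ^ n - 1`.
-/

theorem Nat.Coprime.odd_of_even_right {m n : ℕ} (hmn : m.Coprime n) (hn : Even n) : Odd m := by
  by_contra hm
  rw [Nat.not_odd_iff_even, even_iff_two_dvd] at hm
  exact Nat.not_even_iff_odd.mpr (Nat.Coprime.coprime_dvd_left hm hmn).odd_of_left hn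

theorem ZMod.natCast_eq_neg_one_iff_dvd {g x : ℕ} : (x : ZMod g) = -1 ↔ g ∣ x + 1 := by
  rw [← ZMod.natCast_eq_zero_iff, Nat.cast_add, Nat.cast_one, add_eq_zero_iff_eq_neg]

theorem ZMod.natCast_eq_one_iff_dvd {g x : ℕ} (hx : 1 ≤ x) :
    (x : ZMod g) = 1 ↔ g ∣ x - 1 := by
  rw [← ZMod.natCast_eq_zero_iff, Nat.cast_sub hx, Nat.cast_one, sub_eq_zero]

section PowEqNegOne

variable {R : Type*} [Ring R] {x : R} {m n : ℕ}

theorem pow_gcd_two_eq_one_of_pow_eq_neg_one (hmn : m.Coprime n) (hxm : x ^ m = -1)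
    (hxn : x ^ n = 1) : x ^ Nat.gcd 2 n = 1 := by
  have hx2m : x ^ (2 * m) = 1 := by rw [mul_comm, pow_mul, hxm, neg_one_sq]
  rw [← hmn.gcd_mul_right_cancel 2]
  exact pow_gcd_eq_one.mpr ⟨hx2m, hxn⟩

theorem two_eq_zero_of_pow_eq_neg_one (hmn : m.Coprime n) (hn : Odd n) (hxm : x ^ m = -1)
    (hxn : x ^ n = 1) : (2 : R) = 0 := by
  have hx : x = 1 := by
    simpa [Nat.Coprime.gcd_eq_one hn.coprime_two_left] using
      pow_gcd_two_eq_one_of_pow_eq_neg_one hmn hxm hxn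
  rw [hx, one_pow] at hxm
  rw [← one_add_one_eq_two]
  nth_rw 2 [hxm]
  exact add_neg_cancel 1

theorem eq_neg_one_of_pow_eq_neg_one (hmn : m.Coprime n) (hn : Even n) (hxm : x ^ m = -1)
    (hxn : x ^ n = 1) : x = -1 := by
  have hx2 : x ^ 2 = 1 := by
    simpa [Nat.gcd_eq_left (even_iff_two_dvd.mp hn)] using
      pow_gcd_two_eq_one_of_pow_eq_neg_one hmn hxm hxn
  obtain ⟨k, rfl⟩ := hmn.odd_of_even_right hn
  rwa [pow_succ, pow_mul, hx2, one_pow, one_mul] at hxm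

end PowEqNegOne

section GcdPowAddOnePowSubOne

variable {b m n : ℕ}

theorem ZMod.natCast_pow_eq_neg_one_of_dvd {g : ℕ} (hg : g ∣ b ^ m + 1) :
    (b : ZMod g) ^ m = -1 := by
  exact_mod_cast ZMod.natCast_eq_neg_one_iff_dvd.mpr hg

theorem ZMod.natCast_pow_eq_one_of_dvd {g : ℕ} (hb : 0 < b) (hg : g ∣ b ^ n - 1) :
    (b : ZMod g) ^ n = 1 := by
  exact_mod_cast (ZMod.natCast_eq_one_iff_dvd (Nat.one_le_pow _ _ hb)).mpr hg

theorem Nat.gcd_pow_add_one_pow_sub_one_dvd_two (hb : 0 < b) (hmn : m.Coprime n) (hn : Odd n) :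
    Nat.gcd (b ^ m + 1) (b ^ n - 1) ∣ 2 := by
  have h2 : ((2 : ℕ) : ZMod (Nat.gcd (b ^ m + 1) (b ^ n - 1))) = 0 := by
    exact_mod_cast two_eq_zero_of_pow_eq_neg_one hmn hn
      (ZMod.natCast_pow_eq_neg_one_of_dvd (Nat.gcd_dvd_left _ _))
      (ZMod.natCast_pow_eq_one_of_dvd hb (Nat.gcd_dvd_right _ _))
  exact (ZMod.natCast_eq_zero_iff _ _).mp h2

theorem Nat.gcd_pow_add_one_pow_sub_one_of_even (hb : 0 < b) (hmn : m.Coprime n) (hn : Even n) :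
    Nat.gcd (b ^ m + 1) (b ^ n - 1) = b + 1 := by
  refine Nat.dvd_antisymm ?_ (Nat.dvd_gcd ?_ ?_)
  · exact ZMod.natCast_eq_neg_one_iff_dvd.mp <| eq_neg_one_of_pow_eq_neg_one hmn hn
      (ZMod.natCast_pow_eq_neg_one_of_dvd (Nat.gcd_dvd_left _ _))
      (ZMod.natCast_pow_eq_one_of_dvd hb (Nat.gcd_dvd_right _ _))
  · simpa only [one_pow] using (hmn.odd_of_even_right hn).nat_add_dvd_pow_add_pow b 1
  · have hb' : (b : ZMod (b + 1)) = -1 := ZMod.natCast_eq_neg_one_iff_dvd.mpr dvd_rfl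
    refine (ZMod.natCast_eq_one_iff_dvd (Nat.one_le_pow _ _ hb)).mp ?_
    rw [Nat.cast_pow, hb', hn.neg_one_pow]

end GcdPowAddOnePowSubOne

theorem gcd_pow_add_one_pow_sub_one_general (a h ℓ : ℕ) (ha : 1 < a) (hh : 1 ≤ h) :
    (Odd (h / Nat.gcd ℓ h) → Even a → Nat.gcd (a ^ ℓ + 1) (a ^ h - 1) = 1) ∧
    (Odd (h / Nat.gcd ℓ h) → Odd a → Nat.gcd (a ^ ℓ + 1) (a ^ h - 1) = 2) ∧
    (Even (h / Nat.gcd ℓ h) → Nat.gcd (a ^ ℓ + 1) (a ^ h - 1) = a ^ Nat.gcd ℓ h + 1) := by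
  set d := Nat.gcd ℓ h
  have hd : 0 < d := Nat.gcd_pos_of_pos_right _ hh
  have hb : 0 < a ^ d := by positivity
  have hmn : (ℓ / d).Coprime (h / d) := Nat.coprime_div_gcd_div_gcd hd
  have hpow : ∀ k, d ∣ k → a ^ k = (a ^ d) ^ (k / d) := fun k hk => by
    rw [← pow_mul, Nat.mul_div_cancel' hk]
  have hdvd_two (hn : Odd (h / d)) : Nat.gcd (a ^ ℓ + 1) (a ^ h - 1) ∣ 2 := by
    rw [hpow ℓ (Nat.gcd_dvd_left _ _), hpow h (Nat.gcd_dvd_right _ _)]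
    exact Nat.gcd_pow_add_one_pow_sub_one_dvd_two hb hmn hn
  refine ⟨fun hn ha_even => ?_, fun hn ha_odd => ?_, fun hn => ?_⟩
  · have hodd : Odd (a ^ h - 1) := Nat.Even.sub_odd (Nat.one_le_pow _ _ (by omega))
      (ha_even.pow_of_ne_zero (by omega)) odd_one
    have hg : Odd (Nat.gcd (a ^ ℓ + 1) (a ^ h - 1)) := hodd.of_dvd_nat (Nat.gcd_dvd_right _ _)
    rcases (Nat.dvd_prime Nat.prime_two).mp (hdvd_two hn) with hg1 | hg2
    · exact hg1
    · exact absurd (hg2 ▸ hg) (by decide)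
  · have h2l : 2 ∣ a ^ ℓ + 1 := even_iff_two_dvd.mp ha_odd.pow.add_one
    have h2r : 2 ∣ a ^ h - 1 := even_iff_two_dvd.mp (Nat.Odd.sub_odd ha_odd.pow odd_one)
    exact Nat.dvd_antisymm (hdvd_two hn) (Nat.dvd_gcd h2l h2r)
  · rw [hpow ℓ (Nat.gcd_dvd_left _ _), hpow h (Nat.gcd_dvd_right _ _)]
    exact Nat.gcd_pow_add_one_pow_sub_one_of_even hb hmn hn

/-- Lemma 3 (number theory): value of gcd(a^ℓ + 1, a^h − 1). -/
theorem gcd_pow_add_one_pow_sub_one (a h ℓ : ℕ) (ha : 1 < a) (hh : 1 ≤ h) (hℓ : 1 ≤ ℓ) :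
    (Odd (h / Nat.gcd ℓ h) → Even a → Nat.gcd (a ^ ℓ + 1) (a ^ h - 1) = 1) ∧
    (Odd (h / Nat.gcd ℓ h) → Odd a → Nat.gcd (a ^ ℓ + 1) (a ^ h - 1) = 2) ∧
    (Even (h / Nat.gcd ℓ h) → Nat.gcd (a ^ ℓ + 1) (a ^ h - 1) = a ^ Nat.gcd ℓ h + 1) :=
  gcd_pow_add_one_pow_sub_one_general a h ℓ ha hh
end

section
/- Let q be a power of a prime and let n be a positive integer with gcd(n,q) = 1. If there exists a positive integer ℓ such that q^ℓ ≡ −1 (mod n), then every monic irreducible divisor of x^n − 1 in GF(q)[x] is self-reciprocal. -/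
/-!
Let `y` be the class of `X` in `F[X]/(g)`. Since `g ∣ X^n - 1` we have `y^n = 1`, and since
`q^ℓ ≡ -1 (mod n)` the Frobenius power `y ↦ y^(q^ℓ)`, which permutes the roots of `g`, sends `y`
to `y⁻¹`. So `y` is a root of the reverse of `g`, i.e. `g` divides its reverse; comparing degrees
and leading coefficients, `g` is its own reciprocal.
-/

open Polynomial

/-- A polynomial `f` over a field (with `f 0 ≠ 0`) is self-reciprocal if it equals its
reciprocal `f*(x) = f(0)⁻¹ · x^{deg f} · f(1/x)`. -/
def SelfReciprocal {F : Type*} [Field F] (f : Polynomial F) : Prop :=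
  (f.coeff 0)⁻¹ • f.reverse = f

theorem Polynomial.coeff_zero_ne_zero_of_dvd_X_pow_sub_one {R : Type*} [CommRing R] [Nontrivial R]
    {g : R[X]} {n : ℕ} (hn : n ≠ 0) (hg : g ∣ X ^ n - 1) : g.coeff 0 ≠ 0 := by
  intro hg0
  have hX : (X : R[X]) ∣ X ^ n - 1 := (X_dvd_iff.2 hg0).trans hg
  simp [X_dvd_iff, hn.symm] at hX

theorem selfReciprocal_of_monic_of_dvd_reverse {F : Type*} [Field F] {g : F[X]} (hg : g.Monic)
    (hg0 : g.coeff 0 ≠ 0) (hdvd : g ∣ g.reverse) : SelfReciprocal g := by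
  have hrev : g.reverse = C g.reverse.leadingCoeff * g :=
    eq_leadingCoeff_mul_of_monic_of_dvd_of_natDegree_le hg hdvd (reverse_natDegree_le g)
  have hlead : g.reverse.leadingCoeff = g.coeff 0 := by
    rw [reverse_leadingCoeff, trailingCoeff, natTrailingDegree_eq_zero.2 (Or.inr hg0)]
  rw [SelfReciprocal, hrev, hlead, smul_eq_C_mul, ← mul_assoc, ← C_mul, inv_mul_cancel₀ hg0,
    C_1, one_mul]

theorem FiniteField.aeval_pow_card_pow_eq_zero {K A : Type*} [Field K] [Fintype K] [CommRing A]
    [Algebra K A] {f : K[X]} {x : A} (hx : aeval x f = 0) (m : ℕ) :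
    aeval (x ^ Fintype.card K ^ m) f = 0 := by
  induction m with
  | zero => simpa using hx
  | succ m ih =>
    rw [pow_succ, pow_mul, ← frobeniusAlgHom_apply K A, aeval_algHom_apply, ih, map_zero]

theorem AdjoinRoot.dvd_reverse_of_aeval_eq_zero {R : Type*} [CommRing R] {g : R[X]}
    {y : AdjoinRoot g} (hy : y * root g = 1) (hg : aeval y g = 0) : g ∣ g.reverse := by
  let : Invertible y := invertibleOfRightInverse y (root g) hy
  have hroot : aeval (⅟y) g.reverse = 0 := (eval₂_reverse_eq_zero_iff _ y g).2 hg
  rwa [invOf_eq_right_inv hy, aeval_eq, mk_eq_zero] at hroot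

theorem FiniteField.dvd_reverse_of_dvd_X_pow_sub_one {K : Type*} [Field K] [Fintype K] {g : K[X]}
    {n ℓ : ℕ} (hg : g ∣ X ^ n - 1) (hn : n ∣ Fintype.card K ^ ℓ + 1) : g ∣ g.reverse := by
  set y := AdjoinRoot.root g
  have hyn : y ^ n = 1 := by
    simpa [sub_eq_zero] using (AdjoinRoot.aeval_eq (X ^ n - 1 : K[X])).trans
      (AdjoinRoot.mk_eq_zero.2 hg)
  obtain ⟨k, hk⟩ := hn
  refine AdjoinRoot.dvd_reverse_of_aeval_eq_zero (y := y ^ Fintype.card K ^ ℓ) ?_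
    (aeval_pow_card_pow_eq_zero (AdjoinRoot.aeval_eq g ▸ AdjoinRoot.mk_self) ℓ)
  rw [← pow_succ, hk, pow_mul, hyn, one_pow]

theorem all_irreducible_divisors_selfReciprocal_general (q n : ℕ)
    (F : Type) [Field F] [Fintype F] (hF : Fintype.card F = q)
    (hn : 0 < n)
    (ℓ : ℕ) (hcong : (q : ZMod n) ^ ℓ = -1) :
    ∀ g : Polynomial F, g.Monic → Irreducible g → g ∣ X ^ n - 1 → SelfReciprocal g := by
  intro g hmonic _ hdvd
  have hn_dvd : n ∣ Fintype.card F ^ ℓ + 1 := by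
    rw [← ZMod.natCast_eq_zero_iff, hF]
    push_cast
    rw [hcong, neg_add_cancel]
  exact selfReciprocal_of_monic_of_dvd_reverse hmonic
    (coeff_zero_ne_zero_of_dvd_X_pow_sub_one hn.ne' hdvd)
    (FiniteField.dvd_reverse_of_dvd_X_pow_sub_one hdvd hn_dvd)

/-- If `q^ℓ ≡ −1 (mod n)` for some positive `ℓ`, then every monic irreducible divisor of
`x^n − 1` over `GF(q)` is self-reciprocal. -/
theorem all_irreducible_divisors_selfReciprocal (q n : ℕ) (hq : IsPrimePow q)
    (F : Type) [Field F] [Fintype F] (hF : Fintype.card F = q)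
    (hn : 0 < n) (hgcd : Nat.gcd n q = 1)
    (ℓ : ℕ) (hℓ : 0 < ℓ) (hcong : (q : ZMod n) ^ ℓ = -1) :
    ∀ g : Polynomial F, g.Monic → Irreducible g → g ∣ X ^ n - 1 → SelfReciprocal g :=
  all_irreducible_divisors_selfReciprocal_general q n F hF hn ℓ hcong
end

section
/- Let q be an even prime power (a power of 2), let m be an odd positive integer, and let n = q^m − 1. Then the only self-reciprocal monic irreducible divisor of x^n − 1 in GF(q)[x] is x − 1. -/
open Polynomial

private lemma aux_pow_card_aeval {F : Type*} [Field F] [Fintype F]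
    {K : Type*} [Field K] [Algebra F K] (z : K) (p : Polynomial F) :
    (Polynomial.aeval z p) ^ (Fintype.card F) = Polynomial.aeval (z ^ (Fintype.card F)) p := by
  rw [← map_pow, ← FiniteField.expand_card, Polynomial.expand_aeval]

private lemma aux_pow_card_pow_aeval {F : Type*} [Field F] [Fintype F]
    {K : Type*} [Field K] [Algebra F K] (z : K) (p : Polynomial F) (i : ℕ) :
    (Polynomial.aeval z p) ^ (Fintype.card F ^ i) =
      Polynomial.aeval (z ^ (Fintype.card F ^ i)) p := by
  induction i with
  | zero => simp
  | succ i ih =>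
      rw [pow_succ, pow_mul, ih, aux_pow_card_aeval, ← pow_mul, ← pow_succ]

/-- For `q` a power of `2`, `m` odd and `n = q^m − 1`, the only self-reciprocal monic
irreducible divisor of `x^n − 1` over `GF(q)` is `x − 1`. -/
theorem only_selfReciprocal_irreducible_divisor_even (q m n : ℕ)
    (hq : ∃ k : ℕ, 0 < k ∧ q = 2 ^ k) (hm : Odd m) (hm' : 0 < m) (hn : n = q ^ m - 1)
    (F : Type) [Field F] [Fintype F] (hF : Fintype.card F = q) :
    ∀ g : Polynomial F,
      (g.Monic ∧ Irreducible g ∧ g ∣ X ^ n - 1 ∧ SelfReciprocal g) ↔ g = X - 1 := by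
  obtain ⟨k, hk, hq2⟩ := hq
  have hq2' : 2 ≤ q := by
    rw [hq2]
    calc 2 = 2 ^ 1 := (pow_one 2).symm
    _ ≤ 2 ^ k := Nat.pow_le_pow_right (by norm_num) hk
  have hqm2 : 2 ≤ q ^ m := le_trans hq2' (Nat.le_self_pow hm'.ne' q)
  have hn1 : 1 ≤ n := by omega
  have hqmn : q ^ m = n + 1 := by omega
  -- characteristic 2
  have hchar : CharP F 2 := by
    have hcp : CharP F (ringChar F) := ringChar.charP F
    have hprime : (ringChar F).Prime := CharP.char_is_prime F (ringChar F)
    obtain ⟨nn, -, hcard⟩ := FiniteField.card F (ringChar F)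
    have hdvd : ringChar F ∣ 2 ^ k := by
      rw [← hq2, ← hF, hcard]
      exact dvd_pow_self _ nn.ne_zero
    have h2 : ringChar F = 2 :=
      (Nat.prime_dvd_prime_iff_eq hprime Nat.prime_two).mp (hprime.dvd_of_dvd_pow hdvd)
    exact h2 ▸ hcp
  haveI := hchar
  intro g
  constructor
  · rintro ⟨hmonic, hirr, hdvd, hsr⟩
    -- the constant coefficient is nonzero
    have hc0 : g.coeff 0 ≠ 0 := by
      intro h0
      obtain ⟨t, ht⟩ := hdvd
      have hh := congrArg (Polynomial.eval 0) ht
      rw [eval_mul, ← coeff_zero_eq_eval_zero g, h0, zero_mul, eval_sub, eval_pow,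
        eval_X, eval_one, zero_pow (by omega : n ≠ 0)] at hh
      simp at hh
    -- the constant coefficient is 1
    have hc1 : g.coeff 0 = 1 := by
      have h := congrArg (fun p => Polynomial.coeff p 0) hsr
      simp only [coeff_smul, coeff_zero_reverse, hmonic.leadingCoeff, smul_eq_mul,
        mul_one] at h
      have hsq : g.coeff 0 * g.coeff 0 = 1 := by
        nth_rewrite 2 [← h]
        exact mul_inv_cancel₀ hc0
      rcases mul_self_eq_one_iff.mp hsq with h1 | h1
      · exact h1
      · rw [h1, CharTwo.neg_eq]
    have hrev : g.reverse = g := by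
      have := hsr
      rw [SelfReciprocal, hc1, inv_one, one_smul] at this
      exact this
    set d := g.natDegree with hd
    -- coefficient symmetry
    have hsym : ∀ i ≤ d, g.coeff (d - i) = g.coeff i := by
      intro i hi
      conv_rhs => rw [← hrev]
      rw [coeff_reverse, revAt_le hi]
    -- Work in K = F[X]/(g)
    haveI : Fact (Irreducible g) := ⟨hirr⟩
    set K := AdjoinRoot g
    have hg0 : g ≠ 0 := hmonic.ne_zero
    let pb := AdjoinRoot.powerBasis hg0
    haveI : Module.Finite F K := Module.Finite.of_basis pb.basis
    haveI : Finite K := Module.finite_of_finite F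
    letI : Fintype K := Fintype.ofFinite K
    letI : Fintype Kˣ := Fintype.ofFinite Kˣ
    have hcardK : Fintype.card K = q ^ d := by
      rw [Module.card_eq_pow_finrank (K := F) (V := K), hF, pb.finrank, AdjoinRoot.powerBasis_dim]
    -- the root x satisfies x^(q^m) = x
    have hxn : (AdjoinRoot.root g) ^ n = 1 := by
      have : AdjoinRoot.mk g (X ^ n - 1) = 0 := AdjoinRoot.mk_eq_zero.mpr hdvd
      simpa [sub_eq_zero, map_pow] using this
    have hx : (AdjoinRoot.root g) ^ (q ^ m) = AdjoinRoot.root g := by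
      rw [hqmn, pow_succ, hxn, one_mul]
    -- every element of K satisfies y^(q^m) = y
    have hall : ∀ y : K, y ^ (q ^ m) = y := by
      intro y
      obtain ⟨p, rfl⟩ := AdjoinRoot.mk_surjective y
      rw [← AdjoinRoot.aeval_eq]
      have := aux_pow_card_pow_aeval (F := F) (AdjoinRoot.root g) p m
      rw [hF] at this
      rw [this, hx]
    -- get q^d - 1 ∣ q^m - 1 using a generator of Kˣ
    have hdvd_card : q ^ d - 1 ∣ q ^ m - 1 := by
      obtain ⟨ζ, hζ⟩ := IsCyclic.exists_generator (α := Kˣ)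
      have hord : orderOf ζ = q ^ d - 1 := by
        rw [orderOf_eq_card_of_forall_mem_zpowers hζ, Nat.card_units,
          Nat.card_eq_fintype_card, hcardK]
      have hζpow : ζ ^ (q ^ m - 1) = 1 := by
        have h1 : (ζ : K) ^ (q ^ m) = (ζ : K) := hall ζ
        have h2 : ζ ^ (q ^ m) = ζ := by
          ext
          push_cast
          exact h1
        have h3 : ζ ^ (q ^ m - 1) * ζ = 1 * ζ := by
          rw [one_mul, ← pow_succ, Nat.sub_add_cancel (by omega), h2]
        exact mul_right_cancel h3
      rw [← hord]
      exact orderOf_dvd_of_pow_eq_one hζpow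
    -- d is odd
    have hdodd : Odd d := by
      by_contra hde
      rw [Nat.not_odd_iff_even] at hde
      obtain ⟨s, hs⟩ := hde
      -- pass to ℤ
      have hZ : ((q:ℤ) + 1) ∣ 2 := by
        have h1 : ((q:ℤ) + 1) ∣ (q:ℤ) ^ 2 - 1 := by
          have : (q:ℤ) ^ 2 - 1 = ((q:ℤ) + 1) * ((q:ℤ) - 1) := by ring
          exact this ▸ Dvd.intro _ rfl
        have h2 : ((q:ℤ) ^ 2 - 1) ∣ (q:ℤ) ^ d - 1 := by
          have hds : (q:ℤ) ^ d = ((q:ℤ) ^ 2) ^ s := by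
            rw [← pow_mul, hs, two_mul]
          rw [hds]
          simpa using sub_dvd_pow_sub_pow ((q:ℤ)^2) 1 s
        have h3 : ((q:ℤ) ^ d - 1) ∣ (q:ℤ) ^ m - 1 := by
          have hq0 : 0 < q := by omega
          have hcast := Int.natCast_dvd_natCast.mpr hdvd_card
          rwa [Nat.cast_sub (Nat.one_le_pow _ _ hq0), Nat.cast_sub (Nat.one_le_pow _ _ hq0),
            Nat.cast_pow, Nat.cast_pow, Nat.cast_one] at hcast
        have h4 : ((q:ℤ) + 1) ∣ (q:ℤ) ^ m + 1 := by
          have heq : (q:ℤ) ^ m + 1 = (q:ℤ) ^ m - (-1) ^ m := by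
            rw [Odd.neg_one_pow hm]; ring
          rw [heq]
          simpa using sub_dvd_pow_sub_pow (q:ℤ) (-1) m
        have h5 : ((q:ℤ) + 1) ∣ ((q:ℤ) ^ m + 1) - ((q:ℤ) ^ m - 1) :=
          dvd_sub h4 (dvd_trans (dvd_trans h1 h2) h3)
        simpa using h5
      have := Int.le_of_dvd (by norm_num) hZ
      omega
    -- 1 is a root of g
    have hroot : g.eval 1 = 0 := by
      rw [Polynomial.eval_eq_sum_range]
      simp only [one_pow, mul_one]
      apply Finset.sum_involution (fun i _ => d - i)
      · intro i hi
        rw [Finset.mem_range] at hi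
        rw [hsym i (by omega)]
        exact CharTwo.add_self_eq_zero _
      · intro i hi _
        rw [Finset.mem_range] at hi
        intro heq
        obtain ⟨t, ht⟩ := hdodd
        omega
      · intro i hi
        rw [Finset.mem_range] at hi ⊢
        omega
      · intro i hi
        rw [Finset.mem_range] at hi
        omega
    -- conclude g = X - 1
    have hdvd1 : (X - C (1:F)) ∣ g := dvd_iff_isRoot.mpr hroot
    have hassoc : Associated (X - C (1:F)) g :=
      (irreducible_X_sub_C (1:F)).associated_of_dvd hirr hdvd1
    have := Polynomial.eq_of_monic_of_associated (monic_X_sub_C (1:F)) hmonic hassoc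
    rw [← this, C_1]
  · rintro rfl
    have hX1 : (X - 1 : Polynomial F) = X - C 1 := by rw [C_1]
    refine ⟨hX1 ▸ monic_X_sub_C (1:F), hX1 ▸ irreducible_X_sub_C (1:F), ?_, ?_⟩
    · have hr : IsRoot (X ^ n - 1 : Polynomial F) 1 := by simp [IsRoot]
      exact hX1 ▸ dvd_iff_isRoot.mpr hr
    · unfold SelfReciprocal
      have hdeg : (X - 1 : Polynomial F).natDegree = 1 := by
        rw [hX1]; exact natDegree_X_sub_C (1:F)
      have hc : (X - 1 : Polynomial F).coeff 0 = -1 := by simp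
      have hrev : (X - 1 : Polynomial F).reverse = 1 - X := by
        rw [reverse, hdeg]
        have hsplit : (X - 1 : Polynomial F) = X + C (-1) := by
          rw [map_neg, C_1]; ring
        rw [hsplit, reflect_add, reflect_one_X, reflect_C]
        simp
        ring
      rw [hc, hrev, inv_neg, inv_one, neg_smul, one_smul, neg_sub]
end

section
/- Let q be an odd prime power, let m be an odd prime, and let n = q^m − 1. Then the number of monic self-reciprocal divisors g of x^n − 1 in GF(q)[x] with deg g ≥ 1 equals 2^{(q^m + (m−1)q + m)/(2m)} − 1 (equivalently, the total number of reversible cyclic codes of length n over GF(q) is 2^{(q^m + (m−1)q + m)/(2m)} − 1). -/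
open Polynomial

open Finset UniqueFactorizationMonoid

/-!
Over `GF(q)` the polynomial `x^n - 1`, `n = q^m - 1`, is squarefree (`x (x^n - 1) = x^{q^m} - x`),
so its monic divisors are the products of the subsets of its set `S` of monic irreducible
factors. The reciprocal `g ↦ g*` is multiplicative and permutes `S` as an involution, so the
self-reciprocal divisors correspond to the `*`-stable subsets of `S`: one bit per orbit, that is
`2^{(|S| + |Fix|)/2}` of them.

Every factor has degree dividing `m`, hence degree `1` or `m`; the linear ones are the `q - 1`
polynomials `x - a`, `a ≠ 0`, so `m |S| = (m - 1)(q - 1) + q^m - 1`. A self-reciprocal polynomial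
of odd degree vanishes at `1` or `-1`, so a self-reciprocal factor is linear and `Fix = {x ± 1}`.
The exponent is then `(|S| + 2)/2 = (q^m + (m - 1)q + m)/(2m)`, and discarding `g = 1` gives the
`- 1`.
-/

namespace Finset

variable {α : Type*} [DecidableEq α] {σ : α → α}

theorem card_filter_invariant_powerset_eq_two_mul {s : Finset α} {a : α}
    (hs : ∀ x ∈ s, σ x ∈ s) (hσ : ∀ x ∈ s, σ (σ x) = x) (ha : a ∈ s) :
    #{t ∈ s.powerset | ∀ x ∈ t, σ x ∈ t} =
      2 * #{t ∈ (s \ {a, σ a}).powerset | ∀ x ∈ t, σ x ∈ t} := by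
  have hout : #{t ∈ s.powerset | (∀ x ∈ t, σ x ∈ t) ∧ a ∉ t} =
      #{t ∈ (s \ {a, σ a}).powerset | ∀ x ∈ t, σ x ∈ t} := by
    congr 1
    ext t
    simp only [mem_filter, mem_powerset, subset_iff, mem_sdiff, mem_insert, mem_singleton]
    grind
  have hin : #{t ∈ s.powerset | (∀ x ∈ t, σ x ∈ t) ∧ a ∈ t} =
      #{t ∈ (s \ {a, σ a}).powerset | ∀ x ∈ t, σ x ∈ t} := by
    refine card_nbij' (· \ {a, σ a}) (· ∪ {a, σ a}) ?_ ?_ ?_ ?_ <;> intro t ht <;>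
      simp only [coe_filter, Set.mem_ofPred_eq, mem_powerset, subset_iff, mem_sdiff, mem_union,
        mem_insert, mem_singleton, Finset.ext_iff] at ht ⊢ <;> grind
  rw [← card_filter_add_card_filter_not (p := (a ∈ ·)), filter_filter, filter_filter, hin,
    hout, two_mul]

theorem card_add_card_fixed_eq_sdiff_pair_add_two {s : Finset α} {a : α}
    (hs : ∀ x ∈ s, σ x ∈ s) (hσ : ∀ x ∈ s, σ (σ x) = x) (ha : a ∈ s) :
    #s + #{x ∈ s | σ x = x} =
      #(s \ {a, σ a}) + #{x ∈ s \ {a, σ a} | σ x = x} + 2 := by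
  have hsub : {a, σ a} ⊆ s := insert_subset ha (singleton_subset_iff.2 (hs a ha))
  have hdisj : Disjoint (s \ {a, σ a}) {a, σ a} := sdiff_disjoint
  have hpair : #({a, σ a} : Finset α) + #{x ∈ ({a, σ a} : Finset α) | σ x = x} = 2 := by
    by_cases hfix : σ a = a
    · simp [hfix, filter_singleton]
    · rw [card_pair (Ne.symm hfix), filter_false_of_mem (by grind)]
      rfl
  conv_lhs => rw [← sdiff_union_of_subset hsub, filter_union, card_union_of_disjoint hdisj,
    card_union_of_disjoint (disjoint_filter_filter hdisj)]
  omega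

theorem card_filter_invariant_powerset (s : Finset α)
    (hs : ∀ x ∈ s, σ x ∈ s) (hσ : ∀ x ∈ s, σ (σ x) = x) :
    #{t ∈ s.powerset | ∀ x ∈ t, σ x ∈ t} = 2 ^ ((#s + #{x ∈ s | σ x = x}) / 2) := by
  induction s using strongInduction with
  | _ s ih =>
    obtain rfl | ⟨a, ha⟩ := s.eq_empty_or_nonempty
    · simp [filter_singleton]
    have hsub : s \ {a, σ a} ⊂ s := sdiff_ssubset (by grind) (by simp)
    rw [card_filter_invariant_powerset_eq_two_mul hs hσ ha,
      ih _ hsub (by grind) (by grind), card_add_card_fixed_eq_sdiff_pair_add_two hs hσ ha,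
      Nat.add_div_right _ two_pos, pow_succ, mul_comm]

end Finset

namespace UniqueFactorizationMonoid

variable {α : Type*} [CommMonoidWithZero α] [StrongNormalizationMonoid α]
  [UniqueFactorizationMonoid α] [DecidableEq α]

theorem normalizedFactors_prod_of_subset {a : α} {t : Finset α}
    (ht : t ⊆ (normalizedFactors a).toFinset) : normalizedFactors (∏ p ∈ t, p) = t.val := by
  have hmem {p} (hp : p ∈ t.val) : p ∈ normalizedFactors a := Multiset.mem_toFinset.1 (ht hp)
  rw [prod_eq_multiset_prod, Multiset.map_id',
    normalizedFactors_prod_eq _ fun p hp => irreducible_of_normalized_factor p (hmem hp),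
    Multiset.map_congr rfl fun p hp => normalize_normalized_factor p (hmem hp), Multiset.map_id']

theorem injOn_prod_powerset_normalizedFactors (a : α) :
    Set.InjOn (fun t : Finset α => ∏ p ∈ t, p) (normalizedFactors a).toFinset.powerset := by
  intro t ht u hu htu
  have h := normalizedFactors_prod_of_subset (mem_powerset.1 ht)
  rw [show ∏ p ∈ t, p = ∏ p ∈ u, p from htu,
    normalizedFactors_prod_of_subset (mem_powerset.1 hu)] at h
  exact val_injective h.symm

theorem image_prod_powerset_normalizedFactors [Nontrivial α] {a : α} (ha : Squarefree a) :
    (fun t : Finset α => ∏ p ∈ t, p) '' (normalizedFactors a).toFinset.powerset =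
      {b | normalize b = b ∧ b ∣ a} := by
  have ha0 := ha.ne_zero
  ext b
  simp only [coe_powerset, Set.mem_image, Set.mem_preimage, Set.mem_powerset_iff, coe_subset,
    Set.mem_ofPred_eq]
  constructor
  · rintro ⟨t, ht, rfl⟩
    have hmem {p} (hp : p ∈ t) : p ∈ normalizedFactors a := Multiset.mem_toFinset.1 (ht hp)
    refine ⟨?_, ?_⟩
    · rw [← coe_normalizeHom, map_prod]
      exact prod_congr rfl fun p hp => normalize_normalized_factor p (hmem hp)
    · rw [prod_eq_multiset_prod, Multiset.map_id', ← (normalize_associated a).dvd_iff_dvd_right,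
        ← prod_normalizedFactors_eq ha0]
      exact Multiset.prod_dvd_prod_of_le ((Multiset.le_iff_subset t.nodup).2 fun p => hmem)
  · rintro ⟨hb, hba⟩
    have hb0 : b ≠ 0 := ne_zero_of_dvd_ne_zero ha0 hba
    have hnodup := (squarefree_iff_nodup_normalizedFactors hb0).1 (ha.squarefree_of_dvd hba)
    refine ⟨(normalizedFactors b).toFinset, ?_, ?_⟩
    · exact Multiset.toFinset_subset.2 (Multiset.subset_of_le
        ((dvd_iff_normalizedFactors_le_normalizedFactors hb0 ha0).1 hba))
    · rw [prod_eq_multiset_prod, Multiset.map_id', Multiset.toFinset_val, hnodup.dedup,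
        prod_normalizedFactors_eq hb0, hb]

end UniqueFactorizationMonoid

namespace Polynomial

variable {K : Type*} [Field K] {f : K[X]}

noncomputable def reciprocal : K[X] →* K[X] where
  toFun f := (f.coeff 0)⁻¹ • f.reverse
  map_one' := by rw [← C_1, reverse_C, coeff_C_zero, inv_one, one_smul]
  map_mul' f g := by
    rw [reverse_mul_of_domain, mul_coeff_zero, mul_inv, smul_mul_smul_comm]

theorem reciprocal_apply (f : K[X]) : reciprocal f = (f.coeff 0)⁻¹ • f.reverse := rfl

theorem selfReciprocal_iff : SelfReciprocal f ↔ reciprocal f = f := Iff.rfl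

theorem reverse_eq_mirror (h0 : f.coeff 0 ≠ 0) : f.reverse = f.mirror := by
  rw [mirror, natTrailingDegree_eq_zero.2 (Or.inr h0), pow_zero, mul_one]

theorem coeff_zero_reciprocal (f : K[X]) :
    (reciprocal f).coeff 0 = (f.coeff 0)⁻¹ * f.leadingCoeff := by
  rw [reciprocal_apply, coeff_smul, coeff_zero_reverse, smul_eq_mul]

theorem monic_reciprocal (h0 : f.coeff 0 ≠ 0) : (reciprocal f).Monic := by
  rw [Monic, reciprocal_apply, smul_eq_C_mul, leadingCoeff_mul, leadingCoeff_C,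
    reverse_leadingCoeff, trailingCoeff, natTrailingDegree_eq_zero.2 (Or.inr h0),
    inv_mul_cancel₀ h0]

theorem Monic.reciprocal_reciprocal (hf : f.Monic) (h0 : f.coeff 0 ≠ 0) :
    reciprocal (reciprocal f) = f := by
  have h0' : (reciprocal f).coeff 0 ≠ 0 := by
    simp [coeff_zero_reciprocal, hf.leadingCoeff, h0]
  rw [reciprocal_apply (reciprocal f), reverse_eq_mirror h0', coeff_zero_reciprocal,
    hf.leadingCoeff, reciprocal_apply, reverse_eq_mirror h0, mirror_smul, mirror_mirror,
    mul_one, inv_inv, smul_smul, mul_inv_cancel₀ h0, one_smul]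

noncomputable def mirrorMulEquiv : K[X] ≃* K[X] where
  toFun := mirror
  invFun := mirror
  left_inv := mirror_involutive
  right_inv := mirror_involutive
  map_mul' p q := mirror_mul_of_domain p q

theorem Irreducible.reciprocal (hf : Irreducible f) (h0 : f.coeff 0 ≠ 0) :
    Irreducible (reciprocal f) := by
  rw [reciprocal_apply, reverse_eq_mirror h0, smul_eq_C_mul]
  exact (irreducible_isUnit_mul (isUnit_C.2 (inv_ne_zero h0).isUnit)).2
    (by exact hf.map mirrorMulEquiv)

theorem coeff_zero_X_pow_sub_one_ne_zero {n : ℕ} (hn : n ≠ 0) :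
    (X ^ n - 1 : K[X]).coeff 0 ≠ 0 := by
  simp [Ne.symm hn]

theorem reciprocal_X_pow_sub_one {n : ℕ} (hn : n ≠ 0) :
    reciprocal (X ^ n - 1 : K[X]) = X ^ n - 1 := by
  have : (X ^ n : K[X]).reverse = 1 := by
    rw [← mul_one (X ^ n : K[X]), reverse_X_pow_mul, ← C_1, reverse_C]
  rw [reciprocal_apply, ← C_1, sub_eq_add_neg, ← C_neg, reverse_add_C]
  simp [this, Ne.symm hn, add_comm]

theorem reciprocal_X_add_C {a : K} (ha : a ≠ 0) : reciprocal (X + C a) = X + C a⁻¹ := by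
  have : (X : K[X]).reverse = 1 := by
    rw [← mul_one (X : K[X]), reverse_X_mul, ← C_1, reverse_C]
  rw [reciprocal_apply, reverse_add_C]
  simp [this, smul_eq_C_mul, ← mul_assoc, ← C_mul, ha, add_comm]

theorem selfReciprocal_X_add_C_iff {a : K} (ha : a ≠ 0) :
    SelfReciprocal (X + C a) ↔ a = 1 ∨ a = -1 := by
  rw [selfReciprocal_iff, reciprocal_X_add_C ha, add_right_inj, C_inj, ← mul_self_eq_one_iff,
    mul_eq_one_iff_eq_inv₀ ha, eq_comm]

theorem coeff_zero_ne_zero_of_dvd {g : K[X]} {P : K[X]} (hg : g ∣ P) (hP0 : P.coeff 0 ≠ 0) :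
    g.coeff 0 ≠ 0 :=
  fun h => hP0 (X_dvd_iff.1 ((X_dvd_iff.2 h).trans hg))

theorem SelfReciprocal.isRoot_one_or_neg_one (hf : SelfReciprocal f)
    (hodd : Odd f.natDegree) (h2 : (2 : K) ≠ 0) : f.IsRoot 1 ∨ f.IsRoot (-1) := by
  -- Evaluating `f = f(0)⁻¹ • f.reverse` at `1` and at `-1`, where the odd degree flips the sign,
  -- forces `f(0)⁻¹ = 1` and `f(0)⁻¹ = -1` unless `f` vanishes at one of them.
  let := invertibleOne (α := K)
  let := invertibleNeg (1 : K)
  have hrev (x : K) : eval x f = (f.coeff 0)⁻¹ * eval x f.reverse := by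
    conv_lhs => rw [← hf]
    rw [eval_smul, smul_eq_mul]
  have at_one : eval 1 f.reverse = eval 1 f := by
    simpa using eval₂_reverse_mul_pow (RingHom.id K) 1 f
  have at_neg_one : eval (-1) f.reverse = - eval (-1) f := by
    have := eval₂_reverse_mul_pow (RingHom.id K) (-1) f
    simp only [invOf_neg, invOf_one, hodd.neg_one_pow, eval₂_id] at this
    linear_combination -this
  by_contra! h
  have e1 : (f.coeff 0)⁻¹ = 1 :=
    mul_right_cancel₀ h.1 (by linear_combination -(f.coeff 0)⁻¹ * at_one - hrev 1)
  have e2 : (f.coeff 0)⁻¹ = -1 :=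
    mul_right_cancel₀ h.2 (by linear_combination (f.coeff 0)⁻¹ * at_neg_one + hrev (-1))
  exact h2 (by linear_combination e2 - e1)

theorem Irreducible.natDegree_eq_one_of_selfReciprocal (hf : Irreducible f)
    (hsr : SelfReciprocal f) (hodd : Odd f.natDegree) (h2 : (2 : K) ≠ 0) : f.natDegree = 1 := by
  obtain h | h := hsr.isRoot_one_or_neg_one hodd h2 <;>
  exact natDegree_eq_of_degree_eq_some (degree_eq_one_of_irreducible_of_root hf h)

section Divisors

variable [DecidableEq K] {P : K[X]}

theorem sum_natDegree_normalizedFactors_toFinset (hsq : Squarefree P) :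
    ∑ f ∈ (normalizedFactors P).toFinset, f.natDegree = P.natDegree := by
  rw [← natDegree_eq_of_degree_eq
      (degree_eq_degree_of_associated (prod_normalizedFactors hsq.ne_zero)),
    natDegree_multiset_prod _ (zero_notMem_normalizedFactors _), sum_eq_multiset_sum,
    Multiset.toFinset_val, ((squarefree_iff_nodup_normalizedFactors hsq.ne_zero).1 hsq).dedup]

theorem reciprocal_mem_normalizedFactors (hP : SelfReciprocal P) (hP0 : P.coeff 0 ≠ 0)
    (hf : f ∈ normalizedFactors P) : reciprocal f ∈ normalizedFactors P := by
  have hPne : P ≠ 0 := fun h => hP0 (by simp [h])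
  obtain ⟨hirr, hmonic, hfP⟩ := (Polynomial.mem_normalizedFactors_iff hPne).1 hf
  have hf0 := coeff_zero_ne_zero_of_dvd hfP hP0
  refine (Polynomial.mem_normalizedFactors_iff hPne).2
    ⟨hirr.reciprocal hf0, monic_reciprocal hf0, ?_⟩
  rw [← selfReciprocal_iff.1 hP]
  exact _root_.map_dvd reciprocal hfP

theorem reciprocal_reciprocal_of_mem_normalizedFactors (hP0 : P.coeff 0 ≠ 0)
    (hf : f ∈ normalizedFactors P) : reciprocal (reciprocal f) = f := by
  have hPne : P ≠ 0 := fun h => hP0 (by simp [h])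
  obtain ⟨-, hmonic, hfP⟩ := (Polynomial.mem_normalizedFactors_iff hPne).1 hf
  exact hmonic.reciprocal_reciprocal (coeff_zero_ne_zero_of_dvd hfP hP0)

theorem injOn_reciprocal_normalizedFactors (hP0 : P.coeff 0 ≠ 0) :
    Set.InjOn reciprocal {f | f ∈ normalizedFactors P} := fun f hf g hg hfg => by
  rw [← reciprocal_reciprocal_of_mem_normalizedFactors hP0 hf,
    ← reciprocal_reciprocal_of_mem_normalizedFactors hP0 hg, hfg]

theorem selfReciprocal_prod_iff (hP : SelfReciprocal P) (hP0 : P.coeff 0 ≠ 0)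
    {t : Finset K[X]} (ht : t ⊆ (normalizedFactors P).toFinset) :
    SelfReciprocal (∏ p ∈ t, p) ↔ ∀ p ∈ t, reciprocal p ∈ t := by
  have hinj : Set.InjOn reciprocal t := (injOn_reciprocal_normalizedFactors hP0).mono
    fun p hp => Multiset.mem_toFinset.1 (ht hp)
  have himage : t.image reciprocal ⊆ (normalizedFactors P).toFinset := by
    simp only [image_subset_iff, Multiset.mem_toFinset]
    exact fun p hp => reciprocal_mem_normalizedFactors hP hP0 (Multiset.mem_toFinset.1 (ht hp))
  rw [selfReciprocal_iff, map_prod,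
    show ∏ p ∈ t, reciprocal p = ∏ p ∈ t.image reciprocal, p from
      (prod_image (f := fun p => p) hinj).symm,
    (injOn_prod_powerset_normalizedFactors P).eq_iff (mem_powerset.2 himage) (mem_powerset.2 ht)]
  refine ⟨fun h p hp => h ▸ mem_image_of_mem _ hp, fun h => ?_⟩
  exact eq_of_subset_of_card_le (image_subset_iff.2 h) (card_image_of_injOn hinj).ge

theorem ncard_selfReciprocal_monic_dvd (hP : SelfReciprocal P) (hP0 : P.coeff 0 ≠ 0)
    (hsq : Squarefree P) :
    {g : K[X] | g.Monic ∧ g ∣ P ∧ SelfReciprocal g}.ncard =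
      2 ^ ((#(normalizedFactors P).toFinset +
        #{f ∈ (normalizedFactors P).toFinset | reciprocal f = f}) / 2) := by
  set S := (normalizedFactors P).toFinset
  have hPne : P ≠ 0 := fun h => hP0 (by simp [h])
  have hdivisors := image_prod_powerset_normalizedFactors hsq
  have hset : {g : K[X] | g.Monic ∧ g ∣ P ∧ SelfReciprocal g} =
      (fun t => ∏ p ∈ t, p) '' ↑({t ∈ S.powerset | ∀ p ∈ t, reciprocal p ∈ t} :
        Finset (Finset K[X])) := by
    ext g
    constructor
    · rintro ⟨hmonic, hgP, hg⟩
      obtain ⟨t, ht, rfl⟩ : g ∈ (fun t => ∏ p ∈ t, p) '' S.powerset :=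
        hdivisors ▸ ⟨hmonic.normalize_eq_self, hgP⟩
      exact ⟨t, mem_filter.2 ⟨ht, (selfReciprocal_prod_iff hP hP0 (mem_powerset.1 ht)).1 hg⟩,
        rfl⟩
    · rintro ⟨t, ht, rfl⟩
      obtain ⟨ht, hinv⟩ := mem_filter.1 ht
      obtain ⟨hnorm, hdvd⟩ : (∏ p ∈ t, p) ∈ {b | normalize b = b ∧ b ∣ P} :=
        hdivisors ▸ ⟨t, ht, rfl⟩
      exact ⟨(normalize_eq_self_iff_monic (ne_zero_of_dvd_ne_zero hPne hdvd)).1 hnorm, hdvd,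
        (selfReciprocal_prod_iff hP hP0 (mem_powerset.1 ht)).2 hinv⟩
  rw [hset, ((injOn_prod_powerset_normalizedFactors P).mono
    (coe_subset.2 (filter_subset _ _))).ncard_image, Set.ncard_coe_finset]
  exact card_filter_invariant_powerset S
    (fun p hp => Multiset.mem_toFinset.2 (reciprocal_mem_normalizedFactors hP hP0
      (Multiset.mem_toFinset.1 hp)))
    (fun p hp => reciprocal_reciprocal_of_mem_normalizedFactors hP0 (Multiset.mem_toFinset.1 hp))

theorem ncard_selfReciprocal_monic_dvd_of_one_le_natDegree (hP : SelfReciprocal P)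
    (hP0 : P.coeff 0 ≠ 0) (hsq : Squarefree P) :
    {g : K[X] | g.Monic ∧ g ∣ P ∧ 1 ≤ g.natDegree ∧ SelfReciprocal g}.ncard =
      2 ^ ((#(normalizedFactors P).toFinset +
        #{f ∈ (normalizedFactors P).toFinset | reciprocal f = f}) / 2) - 1 := by
  have hset : {g : K[X] | g.Monic ∧ g ∣ P ∧ 1 ≤ g.natDegree ∧ SelfReciprocal g} =
      {g : K[X] | g.Monic ∧ g ∣ P ∧ SelfReciprocal g} \ {1} := by
    ext g
    simp only [Set.mem_sdiff, Set.mem_ofPred_eq, Set.mem_singleton_iff, Nat.one_le_iff_ne_zero]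
    constructor
    · rintro ⟨hmonic, hgP, hdeg, hg⟩
      exact ⟨⟨hmonic, hgP, hg⟩, fun h => hdeg (by simp [h])⟩
    · rintro ⟨⟨hmonic, hgP, hg⟩, hne⟩
      exact ⟨hmonic, hgP, mt hmonic.natDegree_eq_zero.1 hne, hg⟩
  have hone : (1 : K[X]) ∈ {g : K[X] | g.Monic ∧ g ∣ P ∧ SelfReciprocal g} :=
    ⟨monic_one, one_dvd P, map_one reciprocal⟩
  rw [hset, Set.ncard_sdiff_singleton_of_mem hone,
    ncard_selfReciprocal_monic_dvd hP hP0 hsq]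

end Divisors

end Polynomial

namespace FiniteField

variable {F : Type*} [Field F] [Fintype F] {m : ℕ}

theorem card_pow_sub_one_ne_zero (hm : m ≠ 0) : Fintype.card F ^ m - 1 ≠ 0 :=
  Nat.sub_ne_zero_of_lt (Nat.one_lt_pow hm Fintype.one_lt_card)

theorem X_mul_X_pow_card_pow_sub_one_sub_one (m : ℕ) :
    X * (X ^ (Fintype.card F ^ m - 1) - 1 : F[X]) = X ^ Fintype.card F ^ m - X := by
  rw [mul_sub, mul_one, ← pow_succ', Nat.sub_add_cancel (Nat.one_le_pow _ _ Fintype.card_pos)]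

theorem squarefree_X_pow_card_pow_sub_one_sub_one (hm : m ≠ 0) :
    Squarefree (X ^ (Fintype.card F ^ m - 1) - 1 : F[X]) := by
  have hchar : ringChar F ∣ Fintype.card F ^ m :=
    ringChar.dvd (by rw [Nat.cast_pow, cast_card_eq_zero, zero_pow hm])
  have := galois_poly_separable (K := F) _ _ hchar
  rw [← X_mul_X_pow_card_pow_sub_one_sub_one] at this
  exact this.of_mul_right.squarefree

variable [DecidableEq F]

theorem natDegree_dvd_of_mem_normalizedFactors_X_pow_card_pow_sub_one_sub_one {f : F[X]}
    (hf : f ∈ normalizedFactors (X ^ (Fintype.card F ^ m - 1) - 1 : F[X])) : f.natDegree ∣ m :=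
  (irreducible_of_normalized_factor f hf).natDegree_dvd_of_dvd_X_pow_card_pow_sub_X <| by
    rw [Nat.card_eq_fintype_card, ← X_mul_X_pow_card_pow_sub_one_sub_one]
    exact (dvd_of_mem_normalizedFactors hf).mul_left X

theorem X_sub_C_mem_normalizedFactors_X_pow_card_pow_sub_one_sub_one (hm : m ≠ 0) {a : F}
    (ha : a ≠ 0) : X - C a ∈ normalizedFactors (X ^ (Fintype.card F ^ m - 1) - 1 : F[X]) := by
  have hP := (squarefree_X_pow_card_pow_sub_one_sub_one (F := F) hm).ne_zero
  refine (Polynomial.mem_normalizedFactors_iff hP).2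
    ⟨irreducible_X_sub_C a, monic_X_sub_C a, dvd_iff_isRoot.2 ?_⟩
  rw [IsRoot, eval_sub, eval_pow, eval_X, eval_one, sub_eq_zero,
    pow_sub₀ a ha (Nat.one_le_pow _ _ Fintype.card_pos), pow_card_pow, pow_one,
    mul_inv_cancel₀ ha]

theorem card_filter_natDegree_eq_one_normalizedFactors (hm : m ≠ 0) :
    #{f ∈ (normalizedFactors (X ^ (Fintype.card F ^ m - 1) - 1 : F[X])).toFinset |
      f.natDegree = 1} = Fintype.card F - 1 := by
  have hP := (squarefree_X_pow_card_pow_sub_one_sub_one (F := F) hm).ne_zero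
  have : {f ∈ (normalizedFactors (X ^ (Fintype.card F ^ m - 1) - 1 : F[X])).toFinset |
      f.natDegree = 1} = (univ.erase 0).image (fun a => X - C a) := by
    ext f
    simp only [mem_filter, Multiset.mem_toFinset, mem_image, mem_erase, mem_univ, and_true]
    constructor
    · rintro ⟨hf, h1⟩
      obtain ⟨-, hmonic, hfP⟩ := (Polynomial.mem_normalizedFactors_iff hP).1 hf
      refine ⟨-f.coeff 0, neg_ne_zero.2 (coeff_zero_ne_zero_of_dvd hfP
        (coeff_zero_X_pow_sub_one_ne_zero (card_pow_sub_one_ne_zero hm))), ?_⟩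
      rw [hmonic.eq_X_add_C h1, C_neg, sub_neg_eq_add, coeff_add, coeff_X_zero, coeff_C_zero,
        zero_add]
    · rintro ⟨a, ha, rfl⟩
      exact ⟨X_sub_C_mem_normalizedFactors_X_pow_card_pow_sub_one_sub_one hm ha,
        natDegree_X_sub_C a⟩
  rw [this, card_image_of_injective _ fun a b h => by simpa using h, card_erase_of_mem (mem_univ _),
    card_univ]

theorem mul_card_normalizedFactors_X_pow_card_pow_sub_one_sub_one (hm : m.Prime) :
    m * #(normalizedFactors (X ^ (Fintype.card F ^ m - 1) - 1 : F[X])).toFinset =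
      (m - 1) * (Fintype.card F - 1) + (Fintype.card F ^ m - 1) := by
  set S := (normalizedFactors (X ^ (Fintype.card F ^ m - 1) - 1 : F[X])).toFinset
  have hdeg (f) (hf : f ∈ S) (h1 : f.natDegree ≠ 1) : f.natDegree = m :=
    (hm.eq_one_or_self_of_dvd _
      (natDegree_dvd_of_mem_normalizedFactors_X_pow_card_pow_sub_one_sub_one
        (Multiset.mem_toFinset.1 hf))).resolve_left h1
  have hsum := sum_natDegree_normalizedFactors_toFinset
    (squarefree_X_pow_card_pow_sub_one_sub_one (F := F) hm.ne_zero)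
  rw [← sum_filter_add_sum_filter_not S (fun f => f.natDegree = 1),
    sum_congr rfl fun f hf => (mem_filter.1 hf).2,
    sum_congr rfl fun f hf => hdeg f (mem_filter.1 hf).1 (mem_filter.1 hf).2, sum_const, sum_const,
    card_filter_natDegree_eq_one_normalizedFactors hm.ne_zero, ← C_1, natDegree_X_pow_sub_C,
    smul_eq_mul, smul_eq_mul, mul_one] at hsum
  rw [← card_filter_add_card_filter_not (fun f => f.natDegree = 1),
    card_filter_natDegree_eq_one_normalizedFactors hm.ne_zero, ← hsum]
  have := hm.one_lt
  zify [this.le]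
  ring

theorem filter_reciprocal_eq_self_normalizedFactors (hm : Odd m) (h2 : (2 : F) ≠ 0) :
    {f ∈ (normalizedFactors (X ^ (Fintype.card F ^ m - 1) - 1 : F[X])).toFinset |
      reciprocal f = f} = {X + C 1, X + C (-1)} := by
  have hP := (squarefree_X_pow_card_pow_sub_one_sub_one (F := F) hm.pos.ne').ne_zero
  ext f
  simp only [mem_filter, Multiset.mem_toFinset, mem_insert, mem_singleton]
  constructor
  · rintro ⟨hf, hfix⟩
    obtain ⟨hirr, hmonic, hfP⟩ := (Polynomial.mem_normalizedFactors_iff hP).1 hf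
    have hodd := hm.of_dvd_nat
      (natDegree_dvd_of_mem_normalizedFactors_X_pow_card_pow_sub_one_sub_one hf)
    have hf1 := hmonic.eq_X_add_C (hirr.natDegree_eq_one_of_selfReciprocal hfix hodd h2)
    rw [hf1] at hfix ⊢
    have h0 : f.coeff 0 ≠ 0 := coeff_zero_ne_zero_of_dvd hfP
      (coeff_zero_X_pow_sub_one_ne_zero (card_pow_sub_one_ne_zero hm.pos.ne'))
    rcases (selfReciprocal_X_add_C_iff h0).1 hfix with h | h <;> simp [h]
  · have hmem (a : F) (ha : a ≠ 0) := by
      simpa using X_sub_C_mem_normalizedFactors_X_pow_card_pow_sub_one_sub_one hm.pos.ne'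
        (neg_ne_zero.2 ha)
    rintro (rfl | rfl)
    · exact ⟨hmem 1 one_ne_zero, (selfReciprocal_X_add_C_iff one_ne_zero).2 (Or.inl rfl)⟩
    · exact ⟨hmem (-1) (by simp), (selfReciprocal_X_add_C_iff (by simp)).2 (Or.inr rfl)⟩

end FiniteField

theorem count_reversible_cyclic_codes_odd_general (q m n : ℕ)
    (hqodd : Odd q) (hm : Nat.Prime m) (hmodd : Odd m)
    (hn : n = q ^ m - 1)
    (F : Type) [Field F] [Fintype F] (hF : Fintype.card F = q) :
    {g : Polynomial F | g.Monic ∧ g ∣ X ^ n - 1 ∧ 1 ≤ g.natDegree ∧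
        SelfReciprocal g}.ncard = 2 ^ ((q ^ m + (m - 1) * q + m) / (2 * m)) - 1 := by
  classical
  subst hn hF
  have hn0 := FiniteField.card_pow_sub_one_ne_zero (F := F) hm.ne_zero
  have h2 : (2 : F) ≠ 0 := Ring.two_ne_zero fun h =>
    Nat.not_even_iff_odd.2 hqodd (Nat.even_iff.2 (FiniteField.even_card_of_char_two h))
  have hfixed : X + C 1 ≠ (X + C (-1) : F[X]) :=
    (add_right_injective (X : F[X])).ne (C_injective.ne fun h => h2 (by linear_combination h))
  rw [ncard_selfReciprocal_monic_dvd_of_one_le_natDegree (reciprocal_X_pow_sub_one hn0)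
    (coeff_zero_X_pow_sub_one_ne_zero hn0)
    (FiniteField.squarefree_X_pow_card_pow_sub_one_sub_one hm.ne_zero),
    FiniteField.filter_reciprocal_eq_self_normalizedFactors hmodd h2, card_pair hfixed]
  have hcard := FiniteField.mul_card_normalizedFactors_X_pow_card_pow_sub_one_sub_one (F := F) hm
  have hexp : Fintype.card F ^ m + (m - 1) * Fintype.card F + m =
      m * (#(normalizedFactors (X ^ (Fintype.card F ^ m - 1) - 1 : F[X])).toFinset + 2) := by
    have := Nat.one_le_pow m _ (Fintype.card_pos (α := F))
    zify [hm.one_le, Fintype.card_pos (α := F), this] at hcard ⊢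
    linear_combination -hcard
  rw [hexp, mul_comm 2 m, Nat.mul_div_mul_left _ _ hm.pos]

/-- For `q` an odd prime power, `m` an odd prime and `n = q^m − 1`, the number of monic
self-reciprocal divisors of `x^n − 1` of degree at least `1` over `GF(q)` (equivalently,
the number of reversible cyclic codes of length `n` over `GF(q)`) is
`2^{(q^m + (m−1)q + m)/(2m)} − 1`. -/
theorem count_reversible_cyclic_codes_odd (q m n : ℕ)
    (hq : IsPrimePow q) (hqodd : Odd q) (hm : Nat.Prime m) (hmodd : Odd m)
    (hn : n = q ^ m - 1)
    (F : Type) [Field F] [Fintype F] (hF : Fintype.card F = q) :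
    {g : Polynomial F | g.Monic ∧ g ∣ X ^ n - 1 ∧ 1 ≤ g.natDegree ∧
        SelfReciprocal g}.ncard = 2 ^ ((q ^ m + (m - 1) * q + m) / (2 * m)) - 1 :=
  count_reversible_cyclic_codes_odd_general q m n hqodd hm hmodd hn F hF
end

section
/- Let q be a prime power, let ℓ ≥ 1 be an integer, let n = q^ℓ + 1 and m = 2ℓ, and let β be a primitive n-th root of unity in GF(q^m). Let δ be an integer with 2 ≤ δ ≤ n. If c = (c_0, c_1, ..., c_{n−1}) ∈ GF(q)^n is a nonzero vector (with GF(q) viewed as a subfield of GF(q^m)) such that ∑_{i=0}^{n−1} c_i β^{it} = 0 for every integer t with 0 ≤ t ≤ δ − 2, then the Hamming weight |{i : c_i ≠ 0}| of c is at least 2(δ − 1). -/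
/-!
The map `x ↦ x ^ (q ^ ℓ)` is a `GF(q)`-algebra endomorphism of `GF(q^m)` sending `β` to
`β ^ (q ^ ℓ) = β⁻¹`, so the parity checks at `β ^ t` also hold at `β ^ (-t)`. A codeword
therefore has the `2δ - 3` consecutive zeros `β ^ t`, `|t| ≤ δ - 2`, and the BCH bound gives
weight at least `2δ - 2`.
-/

open scoped Classical

open Finset

theorem lt_card_filter_ne_zero_of_sum_mul_pow_eq_zero {R ι : Type*} [CommRing R] [IsDomain R]
    [Fintype ι] {a x : ι → R} (hx : Function.Injective x) (ha : a ≠ 0) {D : ℕ}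
    (h : ∀ j < D, ∑ i, a i * x i ^ j = 0) : D < #{i | a i ≠ 0} := by
  by_contra! hD
  set S : Finset ι := {i | a i ≠ 0}
  let e : Fin #S ≃ S := S.equivFin.symm
  have hsum : ∀ j, ∑ k, a (e k) * x (e k) ^ j = ∑ i, a i * x i ^ j := fun j => by
    rw [e.sum_comp (fun i : S => a i * x i ^ j), sum_coe_sort S (fun i => a i * x i ^ j)]
    exact sum_filter_of_ne fun i _ hi => left_ne_zero_of_mul hi
  have hzero : (fun k => a (e k)) = 0 :=
    Matrix.eq_zero_of_forall_pow_sum_mul_pow_eq_zero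
      (hx.comp (Subtype.val_injective.comp e.injective))
      fun j => (hsum j).trans (h j (j.isLt.trans_le hD))
  obtain ⟨i, hi⟩ := Function.ne_iff.mp ha
  have hiS : i ∈ S := mem_filter.mpr ⟨mem_univ i, hi⟩
  exact hi (by simpa using congrFun hzero (e.symm ⟨i, hiS⟩))

theorem IsPrimitiveRoot.lt_card_filter_ne_zero_of_sum_mul_zpow_eq_zero {K : Type*} [Field K]
    {n : ℕ} {β : K} (hβ : IsPrimitiveRoot β n) {b : Fin n → K} (hb : b ≠ 0) (s : ℤ) {D : ℕ}
    (h : ∀ j < D, ∑ i : Fin n, b i * β ^ (((i : ℕ) : ℤ) * (s + j)) = 0) : D < #{i | b i ≠ 0} := by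
  have hn : n ≠ 0 := by
    rintro rfl
    exact hb (Subsingleton.elim _ _)
  have hβ0 : β ≠ 0 := hβ.ne_zero hn
  have hinj : Function.Injective fun i : Fin n => β ^ (i : ℕ) :=
    fun i j hij => Fin.ext (hβ.pow_inj i.isLt j.isLt hij)
  have hshift : (fun i : Fin n => b i * β ^ (((i : ℕ) : ℤ) * s)) ≠ 0 := by
    obtain ⟨i, hi⟩ := Function.ne_iff.mp hb
    exact Function.ne_iff.mpr ⟨i, mul_ne_zero hi (zpow_ne_zero _ hβ0)⟩
  convert lt_card_filter_ne_zero_of_sum_mul_pow_eq_zero hinj hshift fun j hj => ?_ using 2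
  · simp [zpow_ne_zero _ hβ0]
  · rw [← h j hj]
    refine sum_congr rfl fun i _ => ?_
    rw [mul_add, zpow_add₀ hβ0, mul_assoc, ← zpow_natCast, ← zpow_natCast, ← zpow_mul]

theorem FiniteField.frobeniusAlgHom_pow_apply (K R : Type*) [Field K] [Fintype K] [CommRing R]
    [Algebra K R] (k : ℕ) (x : R) : (frobeniusAlgHom K R ^ k) x = x ^ Fintype.card K ^ k := by
  rw [AlgHom.coe_pow, coe_frobeniusAlgHom, pow_iterate]

theorem FiniteField.sum_algebraMap_mul_pow_eq_zero_of_pow_card_pow_eq {K L ι : Type*} [Field K]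
    [Fintype K] [CommRing L] [Algebra K L] [Fintype ι] {k : ℕ} {x y : L}
    (hxy : x ^ Fintype.card K ^ k = y) (b : ι → K) (e : ι → ℕ)
    (h : ∑ i, algebraMap K L (b i) * x ^ e i = 0) : ∑ i, algebraMap K L (b i) * y ^ e i = 0 := by
  have hfrob := congrArg (frobeniusAlgHom K L ^ k) h
  rw [map_sum, map_zero] at hfrob
  convert hfrob using 2 with i
  rw [map_mul, AlgHom.commutes, frobeniusAlgHom_pow_apply, pow_right_comm, hxy]

theorem reversible_BCH_bound_q_pow_add_one_general (q ℓ n δ : ℕ)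
    (hn : n = q ^ ℓ + 1)
    (F E : Type) [Field F] [Fintype F] [Field E] [Algebra F E]
    (hF : Fintype.card F = q)
    (β : E) (hβ : IsPrimitiveRoot β n)
    (c : Fin n → F) (hc : c ≠ 0)
    (hzero : ∀ t : ℕ, t ≤ δ - 2 →
      ∑ i : Fin n, algebraMap F E (c i) * β ^ ((i : ℕ) * t) = 0) :
    2 * (δ - 1) ≤ (Finset.univ.filter fun i : Fin n => c i ≠ 0).card := by
  have hβinv : β ^ Fintype.card F ^ ℓ = β⁻¹ :=
    eq_inv_of_mul_eq_one_left (by rw [← pow_succ, hF, ← hn, hβ.pow_eq_one])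
  have hsymm : ∀ t : ℤ, |t| ≤ ↑(δ - 2) →
      ∑ i : Fin n, algebraMap F E (c i) * β ^ (((i : ℕ) : ℤ) * t) = 0 := by
    intro t ht
    rw [abs_le] at ht
    obtain ⟨k, rfl | rfl⟩ := Int.eq_nat_or_neg t
    · rw [← hzero k (by omega)]
      exact sum_congr rfl fun i _ => by rw [← Nat.cast_mul, zpow_natCast]
    · rw [← FiniteField.sum_algebraMap_mul_pow_eq_zero_of_pow_card_pow_eq hβinv c _
        (hzero k (by omega))]
      exact sum_congr rfl fun i _ => by
        rw [mul_neg, ← Nat.cast_mul, zpow_neg, zpow_natCast, inv_pow]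
  have hcE : (fun i => algebraMap F E (c i)) ≠ 0 := by
    simpa [funext_iff, Function.ne_iff] using hc
  have hbch := hβ.lt_card_filter_ne_zero_of_sum_mul_zpow_eq_zero hcE (-↑(δ - 2))
    (D := 2 * (δ - 2) + 1) fun j hj => hsymm _ (by rw [abs_le]; omega)
  simp only [map_ne_zero] at hbch
  omega

/-- BCH-type bound for the reversible code `C_{(q,n,δ,0)}` of length `n = q^ℓ + 1`:
any nonzero codeword, i.e. any nonzero `c ∈ GF(q)^n` with
`∑_i c_i β^{it} = 0` for all `0 ≤ t ≤ δ − 2`, has Hamming weight at least `2(δ − 1)`. -/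
theorem reversible_BCH_bound_q_pow_add_one (q ℓ n m δ : ℕ) (hq : IsPrimePow q)
    (hℓ : 1 ≤ ℓ) (hn : n = q ^ ℓ + 1) (hm : m = 2 * ℓ)
    (hδ : 2 ≤ δ) (hδ' : δ ≤ n)
    (F E : Type) [Field F] [Fintype F] [Field E] [Fintype E] [Algebra F E]
    (hF : Fintype.card F = q) (hE : Fintype.card E = q ^ m)
    (β : E) (hβ : IsPrimitiveRoot β n)
    (c : Fin n → F) (hc : c ≠ 0)
    (hzero : ∀ t : ℕ, t ≤ δ - 2 →
      ∑ i : Fin n, algebraMap F E (c i) * β ^ ((i : ℕ) * t) = 0) :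
    2 * (δ - 1) ≤ (Finset.univ.filter fun i : Fin n => c i ≠ 0).card :=
  reversible_BCH_bound_q_pow_add_one_general q ℓ n δ hn F E hF β hβ c hc hzero
end

section
/- Let q be a prime power, let m ≥ 1 be an integer, and let n = q^m − 1. For 0 ≤ i ≤ n−1 let ω_q(i) denote the sum of the digits of i in its q-adic expansion, and for t ≥ 1 set I_{(q,n,t)} = {i : 1 ≤ i ≤ n−1 and 1 ≤ ω_q(i) ≤ t} and −I_{(q,n,t)} = {n − a : a ∈ I_{(q,n,t)}}. If 1 ≤ t ≤ ⌈(q−1)m/2⌉ − 1, then I_{(q,n,t)} ∩ (−I_{(q,n,t)}) = ∅. -/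
lemma sum_digits_add_mul (q c d : ℕ) (hq : 2 ≤ q) (hc : c < q) :
    (Nat.digits q (c + q * d)).sum = c + (Nat.digits q d).sum := by
  rcases Nat.eq_zero_or_pos (c + q * d) with h | h
  · have hc0 : c = 0 := by omega
    have hd0 : d = 0 := by
      rcases Nat.mul_eq_zero.mp (by omega : q * d = 0) with h' | h' <;> omega
    simp [hc0, hd0]
  · rw [Nat.digits_def' (by omega : 1 < q) h]
    simp [Nat.add_mul_mod_self_left, Nat.add_mul_div_left _ _ (by omega : 0 < q),
      Nat.mod_eq_of_lt hc, Nat.div_eq_of_lt hc]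

lemma sum_digits_compl (q : ℕ) (hq : 2 ≤ q) :
    ∀ m a, a < q ^ m →
      (Nat.digits q (q ^ m - 1 - a)).sum + (Nat.digits q a).sum = (q - 1) * m
  | 0, a, h => by
    have ha0 : a = 0 := by simpa [Nat.lt_one_iff] using h
    simp [ha0]
  | m + 1, a, h => by
    have hq0 : 0 < q := by omega
    have hXpos : 1 ≤ q ^ m := Nat.one_le_pow _ _ hq0
    have hpow : q ^ (m + 1) = q * q ^ m := by ring
    have ha' : a / q < q ^ m := Nat.div_lt_of_lt_mul (by omega)
    have hmod : a % q < q := Nat.mod_lt _ hq0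
    have hdm : q * (a / q) + a % q = a := Nat.div_add_mod a q
    have key : q ^ (m + 1) - 1 - a = (q - 1 - a % q) + q * (q ^ m - 1 - a / q) := by
      rw [Nat.mul_sub, Nat.mul_sub, mul_one]
      have h1 : q * (a / q) + q ≤ q * q ^ m := by
        have h2 : q * (a / q + 1) ≤ q * q ^ m := Nat.mul_le_mul_left q (by omega)
        have h3 : q * (a / q + 1) = q * (a / q) + q := by ring
        omega
      omega
    have ih := sum_digits_compl q hq m (a / q) ha'
    have ha : (Nat.digits q a).sum = a % q + (Nat.digits q (a / q)).sum := by
      conv_lhs => rw [show a = a % q + q * (a / q) by omega]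
      exact sum_digits_add_mul q _ _ hq hmod
    rw [key, sum_digits_add_mul q _ _ hq (by omega), ha]
    have hring : (q - 1) * (m + 1) = (q - 1) * m + (q - 1) := by ring
    omega

/-- Lemma 16: for `n = q^m − 1` and `1 ≤ t ≤ ⌈(q−1)m/2⌉ − 1`, the set
`I_{(q,n,t)} = {i : 1 ≤ i ≤ n−1, 1 ≤ ω_q(i) ≤ t}` (where `ω_q` is the `q`-ary digit sum)
is disjoint from `−I_{(q,n,t)} = {n − a : a ∈ I_{(q,n,t)}}`. -/
theorem digit_sum_set_disjoint_neg (q m n t : ℕ) (hq : IsPrimePow q) (hm : 1 ≤ m)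
    (hn : n = q ^ m - 1) (ht1 : 1 ≤ t) (ht2 : t ≤ ((q - 1) * m + 1) / 2 - 1) :
    {i : ℕ | 1 ≤ i ∧ i ≤ n - 1 ∧ 1 ≤ (Nat.digits q i).sum ∧ (Nat.digits q i).sum ≤ t} ∩
      ((n - ·) ''
        {i : ℕ | 1 ≤ i ∧ i ≤ n - 1 ∧ 1 ≤ (Nat.digits q i).sum ∧ (Nat.digits q i).sum ≤ t})
      = ∅ := by
  have hq2 : 2 ≤ q := hq.two_le
  ext i
  simp only [Set.mem_inter_iff, Set.mem_setOf_eq, Set.mem_image, Set.mem_empty_iff_false,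
    iff_false]
  rintro ⟨⟨hi1, hi2, hi3, hi4⟩, a, ⟨ha1, ha2, ha3, ha4⟩, rfl⟩
  have hqm : q ≤ q ^ m := Nat.le_self_pow (by omega) q
  have haq : a < q ^ m := by omega
  have hcompl := sum_digits_compl q hq2 m a haq
  have heq : n - a = q ^ m - 1 - a := by omega
  rw [heq] at hi3 hi4
  omega
end

section
/- Let q ≥ 3 be a prime power, let m ≥ 2 be an integer, let n = (q^m − 1)/(q − 1), let e = ⌊(m−1)/2⌋ and δ = q^e, and let J = ∪_{1 ≤ i ≤ δ−1} C_i be the union of the q-cyclotomic cosets modulo n of 1, 2, ..., δ−1. Then J ∩ (−J) = ∅, where −J = {n − a : a ∈ J}. Equivalently, for all integers i, j with 1 ≤ i, j ≤ δ−1 and all integers k ≥ 0, i + j q^k ≢ 0 (mod n). -/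
/-- The `q`-cyclotomic coset of `a` modulo `n`. -/
def cosetC (q n a : ℕ) : Set ℕ := {b | ∃ j : ℕ, b = a * q ^ j % n}

private lemma bch_key (q m n : ℕ) (hq3 : 3 ≤ q) (hm : 3 ≤ m)
    (hn : n * (q - 1) = q ^ m - 1)
    (i j k : ℕ) (hi1 : 1 ≤ i) (hi2 : i ≤ q ^ ((m - 1) / 2) - 1)
    (hj1 : 1 ≤ j) (hj2 : j ≤ q ^ ((m - 1) / 2) - 1)
    (hk : 2 * k ≤ m) : ¬ n ∣ i + j * q ^ k := by
  intro hdvd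
  set e := (m - 1) / 2 with he
  have hq1 : 1 ≤ q := by omega
  have he1 : 1 ≤ q ^ e := Nat.one_le_pow _ _ (by omega)
  have hk1 : 1 ≤ q ^ k := Nat.one_le_pow _ _ (by omega)
  -- n ≥ q^(m-1) + q^(m-2) + 1
  have hA : q ^ (m - 2) * q = q ^ (m - 1) := by
    rw [← pow_succ]; congr 1; omega
  have hB : q ^ (m - 1) * q = q ^ m := by
    rw [← pow_succ]; congr 1; omega
  have hAq : q ≤ q ^ (m - 2) := by
    have := Nat.pow_le_pow_right hq1 (show 1 ≤ m - 2 by omega)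
    simpa using this
  have hnge : q ^ (m - 1) + q ^ (m - 2) + 1 ≤ n := by
    have hqm0 : 1 ≤ q ^ m := Nat.one_le_pow _ _ (by omega)
    have hnZ : (n : ℤ) * ((q : ℤ) - 1) = (q : ℤ) ^ m - 1 := by
      zify [hq1, hqm0] at hn
      exact hn
    have hAz : ((q : ℤ)) ^ (m - 2) * q = (q : ℤ) ^ (m - 1) := by exact_mod_cast hA
    have hBz : ((q : ℤ)) ^ (m - 1) * q = (q : ℤ) ^ m := by exact_mod_cast hB
    have hAqz : (q : ℤ) ≤ (q : ℤ) ^ (m - 2) := by exact_mod_cast hAq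
    have hq3z : (3 : ℤ) ≤ (q : ℤ) := by exact_mod_cast hq3
    by_contra hcon
    push_neg at hcon
    have hconz : (n : ℤ) < (q : ℤ) ^ (m - 1) + (q : ℤ) ^ (m - 2) + 1 := by
      exact_mod_cast hcon
    nlinarith [hnZ, hAz, hBz, hAqz, hq3z, hconz,
      mul_le_mul_of_nonneg_right (by linarith : (n : ℤ) ≤ (q : ℤ) ^ (m - 1) + (q : ℤ) ^ (m - 2)) (by linarith : (0 : ℤ) ≤ (q : ℤ) - 1)]
  -- upper bound for i + j * q^k
  have hem : q ^ e ≤ q ^ (m - 2) := Nat.pow_le_pow_right hq1 (by omega)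
  have hekle : q ^ (e + k) ≤ q ^ (m - 1) := Nat.pow_le_pow_right hq1 (by omega)
  have hjk : j * q ^ k + q ^ k ≤ q ^ (m - 1) := by
    have h1 : (j + 1) * q ^ k ≤ q ^ e * q ^ k :=
      Nat.mul_le_mul_right _ (by omega)
    rw [← pow_add] at h1
    have h2 : (j + 1) * q ^ k = j * q ^ k + q ^ k := by ring
    omega
  have hpos : 0 < i + j * q ^ k := by positivity
  have hle := Nat.le_of_dvd hpos hdvd
  have hi2' : i + 1 ≤ q ^ e := by omega
  linarith [hle, hjk, hnge, hi2', hem, hk1]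

private lemma bch_part2 (q m n : ℕ) (hq3 : 3 ≤ q) (hm : 2 ≤ m)
    (hn : n * (q - 1) = q ^ m - 1) :
    ∀ i j k : ℕ, 1 ≤ i → i ≤ q ^ ((m - 1) / 2) - 1 →
      1 ≤ j → j ≤ q ^ ((m - 1) / 2) - 1 → ¬ n ∣ i + j * q ^ k := by
  intro i j k hi1 hi2 hj1 hj2 hdvd
  by_cases hm3 : 3 ≤ m
  case neg =>
    have : m = 2 := by omega
    subst this
    simp at hi2
    omega
  have hq1 : 1 ≤ q := by omega
  have hqm1 : 1 ≤ q ^ m := Nat.one_le_pow _ _ (by omega)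
  have hn0 : 0 < n := by
    rcases Nat.eq_zero_or_pos n with h | h
    · exfalso
      subst h
      simp at hn
      have h2 : q ^ 2 ≤ q ^ m := Nat.pow_le_pow_right hq1 (by omega)
      have h9 : 9 ≤ q ^ 2 := by nlinarith
      omega
    · exact h
  have h1 : (1 : ℕ) ≡ q ^ m [MOD n] :=
    (Nat.modEq_iff_dvd' hqm1).mpr ⟨q - 1, hn.symm⟩
  have hqk : q ^ k ≡ q ^ (k % m) [MOD n] := by
    conv_lhs => rw [show k = m * (k / m) + k % m from (Nat.div_add_mod k m).symm]
    rw [pow_add, pow_mul]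
    calc (q ^ m) ^ (k / m) * q ^ (k % m)
        ≡ 1 ^ (k / m) * q ^ (k % m) [MOD n] := ((h1.pow _).symm).mul_right _
      _ = q ^ (k % m) := by rw [one_pow, one_mul]
  have hdvd2 : n ∣ i + j * q ^ (k % m) := by
    have hmeq : i + j * q ^ k ≡ i + j * q ^ (k % m) [MOD n] :=
      (hqk.mul_left j).add_left i
    exact (Nat.modEq_zero_iff_dvd).mp
      (hmeq.symm.trans ((Nat.modEq_zero_iff_dvd).mpr hdvd))
  set k' := k % m with hk'def
  have hk'm : k' < m := Nat.mod_lt _ (by omega)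
  by_cases hh : 2 * k' ≤ m
  · exact bch_key q m n hq3 hm3 hn i j k' hi1 hi2 hj1 hj2 hh hdvd2
  · have hd3 : n ∣ (i + j * q ^ k') * q ^ (m - k') := hdvd2.mul_right _
    have hexp : (i + j * q ^ k') * q ^ (m - k') =
        i * q ^ (m - k') + j * q ^ m := by
      rw [add_mul, mul_assoc, ← pow_add, show k' + (m - k') = m by omega]
    rw [hexp] at hd3
    have hmeq : i * q ^ (m - k') + j * q ^ m ≡
        i * q ^ (m - k') + j * 1 [MOD n] :=
      (h1.symm.mul_left j).add_left _
    have hd4 : n ∣ j + i * q ^ (m - k') := by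
      have := (Nat.modEq_zero_iff_dvd).mp
        (hmeq.symm.trans ((Nat.modEq_zero_iff_dvd).mpr hd3))
      rw [mul_one] at this
      rwa [add_comm] at this
    exact bch_key q m n hq3 hm3 hn j i (m - k') hj1 hj2 hi1 hi2 (by omega) hd4

/-- Lemma 18: for `n = (q^m − 1)/(q − 1)`, `δ = q^{⌊(m−1)/2⌋}` and
`J = ∪_{1 ≤ i ≤ δ−1} C_i`, one has `J ∩ (−J) = ∅`; equivalently
`i + j q^k ≢ 0 (mod n)` for all `1 ≤ i, j ≤ δ−1` and `k ≥ 0`. -/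
theorem BCH_cosets_disjoint_neg (q m n δ : ℕ) (hq : IsPrimePow q) (hq3 : 3 ≤ q)
    (hm : 2 ≤ m) (hn : n = (q ^ m - 1) / (q - 1)) (hδ : δ = q ^ ((m - 1) / 2)) :
    ((⋃ i ∈ Set.Icc 1 (δ - 1), cosetC q n i) ∩
      ((n - ·) '' ⋃ i ∈ Set.Icc 1 (δ - 1), cosetC q n i) = ∅) ∧
    (∀ i j k : ℕ, 1 ≤ i → i ≤ δ - 1 → 1 ≤ j → j ≤ δ - 1 →
      ¬ (n ∣ i + j * q ^ k)) := by
  have hq1 : 1 ≤ q := by omega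
  have hdvd : q - 1 ∣ q ^ m - 1 := by
    have := Nat.sub_dvd_pow_sub_pow q 1 m
    simpa using this
  have hnmul : n * (q - 1) = q ^ m - 1 := by
    rw [hn, Nat.div_mul_cancel hdvd]
  have part2 := bch_part2 q m n hq3 hm hnmul
  have hqm1 : 1 ≤ q ^ m := Nat.one_le_pow _ _ (by omega)
  have hn0 : 0 < n := by
    rcases Nat.eq_zero_or_pos n with h | h
    · exfalso
      rw [h] at hnmul
      simp at hnmul
      have h2 : q ^ 2 ≤ q ^ m := Nat.pow_le_pow_right hq1 (by omega)
      have : 9 ≤ q ^ 2 := by nlinarith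
      omega
    · exact h
  have h1 : (1 : ℕ) ≡ q ^ m [MOD n] :=
    (Nat.modEq_iff_dvd' hqm1).mpr ⟨q - 1, hnmul.symm⟩
  constructor
  · apply Set.eq_empty_iff_forall_notMem.mpr
    rintro x ⟨hx1, hx2⟩
    simp only [Set.mem_iUnion, cosetC, Set.mem_setOf_eq, Set.mem_image,
      Set.mem_Icc] at hx1 hx2
    obtain ⟨i, ⟨hi1, hi2⟩, a, hxa⟩ := hx1
    obtain ⟨y, ⟨j, ⟨hj1, hj2⟩, b, hyb⟩, hxy⟩ := hx2
    have hyn : y < n := by rw [hyb]; exact Nat.mod_lt _ hn0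
    have hxn : x < n := by rw [hxa]; exact Nat.mod_lt _ hn0
    have hsum : x + y = n := by omega
    have hd : n ∣ i * q ^ a + j * q ^ b := by
      have h := Nat.add_mod (i * q ^ a) (j * q ^ b) n
      rw [← hxa, ← hyb, hsum, Nat.mod_self] at h
      exact Nat.dvd_of_mod_eq_zero h
    have hd2 : n ∣ (i * q ^ a + j * q ^ b) * q ^ (a * (m - 1)) := hd.mul_right _
    obtain ⟨mm, rfl⟩ : ∃ mm, m = mm + 1 := ⟨m - 1, by omega⟩
    have hexp : (i * q ^ a + j * q ^ b) * q ^ (a * (mm + 1 - 1)) =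
        i * (q ^ (mm + 1)) ^ a + j * q ^ (b + a * (mm + 1 - 1)) := by
      rw [add_mul, mul_assoc, mul_assoc, ← pow_add, ← pow_add, ← pow_mul]
      have : a + a * (mm + 1 - 1) = (mm + 1) * a := by simp; ring
      rw [this]
    rw [hexp] at hd2
    have hmeq : i * (q ^ (mm + 1)) ^ a + j * q ^ (b + a * (mm + 1 - 1)) ≡
        i * 1 ^ a + j * q ^ (b + a * (mm + 1 - 1)) [MOD n] :=
      (((h1.pow a).symm).mul_left i).add_right _
    have hd3 : n ∣ i + j * q ^ (b + a * (mm + 1 - 1)) := by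
      have := (Nat.modEq_zero_iff_dvd).mp
        (hmeq.symm.trans ((Nat.modEq_zero_iff_dvd).mpr hd2))
      simpa using this
    exact part2 i j (b + a * (mm + 1 - 1)) hi1 (hδ ▸ hi2) hj1 (hδ ▸ hj2) hd3
  · intro i j k h1 h2 h3 h4
    exact part2 i j k h1 (hδ ▸ h2) h3 (hδ ▸ h4)
end

section
/- Let q ≥ 3 be a prime power, let m ≥ 2 be an integer, let n = (q^m − 1)/(q − 1), and let δ be an integer with 2 ≤ δ ≤ q^{⌊(m−1)/2⌋}. Then the set {0} ∪ ⋃_{i=1}^{δ−1} (C_i ∪ (−C_i)) ⊆ Z_n has cardinality exactly 1 + 2m⌈(δ−1)(q−1)/q⌉, where −C_i = {n − a : a ∈ C_i}. Consequently, the reversible BCH code C_{(q,n,2δ,1−δ)} of length n, whose generator polynomial has exactly the roots β^s for s in this set (β a primitive n-th root of unity in GF(q^m)), has dimension n − 1 − 2m⌈(δ−1)(q−1)/q⌉. -/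
/-!
Since `n = 1 + q + ⋯ + q^(m-1)`, we have `q^m = 1` in `ZMod n` and `q^(m-1) < n`. Let
`0 < a, b < q^t` with `2t < m`, and suppose `a q^k ≡ ±b (mod n)` with `k < m`. If `k ≤ m-1-t`, both
sides are natural numbers whose sum is below `q^(m-1) < n`, so the congruence is the equality
`a q^k = b`; otherwise multiplying by `q^(m-k)` gives `b q^(m-k) ≡ ±a` with `m-k ≤ t ≤ m-1-t`, and
the same applies. So if `q ∤ a, b`, then `k = 0`, the sign is `+` and `a = b`. Hence for the
`d - ⌊d/q⌋ = ⌈d(q-1)/q⌉` numbers `a ≤ d` prime to `q`, the `2m` residues `±a q^j` (`j < m`) are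
nonzero and pairwise distinct, and every `±i q^j` with `1 ≤ i ≤ d` is one of them.
-/

open Finset

namespace ReversibleBCH

def cosetLeaders (q d : ℕ) : Finset ℕ := {a ∈ Ioc 0 d | ¬ q ∣ a}

variable {q m n t : ℕ}

theorem card_cosetLeaders (d : ℕ) : #(cosetLeaders q d) = d - d / q := by
  have h := card_filter_add_card_filter_not (s := Ioc 0 d) (q ∣ ·)
  rw [Nat.Ioc_filter_dvd_card_eq_div, Nat.card_Ioc] at h
  unfold cosetLeaders
  omega

theorem sub_div_eq_mul_sub_one_add_sub_one_div (hq : 0 < q) (d : ℕ) :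
    d - d / q = (d * (q - 1) + q - 1) / q := by
  obtain ⟨p, rfl⟩ : ∃ p, q = p + 1 := ⟨q - 1, by omega⟩
  have hr := Nat.mod_lt d hq
  have hd := Nat.div_add_mod d (p + 1)
  set a := d / (p + 1)
  set r := d % (p + 1)
  have hd' : d = p * a + a + r := by rw [← hd]; ring
  rw [show d * (p + 1 - 1) + (p + 1) - 1 = d * p + p by rw [Nat.add_sub_cancel]; omega,
    show d - a = p * a + r by omega, hd']
  symm
  apply Nat.div_eq_of_lt_le <;> nlinarith

theorem mul_pow_add_lt_pow {a b k s : ℕ} (hq : 0 < q) (ha : a < q ^ t) (hb : b < q ^ t)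
    (hk : k ≤ s) (hts : t ≤ s) : a * q ^ k + b < q ^ (t + s) := by
  have h1 : a * q ^ k ≤ a * q ^ s := Nat.mul_le_mul_left a (Nat.pow_le_pow_right hq hk)
  have h2 : q ^ t ≤ q ^ s := Nat.pow_le_pow_right hq hts
  have h3 : (a + 1) * q ^ s ≤ q ^ t * q ^ s := Nat.mul_le_mul_right _ ha
  rw [pow_add]
  nlinarith

theorem pow_sub_one_le_geomSum (hm : m ≠ 0) : q ^ (m - 1) ≤ ∑ j ∈ range m, q ^ j :=
  single_le_sum (f := (q ^ ·)) (fun _ _ => Nat.zero_le _) (mem_range.2 (by omega))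

theorem natCast_pow_eq_one (hn : n = ∑ j ∈ range m, q ^ j) : (q : ZMod n) ^ m = 1 := by
  have h : ((∑ j ∈ range m, q ^ j : ℕ) : ZMod n) = 0 := by rw [← hn, ZMod.natCast_self]
  push_cast at h
  rw [← sub_eq_zero, ← geom_sum_mul, h, zero_mul]

theorem intCast_units_mul_self {R : Type*} [Ring R] (ε : ℤˣ) : ((ε : ℤ) : R) * (ε : ℤ) = 1 := by
  rw [← Int.cast_mul, ← Units.val_mul, Int.units_mul_self, Units.val_one, Int.cast_one]

theorem mul_pow_eq_of_natCast_mul_pow_eq_units_mul {a b k s : ℕ} {ε : ℤˣ} (hq : 0 < q)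
    (hn : q ^ (t + s) ≤ n) (ha : a < q ^ t) (hb : b < q ^ t) (hb0 : b ≠ 0) (hk : k ≤ s)
    (hts : t ≤ s) (h : (a : ZMod n) * q ^ k = (ε : ℤ) * b) : ε = 1 ∧ a * q ^ k = b := by
  have hlt := (mul_pow_add_lt_pow hq ha hb hk hts).trans_le hn
  rcases Int.units_eq_one_or ε with rfl | rfl
  · refine ⟨rfl, ?_⟩
    have h' : ((a * q ^ k : ℕ) : ZMod n) = b := by push_cast; simpa using h
    rwa [ZMod.natCast_eq_natCast_iff', Nat.mod_eq_of_lt (by omega),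
      Nat.mod_eq_of_lt (by omega)] at h'
  · have h' : ((a * q ^ k + b : ℕ) : ZMod n) = 0 := by push_cast; simp [h]
    rw [ZMod.natCast_eq_zero_iff] at h'
    exact absurd (Nat.eq_zero_of_dvd_of_lt h' hlt) (by omega)

theorem eq_of_natCast_mul_pow_eq_units_mul {a b k : ℕ} {ε : ℤˣ} (hq : 0 < q)
    (hn : n = ∑ j ∈ range m, q ^ j) (ht : 2 * t < m) (ha : a < q ^ t) (hb : b < q ^ t)
    (hqa : ¬ q ∣ a) (hqb : ¬ q ∣ b) (hk : k < m) (h : (a : ZMod n) * q ^ k = (ε : ℤ) * b) :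
    ε = 1 ∧ k = 0 ∧ a = b := by
  have hN : q ^ (t + (m - 1 - t)) ≤ n := by
    rw [show t + (m - 1 - t) = m - 1 by omega, hn]
    exact pow_sub_one_le_geomSum (by omega)
  have hne : ∀ {c}, ¬ q ∣ c → c ≠ 0 := by
    rintro c hc rfl
    exact hc (dvd_zero q)
  rcases le_or_gt k (m - 1 - t) with hks | hks
  · obtain ⟨rfl, hab⟩ :=
      mul_pow_eq_of_natCast_mul_pow_eq_units_mul hq hN ha hb (hne hqb) hks (by omega) h
    obtain rfl | hk0 := eq_or_ne k 0
    · simpa using hab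
    · exact absurd (hab ▸ dvd_mul_of_dvd_right (dvd_pow_self q hk0) a) hqb
  · have h' : (b : ZMod n) * q ^ (m - k) = (ε : ℤ) * a := by
      calc (b : ZMod n) * q ^ (m - k) = (ε : ℤ) * ((ε : ℤ) * b) * q ^ (m - k) := by
            rw [← mul_assoc, intCast_units_mul_self, one_mul]
        _ = (ε : ℤ) * (a * q ^ (k + (m - k))) := by rw [← h]; ring
        _ = (ε : ℤ) * a := by rw [Nat.add_sub_cancel' hk.le, natCast_pow_eq_one hn, mul_one]
    obtain ⟨-, hba⟩ :=
      mul_pow_eq_of_natCast_mul_pow_eq_units_mul hq hN hb ha (hne hqa) (by omega) (by omega) h'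
    exact absurd (hba ▸ dvd_mul_of_dvd_right (dvd_pow_self q (by omega)) b) hqa

theorem natCast_mul_pow_ne_zero (hn : n = ∑ j ∈ range m, q ^ j) (hm : m ≠ 0) {i : ℕ}
    (hi0 : i ≠ 0) (hin : i < n) (j : ℕ) : (i : ZMod n) * q ^ j ≠ 0 := by
  have hu : IsUnit (q : ZMod n) := IsUnit.of_pow_eq_one (natCast_pow_eq_one hn) hm
  rw [Ne, (hu.pow j).mul_left_eq_zero, ZMod.natCast_eq_zero_iff]
  exact fun h => hi0 (Nat.eq_zero_of_dvd_of_lt h hin)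

theorem injOn_units_mul_natCast_mul_pow {s : Finset ℕ} (hq : 0 < q)
    (hn : n = ∑ j ∈ range m, q ^ j) (ht : 2 * t < m) (hs : ∀ a ∈ s, a < q ^ t ∧ ¬ q ∣ a) :
    Set.InjOn (fun x : ℤˣ × ℕ × ℕ => ((x.1 : ℤ) : ZMod n) * x.2.1 * q ^ x.2.2)
      ↑(univ ×ˢ s ×ˢ range m : Finset (ℤˣ × ℕ × ℕ)) := by
  rintro ⟨ε, a, j⟩ hx ⟨ε', b, k⟩ hy hxy
  simp only [coe_product, coe_univ, coe_range, Set.mem_prod, Set.mem_univ, mem_coe,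
    Set.mem_Iio, true_and] at hx hy hxy
  wlog hkj : k ≤ j generalizing ε a j ε' b k
  · exact (this ε' b k ε a j hxy.symm hy hx (by omega)).symm
  have hu : IsUnit (q : ZMod n) := IsUnit.of_pow_eq_one (natCast_pow_eq_one hn) (by omega)
  have h : (a : ZMod n) * q ^ (j - k) = ((ε * ε' : ℤˣ) : ℤ) * b := by
    rw [← (hu.pow k).mul_left_inj]
    calc (a : ZMod n) * q ^ (j - k) * q ^ k = (ε : ℤ) * (ε : ℤ) * a * q ^ (j - k + k) := by
          rw [intCast_units_mul_self, pow_add]; ring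
      _ = (ε : ℤ) * ((ε : ℤ) * a * q ^ j) := by rw [Nat.sub_add_cancel hkj]; ring
      _ = (ε : ℤ) * ((ε' : ℤ) * b * q ^ k) := by rw [hxy]
      _ = _ := by push_cast; ring
  obtain ⟨hεε', hjk, rfl⟩ := eq_of_natCast_mul_pow_eq_units_mul hq hn ht
    (hs a hx.1).1 (hs b hy.1).1 (hs a hx.1).2 (hs b hy.1).2 (by omega) h
  rw [mul_eq_one_iff_eq_inv, Int.units_inv_eq_self] at hεε'
  simp [hεε', show j = k by omega]

theorem cosetC_union_image_sub_eq [NeZero n] {i : ℕ}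
    (hi : ∀ j, (i : ZMod n) * (q : ZMod n) ^ j ≠ 0) :
    cosetC q n i ∪ (n - ·) '' cosetC q n i =
      ZMod.val '' Set.range
        (fun x : ℤˣ × ℕ => ((x.1 : ℤ) : ZMod n) * (i : ZMod n) * (q : ZMod n) ^ x.2) := by
  have hval : ∀ j, i * q ^ j % n = ((i : ZMod n) * q ^ j).val := fun j => by
    rw [← Nat.cast_pow, ← Nat.cast_mul, ZMod.val_natCast]
  have hneg : ∀ j, n - i * q ^ j % n = (-((i : ZMod n) * q ^ j)).val := fun j => by
    have := NeZero.mk (hi j)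
    rw [ZMod.val_neg_of_ne_zero, hval]
  ext b
  simp only [cosetC, Set.mem_union, Set.mem_image, Set.mem_ofPred_eq, Set.mem_range, Prod.exists]
  constructor
  · rintro (⟨j, rfl⟩ | ⟨_, ⟨j, rfl⟩, rfl⟩)
    · exact ⟨_, ⟨1, j, rfl⟩, by simp [hval]⟩
    · exact ⟨_, ⟨-1, j, rfl⟩, by simp [hneg]⟩
  · rintro ⟨_, ⟨ε, j, rfl⟩, rfl⟩
    rcases Int.units_eq_one_or ε with rfl | rfl
    · exact Or.inl ⟨j, by simp [hval]⟩
    · exact Or.inr ⟨_, ⟨j, rfl⟩, by simp [hneg]⟩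

theorem iUnion_range_units_mul_natCast_mul_pow (hq : 1 < q) (hqm : (q : ZMod n) ^ m = 1)
    (hm : m ≠ 0) (d : ℕ) :
    ⋃ i ∈ Set.Icc 1 d, Set.range (fun x : ℤˣ × ℕ => ((x.1 : ℤ) : ZMod n) * i * q ^ x.2) =
      (fun x : ℤˣ × ℕ × ℕ => ((x.1 : ℤ) : ZMod n) * x.2.1 * q ^ x.2.2) ''
        ↑(univ ×ˢ cosetLeaders q d ×ˢ range m : Finset (ℤˣ × ℕ × ℕ)) := by
  ext y
  simp only [Set.mem_iUnion, Set.mem_range, Set.mem_image, coe_product, coe_univ, coe_range,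
    Set.mem_prod, Set.mem_univ, mem_coe, Set.mem_Iio, true_and, Prod.exists, Set.mem_Icc,
    cosetLeaders, mem_filter, mem_Ioc, exists_prop]
  constructor
  · rintro ⟨i, hi, ε, j, rfl⟩
    obtain ⟨e, a, hqa, rfl⟩ := Nat.exists_eq_pow_mul_and_not_dvd (show i ≠ 0 by omega) q hq.ne'
    have ha : 0 < a := Nat.pos_of_ne_zero (by rintro rfl; exact hqa (dvd_zero q))
    have had : a ≤ d := (Nat.le_mul_of_pos_left a (pow_pos (by omega) e)).trans hi.2
    refine ⟨ε, a, (e + j) % m, ⟨⟨⟨ha, had⟩, hqa⟩, Nat.mod_lt _ (by omega)⟩, ?_⟩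
    rw [← pow_eq_pow_mod _ hqm, pow_add]
    push_cast
    ring
  · rintro ⟨ε, a, j, ⟨⟨ha, -⟩, -⟩, rfl⟩
    exact ⟨a, ⟨by omega, ha.2⟩, ε, j, rfl⟩

theorem ncard_zero_union_iUnion_cosetC_union_image_sub (hq : 1 < q)
    (hn : n = ∑ j ∈ range m, q ^ j) (ht : 2 * t < m) {d : ℕ} (hd : d < q ^ t) :
    ({0} ∪ ⋃ i ∈ Set.Icc 1 d, (cosetC q n i ∪ (n - ·) '' cosetC q n i)).ncard =
      1 + 2 * m * (d - d / q) := by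
  have hm : m ≠ 0 := by omega
  have hdn : d < n := hd.trans_le <|
    (Nat.pow_le_pow_right (by omega) (by omega)).trans (hn ▸ pow_sub_one_le_geomSum hm)
  have : NeZero n := ⟨by omega⟩
  set f := fun x : ℤˣ × ℕ × ℕ => ((x.1 : ℤ) : ZMod n) * x.2.1 * q ^ x.2.2
  set P : Finset (ℤˣ × ℕ × ℕ) := univ ×ˢ cosetLeaders q d ×ˢ range m
  have hleaders : ∀ a ∈ cosetLeaders q d, 0 < a ∧ a ≤ d ∧ ¬ q ∣ a := by
    simp [cosetLeaders, and_assoc]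
  have hX : {0} ∪ ⋃ i ∈ Set.Icc 1 d, (cosetC q n i ∪ (n - ·) '' cosetC q n i) =
      ZMod.val '' ((insert 0 (P.image f) : Finset (ZMod n)) : Set (ZMod n)) := by
    rw [coe_insert, coe_image, Set.image_insert_eq, ZMod.val_zero, Set.insert_eq,
      ← iUnion_range_units_mul_natCast_mul_pow hq (natCast_pow_eq_one hn) hm, Set.image_iUnion₂]
    refine congrArg _ (Set.iUnion₂_congr fun i hi => cosetC_union_image_sub_eq ?_)
    exact natCast_mul_pow_ne_zero hn hm (Nat.one_le_iff_ne_zero.mp hi.1) (hi.2.trans_lt hdn)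
  have h0 : 0 ∉ P.image f := by
    simp only [mem_image, not_exists, not_and, P, f, mem_product, mem_univ, true_and, mem_range]
    rintro ⟨ε, a, j⟩ ⟨ha, -⟩ h
    obtain ⟨ha0, had, -⟩ := hleaders a ha
    rcases Int.units_eq_one_or ε with rfl | rfl <;>
      simp [natCast_mul_pow_ne_zero hn hm ha0.ne' (by omega)] at h
  have hinj : Set.InjOn f ↑P := injOn_units_mul_natCast_mul_pow (by omega) hn ht
    fun a ha => ⟨(hleaders a ha).2.1.trans_lt hd, (hleaders a ha).2.2⟩
  rw [hX, Set.ncard_image_of_injective _ (ZMod.val_injective n), Set.ncard_coe_finset,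
    card_insert_of_notMem h0, card_image_of_injOn hinj, card_product, card_product, card_univ,
    Fintype.card_units_int, card_range, card_cosetLeaders]
  ring

end ReversibleBCH

open ReversibleBCH

theorem reversible_BCH_dimension_projective_general (q m n δ : ℕ)
    (hq3 : 3 ≤ q) (hm : 2 ≤ m) (hn : n = (q ^ m - 1) / (q - 1))
    (hδ' : δ ≤ q ^ ((m - 1) / 2)) :
    ({0} ∪ ⋃ i ∈ Set.Icc 1 (δ - 1), (cosetC q n i ∪ (n - ·) '' cosetC q n i)).ncard =
      1 + 2 * m * (((δ - 1) * (q - 1) + q - 1) / q) ∧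
    n - ({0} ∪ ⋃ i ∈ Set.Icc 1 (δ - 1),
        (cosetC q n i ∪ (n - ·) '' cosetC q n i)).ncard =
      n - 1 - 2 * m * (((δ - 1) * (q - 1) + q - 1) / q) := by
  have hd : δ - 1 < q ^ ((m - 1) / 2) := by
    have := Nat.one_le_pow ((m - 1) / 2) q (by omega)
    omega
  have hcard := ncard_zero_union_iUnion_cosetC_union_image_sub (by omega)
    (hn.trans (Nat.geomSum_eq (by omega) m).symm) (by omega) hd
  rw [sub_div_eq_mul_sub_one_add_sub_one_div (by omega)] at hcard
  exact ⟨hcard, by rw [hcard, Nat.sub_sub]⟩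

/-- Theorem 20: for `n = (q^m − 1)/(q − 1)` and `2 ≤ δ ≤ q^{⌊(m−1)/2⌋}`, the set
`{0} ∪ ⋃_{i=1}^{δ−1} (C_i ∪ (−C_i))` has exactly `1 + 2m⌈(δ−1)(q−1)/q⌉` elements;
consequently the reversible BCH code `C_{(q,n,2δ,1−δ)}`, whose dimension is `n` minus
this cardinality, has dimension `n − 1 − 2m⌈(δ−1)(q−1)/q⌉`. -/
theorem reversible_BCH_dimension_projective (q m n δ : ℕ) (hq : IsPrimePow q)
    (hq3 : 3 ≤ q) (hm : 2 ≤ m) (hn : n = (q ^ m - 1) / (q - 1))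
    (hδ : 2 ≤ δ) (hδ' : δ ≤ q ^ ((m - 1) / 2)) :
    ({0} ∪ ⋃ i ∈ Set.Icc 1 (δ - 1), (cosetC q n i ∪ (n - ·) '' cosetC q n i)).ncard =
      1 + 2 * m * (((δ - 1) * (q - 1) + q - 1) / q) ∧
    n - ({0} ∪ ⋃ i ∈ Set.Icc 1 (δ - 1),
        (cosetC q n i ∪ (n - ·) '' cosetC q n i)).ncard =
      n - 1 - 2 * m * (((δ - 1) * (q - 1) + q - 1) / q) :=
  reversible_BCH_dimension_projective_general q m n δ hq3 hm hn hδ'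
end

section
/- Let q be an even prime power (a power of 2), let m ≥ 4 be an even integer, and let n = (q^m − 1)/(q − 1). Let a be an integer with q^{(m−2)/2} ≤ a ≤ q^{m/2} and a ≢ 0 (mod q). If a is not of the form a = (i+1) + i(q^{m/2} − q)/(q − 1) for some integer i with q/2 ≤ i ≤ q − 2, then a is the coset leader of its q-cyclotomic coset C_a modulo n and |C_a| = m; if a is of this exceptional form, then a is not a coset leader. -/
set_option maxHeartbeats 1000000

def Nq (q : ℕ) : ℕ → ℕ
  | 0 => 0
  | j+1 => q * Nq q j + 1

lemma geo (q : ℕ) (hq : 1 ≤ q) (j : ℕ) : (q - 1) * Nq q j + 1 = q ^ j := by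
  induction j with
  | zero => simp [Nq]
  | succ j ih =>
    have h : q ^ (j+1) = q * q ^ j := by ring
    simp only [Nq]
    zify [hq] at *
    linear_combination q * ih + h

lemma Nq_succ' (q : ℕ) (hq : 1 ≤ q) (j : ℕ) : Nq q (j+1) = q ^ j + Nq q j := by
  have h1 := geo q hq j
  have h2 := Nat.sub_one_mul q (Nq q j)
  have h3 : Nq q j ≤ q * Nq q j := Nat.le_mul_of_pos_left _ (by omega)
  simp only [Nq]
  omega

lemma Nq_add (q : ℕ) (hq : 1 ≤ q) (i j : ℕ) :
    Nq q (i + j) = Nq q i * q ^ j + Nq q j := by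
  induction i with
  | zero => simp [Nq]
  | succ i ih =>
    have h1 : i + 1 + j = (i + j) + 1 := by omega
    have h2 := geo q hq j
    rw [h1]
    simp only [Nq]
    zify [hq] at h2 ih ⊢
    linear_combination (q:ℤ) * ih + h2

lemma Nq_pos (q : ℕ) (j : ℕ) (hj : 1 ≤ j) : 1 ≤ Nq q j := by
  obtain ⟨i, rfl⟩ : ∃ i, j = i + 1 := ⟨j - 1, by omega⟩
  simp [Nq]

lemma Nq_ge (q : ℕ) (hq : 1 ≤ q) (j : ℕ) (hj : 1 ≤ j) : q ^ (j-1) ≤ Nq q j := by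
  obtain ⟨i, rfl⟩ : ∃ i, j = i + 1 := ⟨j - 1, by omega⟩
  rw [Nq_succ' q hq]
  simp

lemma Nq_lt (q : ℕ) (hq : 2 ≤ q) (j : ℕ) : Nq q j < q ^ j := by
  have := geo q (by omega) j
  have h3 : Nq q j ≤ (q-1) * Nq q j := Nat.le_mul_of_pos_left _ (by omega)
  omega

lemma Nq_top (q : ℕ) (hq : 1 ≤ q) (j : ℕ) (hj : 1 ≤ j) :
    Nq q j = q ^ (j-1) + Nq q (j-1) := by
  have h := Nq_succ' q hq (j-1)
  rw [show j - 1 + 1 = j by omega] at h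
  exact h

lemma key (q t n a : ℕ) (hq2 : 2 ≤ q) (hqe : Even q) (ht : 2 ≤ t)
    (hn : n = Nq q (2*t)) (ha1 : q ^ (t-1) ≤ a) (ha2 : a < q ^ t) (ha3 : ¬ q ∣ a)
    (hne : ∀ i : ℕ, q / 2 ≤ i → i ≤ q - 2 → a ≠ i * Nq q t + 1) :
    ∀ d : ℕ, 1 ≤ d → d < 2*t → a < a * q ^ d % n := by
  have hq1 : 1 ≤ q := by omega
  have ha0 : 1 ≤ a := le_trans (Nat.one_le_pow _ _ (by omega)) ha1
  have hn_gt : q ^ (2*t - 1) < n := by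
    have h1 : Nq q (2*t) = q^(2*t-1) + Nq q (2*t-1) := Nq_top q hq1 (2*t) (by omega)
    have := Nq_pos q (2*t-1) (by omega)
    omega
  have hn0 : 0 < n := by
    have : 0 < q ^ (2*t-1) := by positivity
    omega
  intro d hd1 hd2
  by_cases hdt : d < t
  · -- small shifts: a*q^d < n
    have hlt : a * q ^ d < n := by
      have h1 : a * q ^ d ≤ a * q ^ (t-1) :=
        Nat.mul_le_mul_left a (Nat.pow_le_pow_right hq1 (by omega))
      have h2 : a * q ^ (t-1) < q ^ t * q ^ (t-1) :=
        (Nat.mul_lt_mul_right (by positivity)).mpr ha2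
      have h3 : q ^ t * q ^ (t-1) = q ^ (2*t-1) := by
        rw [← pow_add]; congr 1; omega
      omega
    rw [Nat.mod_eq_of_lt hlt]
    have h4 : 1 < q ^ d := by
      calc 1 < q := hq2
      _ ≤ q ^ d := Nat.le_self_pow (by omega) q
    calc a = a * 1 := by ring
    _ < a * q ^ d := (Nat.mul_lt_mul_left (by omega)).mpr h4
  · push_neg at hdt
    obtain ⟨s, rfl⟩ : ∃ s, d = t + s := ⟨d - t, by omega⟩
    have hs : s + 1 ≤ t := by omega
    have hpow_ts : 0 < q ^ (t-s) := by positivity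
    have hpow_ts1 : 0 < q ^ (t-s-1) := by positivity
    have hq_ts : q^(t-s) = q^(t-s-1) * q := by
      rw [← pow_succ]; congr 1; omega
    obtain ⟨B, A, haBA, hAlt, hBlt⟩ :
        ∃ B A : ℕ, q^(t-s) * B + A = a ∧ A < q^(t-s) ∧ B < q^s := by
      refine ⟨a / q^(t-s), a % q^(t-s), Nat.div_add_mod a _, Nat.mod_lt _ hpow_ts, ?_⟩
      apply Nat.div_lt_iff_lt_mul hpow_ts |>.mpr
      calc a < q^t := ha2
      _ = q^s * q^(t-s) := by rw [← pow_add]; congr 1; omega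
    obtain ⟨A1, A0, hAdecomp, hA0lt, hA1q⟩ :
        ∃ A1 A0 : ℕ, q^(t-s-1) * A1 + A0 = A ∧ A0 < q^(t-s-1) ∧ A1 < q := by
      refine ⟨A / q^(t-s-1), A % q^(t-s-1), Nat.div_add_mod A _, Nat.mod_lt _ hpow_ts1, ?_⟩
      apply Nat.div_lt_iff_lt_mul hpow_ts1 |>.mpr
      calc A < q^(t-s) := hAlt
      _ = q * q^(t-s-1) := by rw [hq_ts]; ring
    have hApos : 1 ≤ A := by
      rcases Nat.eq_zero_or_pos A with h | h
      · exfalso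
        apply ha3
        have hdvd : q^(t-s) ∣ a := ⟨B, by omega⟩
        exact dvd_trans (dvd_pow_self q (by omega : t - s ≠ 0)) hdvd
      · exact h
    have h2t : q^(t-s) * q^(t+s) = (q-1)*n + 1 := by
      rw [← pow_add]
      have he : t - s + (t + s) = 2*t := by omega
      rw [he, hn]
      exact (geo q hq1 (2*t)).symm
    obtain ⟨X, hXdef⟩ : ∃ X : ℕ, X = A * q^(t+s) + B := ⟨_, rfl⟩
    have hmod : a * q ^ (t+s) % n = X % n := by
      have hexp : a * q ^ (t+s) = X + (B*(q-1)) * n := by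
        calc a * q^(t+s) = (q^(t-s) * B + A) * q^(t+s) := by rw [haBA]
        _ = B * (q^(t-s) * q^(t+s)) + A * q^(t+s) := by ring
        _ = B * ((q-1)*n + 1) + A * q^(t+s) := by rw [h2t]
        _ = (A * q^(t+s) + B) + (B*(q-1)) * n := by ring
        _ = X + (B*(q-1)) * n := by rw [hXdef]
      rw [hexp, Nat.add_mul_mod_self_right]
    rw [hmod]
    obtain ⟨c, R, hXR, hRlt, hmodR⟩ :
        ∃ c R : ℕ, n * c + R = X ∧ R < n ∧ X % n = R :=
      ⟨X / n, X % n, Nat.div_add_mod X n, Nat.mod_lt _ hn0, rfl⟩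
    rw [hmodR]
    have hcle : c ≤ A1 := by
      have hX_lt : X < (A1 + 1) * n := by
        have h1 : A + 1 ≤ (A1 + 1) * q^(t-s-1) := by
          have he : (A1 + 1) * q^(t-s-1) = q^(t-s-1) * A1 + q^(t-s-1) := by ring
          omega
        have h2 : X < (A + 1) * q^(t+s) := by
          have hB2 : B < q^(t+s) := by
            calc B < q^s := hBlt
            _ ≤ q^(t+s) := Nat.pow_le_pow_right hq1 (by omega)
          have he : (A + 1) * q^(t+s) = A * q^(t+s) + q^(t+s) := by ring
          omega
        have h3 : (A + 1) * q^(t+s) ≤ (A1 + 1) * q^(2*t-1) := by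
          calc (A + 1) * q^(t+s) ≤ ((A1 + 1) * q^(t-s-1)) * q^(t+s) :=
                Nat.mul_le_mul_right _ h1
          _ = (A1 + 1) * (q^(t-s-1) * q^(t+s)) := by ring
          _ = (A1 + 1) * q^(2*t-1) := by rw [← pow_add]; congr 2; omega
        have h4 : (A1 + 1) * q^(2*t-1) < (A1 + 1) * n :=
          (Nat.mul_lt_mul_left (by omega)).mpr hn_gt
        omega
      have hh : X / n < A1 + 1 := (Nat.div_lt_iff_lt_mul hn0).mpr hX_lt
      have hcc : c = X / n := by
        have := Nat.div_add_mod X n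
        have h0 : X % n = X - n * (X / n) := by omega
        rcases Nat.lt_trichotomy c (X / n) with h | h | h
        · exfalso
          have : n * c + n ≤ n * (X / n) := by
            have : c + 1 ≤ X / n := h
            calc n * c + n = n * (c+1) := by ring
            _ ≤ n * (X / n) := Nat.mul_le_mul_left n this
          have := Nat.mod_lt X hn0
          omega
        · exact h
        · exfalso
          have : n * (X / n) + n ≤ n * c := by
            have : X / n + 1 ≤ c := h
            calc n * (X / n) + n = n * (X / n + 1) := by ring
            _ ≤ n * c := Nat.mul_le_mul_left n this
          have := Nat.mod_lt X hn0
          omega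
      omega
    have hpow2t1 : q^(t-s-1) * q^(t+s) = q^(2*t-1) := by
      rw [← pow_add]; congr 1; omega
    have hn_expand : n = Nq q (t-s-1) * q^(t+s) + Nq q (t+s) + q^(2*t-1) := by
      have h1 : n = q^(2*t-1) + Nq q (2*t-1) := by
        rw [hn]; exact Nq_top q hq1 (2*t) (by omega)
      have h2 : Nq q (2*t-1) = Nq q (t-s-1) * q^(t+s) + Nq q (t+s) := by
        have h : 2*t-1 = (t-s-1) + (t+s) := by omega
        rw [h, Nq_add q hq1]
      omega
    have hNts_geB : B < Nq q (t+s) := by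
      have h1 : q^s ≤ q^(t+s-1) := Nat.pow_le_pow_right hq1 (by omega)
      have h2 : q^(t+s-1) ≤ Nq q (t+s) := Nq_ge q hq1 (t+s) (by omega)
      omega
    -- common cast facts
    have hqZ : (2:ℤ) ≤ (q:ℤ) := by exact_mod_cast hq2
    have haZ : (a:ℤ) < (q:ℤ)^t := by exact_mod_cast ha2
    have hgeoTS : ((q:ℤ) - 1) * (Nq q (t+s)) + 1 = (q:ℤ)^(t+s) := by
      have h := geo q hq1 (t+s)
      zify [hq1] at h
      exact_mod_cast h
    have hNts0 : (0:ℤ) ≤ (Nq q (t+s) : ℤ) := by positivity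
    have hA1Z : (A1:ℤ) ≤ (q:ℤ) - 1 := by
      have : (A1:ℤ) < q := by exact_mod_cast hA1q
      linarith
    have hB0Z : (0:ℤ) ≤ (B:ℤ) := by positivity
    have hRZgen : (R:ℤ) = (X:ℤ) - n * c := by
      have h := hXR
      zify at h
      linarith
    have hXZ : (X:ℤ) = (A:ℤ) * (q:ℤ)^(t+s) + B := by exact_mod_cast hXdef
    have hqt_le : (q:ℤ)^t ≤ (q:ℤ)^(t+s) :=
      pow_le_pow_right₀ (by linarith) (by omega)
    rcases Nat.lt_or_ge c A1 with hc | hc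
    · -- c ≤ A1 - 1 : R is huge
      have hA1pos : 1 ≤ A1 := by omega
      have hXge : (A1:ℤ) * (q:ℤ)^(2*t-1) ≤ X := by
        have h1 : q^(t-s-1) * A1 ≤ A := by omega
        have h2 : (q^(t-s-1) * A1) * q^(t+s) ≤ A * q^(t+s) :=
          Nat.mul_le_mul_right _ h1
        have h3 : (q^(t-s-1) * A1) * q^(t+s) = A1 * q^(2*t-1) := by
          rw [mul_comm (q^(t-s-1)) A1, mul_assoc, hpow2t1]
        have h4 : A1 * q^(2*t-1) ≤ X := by omega
        exact_mod_cast h4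
      have hNpos : (0:ℤ) ≤ (Nq q (2*t-1) : ℤ) := by positivity
      have hgeoZ : ((q:ℤ) - 1) * (Nq q (2*t-1)) + 1 = (q:ℤ)^(2*t-1) := by
        have h := geo q hq1 (2*t-1)
        zify [hq1] at h
        exact_mod_cast h
      have hnZ : (n:ℤ) = (q:ℤ)^(2*t-1) + Nq q (2*t-1) := by
        have h : n = q^(2*t-1) + Nq q (2*t-1) := by
          rw [hn]; exact Nq_top q hq1 (2*t) (by omega)
        exact_mod_cast h
      have hcZ : (c:ℤ) ≤ (A1:ℤ) - 1 := by
        have h : (c:ℤ) + 1 ≤ A1 := by exact_mod_cast hc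
        linarith
      have hRge1 : (R:ℤ) ≥ (A1:ℤ) * (q:ℤ)^(2*t-1) - n * ((A1:ℤ) - 1) := by
        have h1 : (n:ℤ) * c ≤ n * ((A1:ℤ) - 1) :=
          mul_le_mul_of_nonneg_left hcZ (by positivity)
        linarith [hRZgen, hXge]
      have hstep1 : (R:ℤ) ≥ (q:ℤ)^(2*t-1) - ((A1:ℤ) - 1) * Nq q (2*t-1) := by
        have h : (A1:ℤ) * (q:ℤ)^(2*t-1) - ((q:ℤ)^(2*t-1) + Nq q (2*t-1)) * ((A1:ℤ) - 1)
            = (q:ℤ)^(2*t-1) - ((A1:ℤ) - 1) * Nq q (2*t-1) := by ring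
        rw [hnZ] at hRge1
        linarith
      have hstep2 : ((A1:ℤ) - 1) * Nq q (2*t-1) ≤ ((q:ℤ) - 2) * Nq q (2*t-1) :=
        mul_le_mul_of_nonneg_right (by linarith) hNpos
      have hstep3 : (R:ℤ) ≥ (q:ℤ)^(2*t-1) - ((q:ℤ) - 2) * Nq q (2*t-1) := by linarith
      have hstep4 : ((q:ℤ) - 1) * ((q:ℤ)^(2*t-1) - ((q:ℤ) - 2) * Nq q (2*t-1))
          = (q:ℤ)^(2*t-1) + (q:ℤ) - 2 := by
        linear_combination (2 - (q:ℤ)) * hgeoZ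
      have hstep5 : ((q:ℤ) - 1) * R ≥ (q:ℤ)^(2*t-1) + (q:ℤ) - 2 := by
        have := mul_le_mul_of_nonneg_left hstep3 (show (0:ℤ) ≤ (q:ℤ) - 1 by linarith)
        linarith
      have hpowle : (q:ℤ)^(t+1) ≤ (q:ℤ)^(2*t-1) :=
        pow_le_pow_right₀ (by linarith) (by omega)
      have hpowt1 : (q:ℤ)^(t+1) = (q:ℤ) * (q:ℤ)^t := by ring
      have hqt1 : (1:ℤ) ≤ (q:ℤ)^t := by exact_mod_cast Nat.one_le_pow t q (by omega)
      have hamul : ((q:ℤ) - 1) * a < (q:ℤ)^(2*t-1) + (q:ℤ) - 2 := by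
        have h1 : ((q:ℤ) - 1) * a ≤ ((q:ℤ) - 1) * ((q:ℤ)^t - 1) :=
          mul_le_mul_of_nonneg_left (by linarith) (by linarith)
        have h2 : (q:ℤ) * (q:ℤ)^t ≤ (q:ℤ)^(2*t-1) := by
          rw [← hpowt1]; exact hpowle
        linarith [h1, h2, hqt1, hqZ]
      have : ((q:ℤ) - 1) * a < ((q:ℤ) - 1) * R := by linarith
      have haR : (a:ℤ) < R := lt_of_mul_lt_mul_left this (by linarith)
      exact_mod_cast haR
    · have hcA1 : c = A1 := le_antisymm hcle hc
      rcases Nat.eq_zero_or_pos A1 with hA10 | hA1pos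
      · -- A1 = 0, c = 0 : R = X ≥ q^(t+s)
        have hc0 : c = 0 := by omega
        have hnc : n * c = 0 := by rw [hc0]; ring
        have hR_eq : R = X := by omega
        have h1 : q^(t+s) ≤ A * q^(t+s) := Nat.le_mul_of_pos_left _ hApos
        have h2 : q^t ≤ q^(t+s) := Nat.pow_le_pow_right hq1 (by omega)
        omega
      · -- c = A1 ≥ 1
        have hRZ : (R:ℤ) = ((A0:ℤ) - (A1:ℤ) * Nq q (t-s-1)) * (q:ℤ)^(t+s)
            + B - (A1:ℤ) * Nq q (t+s) := by
          have h1 : (n:ℤ) * A1 + R = X := by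
            rw [← hcA1]; exact_mod_cast hXR
          have h3 : ((q:ℤ)^(t-s-1)) * A1 + A0 = (A:ℤ) := by exact_mod_cast hAdecomp
          have h4 : (n:ℤ) = (Nq q (t-s-1):ℤ) * (q:ℤ)^(t+s) + Nq q (t+s) + (q:ℤ)^(2*t-1) := by
            exact_mod_cast hn_expand
          have h5 : ((q:ℤ)^(t-s-1)) * (q:ℤ)^(t+s) = (q:ℤ)^(2*t-1) := by
            exact_mod_cast hpow2t1
          linear_combination h1 + hXZ - (q:ℤ)^(t+s) * h3 - (A1:ℤ) * h4 + (A1:ℤ) * h5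
        have hRnonneg : (0:ℤ) ≤ (R:ℤ) := by positivity
        have hqts_pos : (0:ℤ) < (q:ℤ)^(t+s) := by positivity
        rcases lt_trichotomy A0 (A1 * Nq q (t-s-1) + 1) with h | h | h
        · -- A0 ≤ A1 * N' : contradiction
          exfalso
          have hD : (A0:ℤ) - A1 * Nq q (t-s-1) ≤ 0 := by
            have h' : A0 ≤ A1 * Nq q (t-s-1) := by omega
            have h'' : (A0:ℤ) ≤ (A1:ℤ) * Nq q (t-s-1) := by exact_mod_cast h'
            linarith
          have h1 : ((A0:ℤ) - A1 * Nq q (t-s-1)) * (q:ℤ)^(t+s) ≤ 0 :=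
            mul_nonpos_of_nonpos_of_nonneg hD (by positivity)
          have h2 : (B:ℤ) < Nq q (t+s) := by exact_mod_cast hNts_geB
          have h3 : (Nq q (t+s) : ℤ) ≤ (A1:ℤ) * Nq q (t+s) := by
            have h4 : (1:ℤ) ≤ (A1:ℤ) := by exact_mod_cast hA1pos
            have := mul_le_mul_of_nonneg_right h4 hNts0
            linarith
          linarith [hRZ, hRnonneg]
        · -- D = 1, the delicate case
          have heq : A0 = A1 * Nq q (t-s-1) + 1 := h
          have hN1pos : 1 ≤ Nq q (t-s-1) := by
            rcases Nat.eq_zero_or_pos (t-s-1) with h0 | h0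
            · exfalso
              rw [h0] at hA0lt
              simp [Nq] at hA0lt
              omega
            · exact Nq_pos q _ h0
          have hA1q2 : A1 ≤ q - 2 := by
            have hg : (q-1) * Nq q (t-s-1) + 1 = q^(t-s-1) := geo q hq1 _
            have h1 : A1 * Nq q (t-s-1) < (q-1) * Nq q (t-s-1) := by omega
            have h2 := Nat.lt_of_mul_lt_mul_right h1
            omega
          have hNts : Nq q (t-s) = q^(t-s-1) + Nq q (t-s-1) := by
            have h' := Nq_top q hq1 (t-s) (by omega)
            rw [show t - s - 1 = t - s - 1 from rfl] at h'
            exact h'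
          have ha_eq : a = B * q^(t-s) + A1 * Nq q (t-s) + 1 := by
            have h1 : A1 * Nq q (t-s) = A1 * q^(t-s-1) + A1 * Nq q (t-s-1) := by
              rw [hNts, Nat.mul_add]
            have h2 : q^(t-s-1) * A1 = A1 * q^(t-s-1) := by ring
            have h3 : q^(t-s) * B = B * q^(t-s) := by ring
            omega
          have hR_eq : (R:ℤ) = ((q:ℤ) - 1 - A1) * Nq q (t+s) + B + 1 := by
            have hh : (A0:ℤ) = (A1:ℤ) * Nq q (t-s-1) + 1 := by exact_mod_cast heq
            rw [hRZ, hh]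
            linear_combination -hgeoTS
          rcases Nat.eq_zero_or_pos s with hs0 | hs1
          · -- s = 0
            subst hs0
            have hB0 : B = 0 := by
              have := hBlt
              rw [pow_zero] at this
              omega
            have haeq' : a = A1 * Nq q t + 1 := by
              have h' := ha_eq
              rw [hB0] at h'
              simpa using h'
            have hA1small : ¬ (q / 2 ≤ A1) := fun hcon => hne A1 hcon hA1q2 haeq'
            have h2A1 : 2 * A1 + 2 ≤ q := by
              obtain ⟨u, hu⟩ := hqe
              omega
            have hNt1 : (1:ℤ) ≤ (Nq q t : ℤ) := by
              exact_mod_cast Nq_pos q t (by omega)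
            have haZ' : (a:ℤ) = (A1:ℤ) * Nq q t + 1 := by exact_mod_cast haeq'
            have hB0Z : (B:ℤ) = 0 := by exact_mod_cast hB0
            have hA1Z2 : 2 * (A1:ℤ) + 2 ≤ q := by exact_mod_cast h2A1
            have hfin : (a:ℤ) < R := by
              rw [hR_eq, hB0Z, haZ']
              rw [show t + 0 = t by omega]
              have hx : (A1:ℤ) + 1 ≤ (q:ℤ) - 1 - A1 := by linarith
              have hy := mul_le_mul_of_nonneg_right hx (show (0:ℤ) ≤ (Nq q t : ℤ) by positivity)
              linarith
            exact_mod_cast hfin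
          · -- s ≥ 1
            have hsplit : Nq q (t+s) = Nq q (t-s) * q^(2*s) + Nq q (2*s) := by
              have h' : t + s = (t-s) + 2*s := by omega
              rw [h', Nq_add q hq1]
            have hgeo_ts : ((q:ℤ)-1) * Nq q (t-s) + 1 = (q:ℤ)^(t-s) := by
              have h' := geo q hq1 (t-s)
              zify [hq1] at h'
              exact_mod_cast h'
            have hu1 : (1:ℤ) ≤ (Nq q (t-s) : ℤ) := by
              exact_mod_cast Nq_pos q (t-s) (by omega)
            have hv0 : (0:ℤ) ≤ (Nq q (2*s) : ℤ) := by positivity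
            have hE1 : (1:ℤ) ≤ (q:ℤ) - 1 - A1 := by
              have h' : (A1:ℤ) + 2 ≤ q := by exact_mod_cast (by omega : A1 + 2 ≤ q)
              linarith
            have hBZ : (B:ℤ) ≤ (q:ℤ)^s - 1 := by
              have h' : (B:ℤ) < (q:ℤ)^s := by exact_mod_cast hBlt
              linarith
            have hq2s : (q:ℤ) * (q:ℤ)^s ≤ (q:ℤ)^(2*s) := by
              have h' : (q:ℤ)^(s+1) ≤ (q:ℤ)^(2*s) :=
                pow_le_pow_right₀ (by linarith) (by omega)
              calc (q:ℤ) * (q:ℤ)^s = (q:ℤ)^(s+1) := by ring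
              _ ≤ (q:ℤ)^(2*s) := h'
            have hqs_pos : (1:ℤ) ≤ (q:ℤ)^s := by exact_mod_cast Nat.one_le_pow s q (by omega)
            have hco : (B:ℤ)*((q:ℤ)-1) + A1 + 1 ≤ (q:ℤ)^(2*s) := by
              have h1 : (B:ℤ)*((q:ℤ)-1) ≤ ((q:ℤ)^s - 1)*((q:ℤ)-1) :=
                mul_le_mul_of_nonneg_right hBZ (by linarith)
              have hA1Z2 : (A1:ℤ) ≤ (q:ℤ) - 2 := by linarith [hE1]
              linarith [h1, hqs_pos, hq2s]
            have hdiff : (R:ℤ) - a =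
                (((q:ℤ)-1-A1) * (q:ℤ)^(2*s) - B*((q:ℤ)-1) - A1) * Nq q (t-s)
                  + ((q:ℤ)-1-A1) * Nq q (2*s) := by
              have haZ2 : (a:ℤ) = (B:ℤ) * (q:ℤ)^(t-s) + A1 * Nq q (t-s) + 1 := by
                exact_mod_cast ha_eq
              have hsplitZ : (Nq q (t+s) : ℤ) = (Nq q (t-s):ℤ) * (q:ℤ)^(2*s) + Nq q (2*s) := by
                exact_mod_cast hsplit
              rw [hR_eq, haZ2, hsplitZ]
              linear_combination (B:ℤ) * hgeo_ts
            have hcoef_pos : (1:ℤ) ≤ ((q:ℤ)-1-A1) * (q:ℤ)^(2*s) - B*((q:ℤ)-1) - A1 := by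
              have h1 := mul_le_mul_of_nonneg_right hE1 (show (0:ℤ) ≤ (q:ℤ)^(2*s) by positivity)
              linarith [hco]
            have hfin : (a:ℤ) < R := by
              have h1 : (1:ℤ)*1 ≤ (((q:ℤ)-1-A1) * (q:ℤ)^(2*s) - B*((q:ℤ)-1) - A1) * Nq q (t-s) :=
                mul_le_mul hcoef_pos hu1 (by norm_num) (by linarith)
              have h2 : (0:ℤ) ≤ ((q:ℤ)-1-A1) * Nq q (2*s) :=
                mul_nonneg (by linarith) hv0
              linarith [hdiff]
            exact_mod_cast hfin
        · -- D ≥ 2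
          have hD2 : (2:ℤ) ≤ (A0:ℤ) - A1 * Nq q (t-s-1) := by
            have h' : A1 * Nq q (t-s-1) + 2 ≤ A0 := by omega
            have h'' : (A1:ℤ) * Nq q (t-s-1) + 2 ≤ A0 := by exact_mod_cast h'
            linarith
          have hRge : ((q:ℤ)^(t+s)) + 1 ≤ R := by
            rw [hRZ]
            have h1 : 2 * (q:ℤ)^(t+s) ≤ ((A0:ℤ) - A1 * Nq q (t-s-1)) * (q:ℤ)^(t+s) := by
              have := mul_le_mul_of_nonneg_right hD2 (le_of_lt hqts_pos)
              linarith
            have h2 : (A1:ℤ) * Nq q (t+s) ≤ ((q:ℤ)-1) * Nq q (t+s) :=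
              mul_le_mul_of_nonneg_right hA1Z hNts0
            linarith [hgeoTS]
          have hfin : (a:ℤ) < R := by linarith
          exact_mod_cast hfin

lemma mulsub (i N : ℕ) (h : 1 ≤ N) : i * (N - 1) + i = i * N := by
  obtain ⟨v, rfl⟩ : ∃ v, N = v + 1 := ⟨N - 1, by omega⟩
  simp [Nat.mul_add]

/-- Lemma 22(1): for `q` a power of `2`, `m ≥ 4` even and `n = (q^m − 1)/(q − 1)`,
an integer `a` with `q^{(m−2)/2} ≤ a ≤ q^{m/2}` and `q ∤ a` is a coset leader with
`|C_a| = m` unless `a = (i+1) + i(q^{m/2} − q)/(q − 1)` for some `q/2 ≤ i ≤ q − 2`,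
in which case `a` is not a coset leader. -/
theorem coset_leaders_projective_even (q m n : ℕ)
    (hq : ∃ k : ℕ, 0 < k ∧ q = 2 ^ k) (hm : 4 ≤ m) (hmeven : Even m)
    (hn : n = (q ^ m - 1) / (q - 1))
    (a : ℕ) (ha1 : q ^ ((m - 2) / 2) ≤ a) (ha2 : a ≤ q ^ (m / 2)) (ha3 : ¬ q ∣ a) :
    ((¬ ∃ i : ℕ, q / 2 ≤ i ∧ i ≤ q - 2 ∧
        a = (i + 1) + i * ((q ^ (m / 2) - q) / (q - 1))) →
      (a ∈ cosetC q n a ∧ ∀ b ∈ cosetC q n a, a ≤ b) ∧ (cosetC q n a).ncard = m) ∧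
    ((∃ i : ℕ, q / 2 ≤ i ∧ i ≤ q - 2 ∧
        a = (i + 1) + i * ((q ^ (m / 2) - q) / (q - 1))) →
      ∃ b ∈ cosetC q n a, b < a) := by
  have hq2 : 2 ≤ q := by
    obtain ⟨k, hk, rfl⟩ := hq
    calc 2 = 2^1 := by norm_num
    _ ≤ 2^k := Nat.pow_le_pow_right (by norm_num) hk
  have hqe : Even q := by
    obtain ⟨k, hk, rfl⟩ := hq
    exact (Nat.even_pow).mpr ⟨even_two, by omega⟩
  have hq1 : 1 ≤ q := by omega
  obtain ⟨t, rfl⟩ := hmeven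
  have ht : 2 ≤ t := by omega
  have h2t : t + t = 2 * t := by omega
  rw [show (t + t - 2) / 2 = t - 1 by omega] at ha1
  rw [show (t + t) / 2 = t by omega] at ha2 ⊢
  have hgeo2t : (q - 1) * Nq q (2*t) + 1 = q ^ (2*t) := geo q hq1 (2*t)
  have hn' : n = Nq q (2*t) := by
    rw [hn, h2t]
    have h1 : q ^ (2*t) - 1 = (q-1) * Nq q (2*t) := by omega
    rw [h1, Nat.mul_div_cancel_left _ (by omega : 0 < q - 1)]
  have hgeot : (q - 1) * Nq q t + 1 = q ^ t := geo q hq1 t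
  have hNt_pos : 1 ≤ Nq q t := Nq_pos q t (by omega)
  have ha2' : a < q ^ t := by
    rcases Nat.lt_or_ge a (q ^ t) with h | h
    · exact h
    · exfalso
      have : a = q ^ t := by omega
      apply ha3
      rw [this]
      exact dvd_pow_self q (by omega)
  have hform : (q ^ t - q) / (q - 1) = Nq q t - 1 := by
    have h1 : (q - 1) * (Nq q t - 1) = q ^ t - q := by
      zify [hq1, hNt_pos, show q ≤ q ^ t from Nat.le_self_pow (by omega) q]
      push_cast [hgeot]
      zify [hq1, hNt_pos] at hgeot
      linarith
    rw [← h1, Nat.mul_div_cancel_left _ (by omega : 0 < q - 1)]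
  have hn_gt : q ^ (2*t - 1) < n := by
    have h1 : Nq q (2*t) = q^(2*t-1) + Nq q (2*t-1) := Nq_top q hq1 (2*t) (by omega)
    have := Nq_pos q (2*t-1) (by omega)
    omega
  have hn0 : 0 < n := by
    have : 0 < q ^ (2*t-1) := by positivity
    omega
  have han : a < n := by
    have h1 : q ^ t ≤ q ^ (2*t-1) := Nat.pow_le_pow_right hq1 (by omega)
    omega
  have hmodq : q ^ (2*t) ≡ 1 [MOD n] := by
    have h1 : q ^ (2*t) = 1 + (q-1) * n := by rw [hn']; omega
    show q ^ (2*t) % n = 1 % n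
    rw [h1, Nat.add_mul_mod_self_right]
  have hreduce : ∀ j : ℕ, a * q ^ j % n = a * q ^ (j % (2*t)) % n := by
    intro j
    have h1 : a * q ^ j = (a * q ^ (j % (2*t))) * (q ^ (2*t)) ^ (j / (2*t)) := by
      rw [mul_assoc, ← pow_mul, ← pow_add]
      congr 2
      exact (Nat.mod_add_div j (2*t)).symm
    have h2 : (a * q ^ (j % (2*t))) * (q ^ (2*t)) ^ (j / (2*t))
        ≡ (a * q ^ (j % (2*t))) * 1 ^ (j / (2*t)) [MOD n] :=
      Nat.ModEq.mul_left _ (hmodq.pow _)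
    calc a * q ^ j % n = (a * q ^ (j % (2*t))) * (q ^ (2*t)) ^ (j / (2*t)) % n := by rw [h1]
    _ = (a * q ^ (j % (2*t))) * 1 ^ (j / (2*t)) % n := h2
    _ = a * q ^ (j % (2*t)) % n := by rw [one_pow, mul_one]
  constructor
  · intro hnex
    have hne : ∀ i : ℕ, q / 2 ≤ i → i ≤ q - 2 → a ≠ i * Nq q t + 1 := by
      intro i hi1 hi2 heq
      apply hnex
      refine ⟨i, hi1, hi2, ?_⟩
      rw [hform]
      have := mulsub i (Nq q t) hNt_pos
      omega
    have hkey := key q t n a hq2 hqe ht hn' ha1 ha2' ha3 hne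
    have hmin : ∀ b ∈ cosetC q n a, a ≤ b := by
      rintro b ⟨j, rfl⟩
      rw [hreduce j]
      rcases Nat.eq_zero_or_pos (j % (2*t)) with h0 | h0
      · rw [h0, pow_zero, mul_one, Nat.mod_eq_of_lt han]
      · exact le_of_lt (hkey _ h0 (Nat.mod_lt _ (by omega)))
    refine ⟨⟨⟨0, by rw [pow_zero, mul_one, Nat.mod_eq_of_lt han]⟩, hmin⟩, ?_⟩
    have hinj : ∀ i j : ℕ, i < j → j < 2*t → a * q ^ i % n = a * q ^ j % n → False := by
      intro i j hij hj heq
      have h1 : a * q ^ i * q ^ (2*t - i) = a * q ^ (2*t) := by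
        rw [mul_assoc, ← pow_add]
        congr 2
        omega
      have h2 : a * q ^ j * q ^ (2*t - i) = (a * q ^ (j - i)) * q ^ (2*t) := by
        rw [mul_assoc, mul_assoc, ← pow_add, ← pow_add]
        congr 2
        omega
      have h3 : a * q ^ i ≡ a * q ^ j [MOD n] := heq
      have h4 : a * q ^ (2*t) ≡ (a * q ^ (j - i)) * q ^ (2*t) [MOD n] := by
        rw [← h1, ← h2]
        exact h3.mul_right _
      have h5 : a ≡ a * q ^ (j - i) [MOD n] := by
        calc a ≡ a * 1 [MOD n] := by rw [mul_one]
        _ ≡ a * q ^ (2*t) [MOD n] := (hmodq.symm.mul_left a)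
        _ ≡ (a * q ^ (j - i)) * q ^ (2*t) [MOD n] := h4
        _ ≡ (a * q ^ (j - i)) * 1 [MOD n] := (hmodq.mul_left _)
        _ = a * q ^ (j - i) := by rw [mul_one]
      have h6 : a * q ^ (j - i) % n = a := by
        have := h5.symm
        unfold Nat.ModEq at this
        rw [Nat.mod_eq_of_lt han] at this
        exact this
      have h7 := hkey (j - i) (by omega) (by omega)
      omega
    have hset : cosetC q n a = ↑((Finset.range (2*t)).image (fun j => a * q ^ j % n)) := by
      ext b
      constructor
      · rintro ⟨j, rfl⟩
        simp only [Finset.coe_image, Set.mem_image, Finset.mem_coe, Finset.mem_range]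
        exact ⟨j % (2*t), Nat.mod_lt _ (by omega), (hreduce j).symm⟩
      · intro hb
        simp only [Finset.coe_image, Set.mem_image, Finset.mem_coe, Finset.mem_range] at hb
        obtain ⟨j, _, rfl⟩ := hb
        exact ⟨j, rfl⟩
    rw [hset, Set.ncard_coe_finset]
    rw [Finset.card_image_of_injOn, Finset.card_range]
    · omega
    · intro i hi j hj hij
      simp only [Finset.mem_coe, Finset.mem_range] at hi hj
      rcases lt_trichotomy i j with h | h | h
      · exact absurd (hinj i j h hj hij) (by simp)
      · exact h
      · exact absurd (hinj j i h hi hij.symm) (by simp)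
  · rintro ⟨i, hi1, hi2, haeq⟩
    rw [hform] at haeq
    have haNt : a = i * Nq q t + 1 := by
      have := mulsub i (Nq q t) hNt_pos
      omega
    obtain ⟨e, he⟩ : ∃ e, e + i = q - 1 := ⟨q - 1 - i, by omega⟩
    have hei : e < i := by
      obtain ⟨u, hu⟩ := hqe
      have : q / 2 = u := by omega
      omega
    have hnn : n = Nq q t * q ^ t + Nq q t := by
      rw [hn', show 2*t = t + t by omega, Nq_add q hq1]
    obtain ⟨b, hbdef⟩ : ∃ b, b = e * Nq q t + 1 := ⟨_, rfl⟩
    have hblt : b < n := by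
      have h1 : e * Nq q t ≤ (q-1) * Nq q t := Nat.mul_le_mul_right _ (by omega)
      have h2 : q ^ t ≤ Nq q t * q ^ t := Nat.le_mul_of_pos_left _ hNt_pos
      omega
    have hab : a * q ^ t = n * i + b := by
      rw [hbdef]
      zify
      have hgeotZ : ((q:ℤ) - 1) * Nq q t + 1 = (q:ℤ)^t := by
        zify [hq1] at hgeot
        exact_mod_cast hgeot
      have heZ : (e:ℤ) + i = (q:ℤ) - 1 := by
        zify [hq1] at he
        exact_mod_cast he
      have haZ : (a:ℤ) = i * Nq q t + 1 := by exact_mod_cast haNt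
      have hnZ : (n:ℤ) = Nq q t * (q:ℤ)^t + Nq q t := by exact_mod_cast hnn
      rw [haZ, hnZ]
      push_cast
      linear_combination -hgeotZ - (Nq q t : ℤ) * heZ
    have hmem : b = a * q ^ t % n := by
      rw [hab, Nat.mul_add_mod, Nat.mod_eq_of_lt hblt]
    refine ⟨b, ⟨t, hmem⟩, ?_⟩
    rw [haNt, hbdef]
    have := (Nat.mul_lt_mul_right (show 0 < Nq q t by omega)).mpr hei
    omega
end

section
/- Let q be an odd prime power, let m ≥ 4 be an even integer, and let n = (q^m − 1)/(q − 1). Let a be an integer with q^{(m−2)/2} ≤ a ≤ q^{m/2} and a ≢ 0 (mod q). Then a is the coset leader of its q-cyclotomic coset C_a modulo n if and only if a is not of the form a = (i+1) + i(q^{m/2} − q)/(q − 1) for some integer i with (q+1)/2 ≤ i ≤ q − 2 (so for q = 3 every such a is a coset leader). Moreover, if a is a coset leader, then |C_a| = m, except when a = (q^{m/2} + 1)/2, in which case |C_a| = m/2. -/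
/-!
Write `m = 2 s` and `Q = q ^ s`, so that `(q - 1) n = Q ^ 2 - 1`. After scaling by `q - 1`,
multiplication by `q` modulo `n` becomes rotation of the `2 s` base-`q` digits of
`x = (q - 1) a < (q - 1) Q`. A rotation by `0 < j < 2 s`, `j ≠ s`, makes `x` strictly larger: for
`j < s` nothing wraps around, and for `j > s` the lowest digit of `x`, nonzero as `q ∤ a`, moves
above position `s`. Rotation by `s` swaps the base-`Q` digits `k = x / Q ≤ q - 2` and `r = x % Q`.
As `Q ≡ 1 [MOD q - 1]`, `q - 1 ∣ k + r`, so `r ≤ k` forces `k + r = q - 1`: then `r < k` is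
exactly the exceptional form with `i = k`, and `r = k` is exactly `a = (Q + 1) / 2`, the one case
where the coset has `s` elements rather than `2 s`.
-/

theorem Nat.mul_pow_mod_pow_sub_one {b L t x : ℕ} (htL : t ≤ L)
    (hx : x / b ^ (L - t) + 1 < b ^ t) :
    x * b ^ t % (b ^ L - 1) = x % b ^ (L - t) * b ^ t + x / b ^ (L - t) := by
  set h := x / b ^ (L - t)
  set l := x % b ^ (L - t)
  have hb : 0 < b := Nat.pos_of_ne_zero (by rintro rfl; cases t <;> simp at hx)
  have hl : l < b ^ (L - t) := Nat.mod_lt _ (by positivity)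
  have hL : b ^ L = b ^ (L - t) * b ^ t := by rw [← pow_add, Nat.sub_add_cancel htL]
  have hlt : l * b ^ t + h < b ^ L - 1 := by
    have : (l + 1) * b ^ t ≤ b ^ L := hL ▸ Nat.mul_le_mul_right _ hl
    rw [add_mul] at this
    omega
  have hsplit : x * b ^ t = (b ^ L - 1) * h + (l * b ^ t + h) := by
    have hxhl : x = b ^ (L - t) * h + l := (Nat.div_add_mod x _).symm
    have : 1 ≤ b ^ L := Nat.one_le_pow _ _ hb
    zify [this] at hL ⊢
    rw [hxhl]; push_cast; rw [hL]; ring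
  rw [hsplit, Nat.mul_add_mod, Nat.mod_eq_of_lt hlt]

namespace Function

theorem ncard_range_iterate {α : Type*} {f : α → α} {x : α} (hx : x ∈ periodicPts f) :
    (Set.range fun j => f^[j] x).ncard = minimalPeriod f x := by
  have : (Set.range fun j => f^[j] x) = (fun j => f^[j] x) '' Set.Iio (minimalPeriod f x) := by
    refine (Set.image_subset_range _ _).antisymm' ?_
    rintro _ ⟨j, rfl⟩
    exact ⟨j % minimalPeriod f x, Nat.mod_lt _ (minimalPeriod_pos_of_mem_periodicPts hx),
      iterate_mod_minimalPeriod_eq⟩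
  rw [this, iterate_injOn_Iio_minimalPeriod.ncard_image, Set.ncard_Iio_nat]

theorem minimalPeriod_eq_of_forall_not_isPeriodicPt {α : Type*} {f : α → α} {x : α} {d : ℕ}
    (hd : 0 < d) (hx : IsPeriodicPt f d x)
    (hmin : ∀ e, 0 < e → e < d → ¬ IsPeriodicPt f e x) : minimalPeriod f x = d := by
  refine (hx.minimalPeriod_le hd).antisymm (not_lt.mp fun hlt => ?_)
  exact hmin _ (hx.minimalPeriod_pos hd) hlt (isPeriodicPt_minimalPeriod f x)

end Function

section CyclotomicCoset

open Function

variable {q n a : ℕ}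

theorem iterate_mul_mod (ha : a < n) (j : ℕ) : (· * q % n)^[j] a = a * q ^ j % n := by
  induction j with
  | zero => simp [Nat.mod_eq_of_lt ha]
  | succ j ih => rw [iterate_succ_apply', ih, Nat.mod_mul_mod, pow_succ, mul_assoc]

theorem cosetC_eq_range_iterate (ha : a < n) :
    cosetC q n a = Set.range fun j => (· * q % n)^[j] a := by
  ext b
  simp [cosetC, iterate_mul_mod ha, eq_comm]

theorem mul_pow_mod_mod_eq {d : ℕ} (ha : a < n) (hd : a * q ^ d % n = a) (j : ℕ) :
    a * q ^ (j % d) % n = a * q ^ j % n := by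
  have hper : IsPeriodicPt (· * q % n) d a := by
    rw [IsPeriodicPt, IsFixedPt, iterate_mul_mod ha, hd]
  rw [← iterate_mul_mod ha, ← iterate_mul_mod ha, hper.iterate_mod_apply]

theorem ncard_cosetC {d : ℕ} (ha : a < n) (hd : 0 < d) (hper : a * q ^ d % n = a)
    (hmin : ∀ e, 0 < e → e < d → a * q ^ e % n ≠ a) : (cosetC q n a).ncard = d := by
  have hpt : ∀ e, IsPeriodicPt (· * q % n) e a ↔ a * q ^ e % n = a := fun e => by
    rw [IsPeriodicPt, IsFixedPt, iterate_mul_mod ha]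
  have hd' : minimalPeriod (· * q % n) a = d :=
    minimalPeriod_eq_of_forall_not_isPeriodicPt hd ((hpt d).2 hper)
      fun e he hed => (hpt e).not.2 (hmin e he hed)
  rw [cosetC_eq_range_iterate ha, ncard_range_iterate (mk_mem_periodicPts hd ((hpt d).2 hper)), hd']

end CyclotomicCoset

theorem mul_add_lt_mul_add_swap_iff {Q r k : ℕ} (hQ : 1 < Q) :
    r * Q + k < k * Q + r ↔ r < k := by
  constructor
  · intro h; by_contra! h'; nlinarith
  · intro h; nlinarith

theorem mul_add_eq_mul_add_swap_iff {Q r k : ℕ} (hQ : 1 < Q) :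
    r * Q + k = k * Q + r ↔ r = k := by
  constructor
  · intro h
    rcases lt_trichotomy r k with hrk | hrk | hrk
    · exact absurd h ((mul_add_lt_mul_add_swap_iff hQ).2 hrk).ne
    · exact hrk
    · exact absurd h ((mul_add_lt_mul_add_swap_iff hQ).2 hrk).ne'
  · rintro rfl; rfl

section DigitRotation

variable {q s x j : ℕ}

theorem lt_mul_pow_mod_of_lt (hq : 2 ≤ q) (hx0 : 0 < x) (hx : x < q ^ (s + 1))
    (hj0 : 0 < j) (hjs : j < s) : x < x * q ^ j % (q ^ (2 * s) - 1) := by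
  have hxlt : x < q ^ (2 * s - j) := hx.trans_le (Nat.pow_le_pow_right (by omega) (by omega))
  have hrot := Nat.mul_pow_mod_pow_sub_one (b := q) (x := x) (by omega : j ≤ 2 * s)
    (by rw [Nat.div_eq_of_lt hxlt]; exact Nat.one_lt_pow hj0.ne' (by omega))
  rw [hrot, Nat.mod_eq_of_lt hxlt, Nat.div_eq_of_lt hxlt, add_zero]
  exact lt_mul_of_one_lt_right hx0 (Nat.one_lt_pow hj0.ne' (by omega))

theorem lt_mul_pow_mod_of_gt (hq : 2 ≤ q) (hqx : ¬ q ∣ x) (hx : x < q ^ (s + 1))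
    (hsj : s < j) (hj : j < 2 * s) : x < x * q ^ j % (q ^ (2 * s) - 1) := by
  have hsj' : q ^ (s + 1) ≤ q ^ j := Nat.pow_le_pow_right (by omega) hsj
  have hhigh : x / q ^ (2 * s - j) < q ^ s := by
    rw [Nat.div_lt_iff_lt_mul (by positivity), ← pow_add]
    exact hx.trans_le (Nat.pow_le_pow_right (by omega) (by omega))
  have hlow : x % q ^ (2 * s - j) ≠ 0 := fun h =>
    hqx ((dvd_pow_self q (by omega)).trans (Nat.dvd_of_mod_eq_zero h))
  have hqsj : q ^ s < q ^ j := Nat.pow_lt_pow_right (by omega) hsj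
  have hrot := Nat.mul_pow_mod_pow_sub_one (b := q) (x := x) (by omega : j ≤ 2 * s) (by omega)
  rw [hrot]
  calc x < q ^ j := hx.trans_le hsj'
    _ ≤ x % q ^ (2 * s - j) * q ^ j := Nat.le_mul_of_pos_left _ (Nat.pos_of_ne_zero hlow)
    _ ≤ _ := Nat.le_add_right _ _

end DigitRotation

section Digits

variable {q s a : ℕ}

theorem sub_one_mul_special_form (hq : 2 ≤ q) (hs : 1 ≤ s) {i : ℕ} (hi : i ≤ q - 1) :
    (q - 1) * ((i + 1) + i * ((q ^ s - q) / (q - 1))) = q ^ s * i + (q - 1 - i) := by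
  have hdvd : q - 1 ∣ q ^ s - q := by
    have h := Nat.sub_dvd_pow_sub_pow q 1 (s - 1)
    rw [one_pow] at h
    have : q ^ s - q = q * (q ^ (s - 1) - 1) := by
      rw [Nat.mul_sub_one, ← pow_succ', Nat.sub_add_cancel hs]
    exact this ▸ h.mul_left q
  have hqs : q ≤ q ^ s := Nat.le_self_pow (by omega) q
  rw [mul_add, mul_left_comm, Nat.mul_div_cancel' hdvd]
  zify [hqs, hi, (by omega : 1 ≤ q)]
  ring

theorem not_dvd_sub_one_mul (hq : 1 ≤ q) (hqa : ¬ q ∣ a) : ¬ q ∣ (q - 1) * a := fun h =>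
  hqa (((Nat.coprime_self_sub_right hq).2 (Nat.coprime_one_right q)).dvd_of_dvd_mul_left h)

theorem sub_one_mul_div_pow_lt (hq : 2 ≤ q) (ha : a < q ^ s) : (q - 1) * a / q ^ s < q - 1 := by
  rw [Nat.div_lt_iff_lt_mul (by positivity)]
  exact Nat.mul_lt_mul_of_pos_left ha (by omega)

/-- Casting out `q - 1`s: `q ^ s ≡ 1 [MOD q - 1]`. -/
theorem div_add_mod_eq_sub_one {x : ℕ} (hdvd : q - 1 ∣ x) (hk : x / q ^ s < q - 1)
    (hr : 0 < x % q ^ s) (hrk : x % q ^ s ≤ x / q ^ s) : x / q ^ s + x % q ^ s = q - 1 := by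
  have hsplit : x = (q ^ s - 1) * (x / q ^ s) + (x / q ^ s + x % q ^ s) := by
    have := Nat.div_add_mod x (q ^ s)
    have : 1 ≤ q ^ s := Nat.one_le_pow _ _ (by omega)
    zify [this] at *
    linarith
  have hQ : q - 1 ∣ q ^ s - 1 := by simpa using Nat.sub_dvd_pow_sub_pow q 1 s
  have hsum : q - 1 ∣ x / q ^ s + x % q ^ s :=
    (Nat.dvd_add_right (hQ.mul_right _)).1 (hsplit ▸ hdvd)
  exact Nat.eq_of_dvd_of_lt_two_mul (by omega) hsum (by omega)

theorem div_add_mod_sub_one_mul_eq (hq : 2 ≤ q) (hs : 1 ≤ s) (ha : a < q ^ s) (hqa : ¬ q ∣ a)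
    (hrk : (q - 1) * a % q ^ s ≤ (q - 1) * a / q ^ s) :
    (q - 1) * a / q ^ s + (q - 1) * a % q ^ s = q - 1 := by
  refine div_add_mod_eq_sub_one (dvd_mul_right _ _) (sub_one_mul_div_pow_lt hq ha)
    (Nat.pos_of_ne_zero fun h => ?_) hrk
  exact not_dvd_sub_one_mul (by omega) hqa
    ((dvd_pow_self q (by omega)).trans (Nat.dvd_of_mod_eq_zero h))

theorem sub_one_mul_mod_lt_div_iff (hq : 2 ≤ q) (hs : 1 ≤ s) (ha : a < q ^ s)
    (hqa : ¬ q ∣ a) :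
    (q - 1) * a % q ^ s < (q - 1) * a / q ^ s ↔
      ∃ i : ℕ, (q + 1) / 2 ≤ i ∧ i ≤ q - 2 ∧
        a = (i + 1) + i * ((q ^ s - q) / (q - 1)) := by
  have hk := sub_one_mul_div_pow_lt hq ha
  constructor
  · intro hrk
    have hsum := div_add_mod_sub_one_mul_eq hq hs ha hqa hrk.le
    have hr : (q - 1) * a % q ^ s = q - 1 - (q - 1) * a / q ^ s := by omega
    refine ⟨(q - 1) * a / q ^ s, by omega, by omega,
      Nat.eq_of_mul_eq_mul_left (by omega : 0 < q - 1) ?_⟩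
    rw [sub_one_mul_special_form hq hs (by omega), ← hr]
    exact (Nat.div_add_mod _ _).symm
  · rintro ⟨i, hi1, hi2, rfl⟩
    have hqs : q ≤ q ^ s := Nat.le_self_pow (by omega) q
    rw [sub_one_mul_special_form hq hs (by omega), Nat.mul_add_mod_self_left,
      Nat.mul_add_div (by positivity), Nat.mod_eq_of_lt (by omega), Nat.div_eq_of_lt (by omega)]
    omega

theorem sub_one_mul_mod_eq_div_iff (hq : 2 ≤ q) (hqodd : Odd q) (hs : 1 ≤ s) (ha : a < q ^ s)
    (hqa : ¬ q ∣ a) :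
    (q - 1) * a % q ^ s = (q - 1) * a / q ^ s ↔ 2 * a = q ^ s + 1 := by
  have hqs : q ≤ q ^ s := Nat.le_self_pow (by omega) q
  constructor
  · intro hrk
    have hsum := div_add_mod_sub_one_mul_eq hq hs ha hqa hrk.le
    have hx := Nat.div_add_mod ((q - 1) * a) (q ^ s)
    rw [hrk] at hx hsum
    apply Nat.eq_of_mul_eq_mul_left (by omega : 0 < q - 1)
    calc (q - 1) * (2 * a) = 2 * ((q - 1) * a) := by ring
      _ = 2 * (q ^ s * ((q - 1) * a / q ^ s) + (q - 1) * a / q ^ s) := by rw [hx]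
      _ = ((q - 1) * a / q ^ s + (q - 1) * a / q ^ s) * (q ^ s + 1) := by ring
      _ = (q - 1) * (q ^ s + 1) := by rw [hsum]
  · intro h2a
    obtain ⟨c, hc⟩ := hqodd
    have hx : (q - 1) * a = q ^ s * c + c := by
      apply Nat.eq_of_mul_eq_mul_left (by omega : 0 < 2)
      calc 2 * ((q - 1) * a) = (q - 1) * (2 * a) := by ring
        _ = 2 * (q ^ s * c + c) := by rw [h2a, hc, Nat.add_sub_cancel]; ring
    rw [hx, Nat.mul_add_mod_self_left, Nat.mul_add_div (by positivity), Nat.mod_eq_of_lt (by omega),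
      Nat.div_eq_of_lt (by omega)]
    rfl

end Digits

section ProjectiveCoset

variable {q s n a : ℕ}

theorem sub_one_mul_mod_eq (hn : (q - 1) * n = q ^ (2 * s) - 1) (y : ℕ) :
    (q - 1) * (y % n) = (q - 1) * y % (q ^ (2 * s) - 1) := by
  rw [← hn, Nat.mul_mod_mul_left]

theorem lt_modulus_of_lt_pow (hq : 2 ≤ q) (hs : 1 ≤ s) (hn : (q - 1) * n = q ^ (2 * s) - 1)
    (ha : a < q ^ s) : a < n := by
  refine Nat.lt_of_mul_lt_mul_left (a := q - 1) ?_
  have hqs : q ≤ q ^ s := Nat.le_self_pow (by omega) q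
  have := Nat.mul_le_mul (by omega : q - 1 + 1 ≤ q ^ s) (by omega : a + 1 ≤ q ^ s)
  rw [hn, two_mul, pow_add, Nat.lt_sub_iff_add_lt]
  nlinarith [(by omega : 1 ≤ q - 1)]

theorem lt_mul_pow_mod_of_ne (hq : 2 ≤ q) (hn : (q - 1) * n = q ^ (2 * s) - 1) (ha : a < q ^ s)
    (hqa : ¬ q ∣ a) {j : ℕ} (hj0 : 0 < j) (hj : j < 2 * s) (hjs : j ≠ s) :
    a < a * q ^ j % n := by
  refine Nat.lt_of_mul_lt_mul_left (a := q - 1) ?_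
  have hx : (q - 1) * a < q ^ (s + 1) := by
    rw [pow_succ']
    exact (Nat.mul_lt_mul_of_pos_left ha (by omega)).trans_le (Nat.mul_le_mul_right _ (by omega))
  have hqx := not_dvd_sub_one_mul (by omega) hqa
  rw [sub_one_mul_mod_eq hn, ← mul_assoc]
  rcases lt_or_gt_of_ne hjs with hjs | hjs
  · exact lt_mul_pow_mod_of_lt hq (Nat.pos_of_ne_zero fun h => hqx (h ▸ dvd_zero q)) hx hj0 hjs
  · exact lt_mul_pow_mod_of_gt hq hqx hx hjs hj

theorem sub_one_mul_mul_pow_mod (hq : 2 ≤ q) (hs : 1 ≤ s) (hn : (q - 1) * n = q ^ (2 * s) - 1)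
    (ha : a < q ^ s) :
    (q - 1) * (a * q ^ s % n) = (q - 1) * a % q ^ s * q ^ s + (q - 1) * a / q ^ s := by
  have hk := sub_one_mul_div_pow_lt hq ha
  have hqs : q ≤ q ^ s := Nat.le_self_pow (by omega) q
  have hrot := Nat.mul_pow_mod_pow_sub_one (b := q) (x := (q - 1) * a) (t := s) (L := 2 * s)
    (by omega) (by rw [show 2 * s - s = s by omega]; omega)
  rw [sub_one_mul_mod_eq hn, ← mul_assoc, hrot, show 2 * s - s = s by omega]

theorem mul_pow_mod_lt_iff (hq : 2 ≤ q) (hs : 1 ≤ s) (hn : (q - 1) * n = q ^ (2 * s) - 1)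
    (ha : a < q ^ s) (hqa : ¬ q ∣ a) :
    a * q ^ s % n < a ↔
      ∃ i : ℕ, (q + 1) / 2 ≤ i ∧ i ≤ q - 2 ∧
        a = (i + 1) + i * ((q ^ s - q) / (q - 1)) := by
  rw [← sub_one_mul_mod_lt_div_iff hq hs ha hqa]
  refine (Nat.mul_lt_mul_left (by omega : 0 < q - 1)).symm.trans ?_
  rw [sub_one_mul_mul_pow_mod hq hs hn ha]
  conv_lhs => rhs; rw [← Nat.div_add_mod ((q - 1) * a) (q ^ s), mul_comm (q ^ s)]
  exact mul_add_lt_mul_add_swap_iff (Nat.one_lt_pow (by omega) (by omega))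

theorem mul_pow_mod_eq_iff (hq : 2 ≤ q) (hqodd : Odd q) (hs : 1 ≤ s)
    (hn : (q - 1) * n = q ^ (2 * s) - 1) (ha : a < q ^ s) (hqa : ¬ q ∣ a) :
    a * q ^ s % n = a ↔ 2 * a = q ^ s + 1 := by
  rw [← sub_one_mul_mod_eq_div_iff hq hqodd hs ha hqa]
  refine (mul_right_inj' (by omega : q - 1 ≠ 0)).symm.trans ?_
  rw [sub_one_mul_mul_pow_mod hq hs hn ha]
  conv_lhs => rhs; rw [← Nat.div_add_mod ((q - 1) * a) (q ^ s), mul_comm (q ^ s)]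
  exact mul_add_eq_mul_add_swap_iff (Nat.one_lt_pow (by omega) (by omega))

theorem mul_pow_two_mul_mod (hq : 0 < q) (hn : (q - 1) * n = q ^ (2 * s) - 1) (ha : a < n) :
    a * q ^ (2 * s) % n = a := by
  have hpow : 1 ≡ q ^ (2 * s) [MOD n] :=
    (Nat.modEq_iff_dvd' (Nat.one_le_pow _ _ (by omega))).2 (Dvd.intro_left _ hn)
  simpa [Nat.ModEq, Nat.mod_eq_of_lt ha] using (hpow.mul_left a).symm

theorem forall_mem_cosetC_le_iff (hq : 2 ≤ q) (hs : 1 ≤ s) (hn : (q - 1) * n = q ^ (2 * s) - 1)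
    (ha : a < q ^ s) (hqa : ¬ q ∣ a) :
    (∀ b ∈ cosetC q n a, a ≤ b) ↔ a ≤ a * q ^ s % n := by
  refine ⟨fun h => h _ ⟨s, rfl⟩, fun h => ?_⟩
  rintro _ ⟨j, rfl⟩
  have han := lt_modulus_of_lt_pow hq hs hn ha
  rw [← mul_pow_mod_mod_eq han (mul_pow_two_mul_mod (by omega) hn han)]
  have hj : j % (2 * s) < 2 * s := Nat.mod_lt _ (by omega)
  rcases Nat.eq_zero_or_pos (j % (2 * s)) with hj0 | hj0
  · rw [hj0, pow_zero, mul_one, Nat.mod_eq_of_lt han]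
  rcases eq_or_ne (j % (2 * s)) s with hjs | hjs
  · rwa [hjs]
  · exact (lt_mul_pow_mod_of_ne hq hn ha hqa hj0 hj hjs).le

theorem ncard_cosetC_of_mul_pow_mod_ne (hq : 2 ≤ q) (hs : 1 ≤ s)
    (hn : (q - 1) * n = q ^ (2 * s) - 1) (ha : a < q ^ s) (hqa : ¬ q ∣ a)
    (hne : a * q ^ s % n ≠ a) : (cosetC q n a).ncard = 2 * s := by
  have han := lt_modulus_of_lt_pow hq hs hn ha
  refine ncard_cosetC han (by omega) (mul_pow_two_mul_mod (by omega) hn han) fun e he0 he => ?_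
  rcases eq_or_ne e s with rfl | hes
  · exact hne
  · exact (lt_mul_pow_mod_of_ne hq hn ha hqa he0 he hes).ne'

theorem ncard_cosetC_of_mul_pow_mod_eq (hq : 2 ≤ q) (hs : 1 ≤ s)
    (hn : (q - 1) * n = q ^ (2 * s) - 1) (ha : a < q ^ s) (hqa : ¬ q ∣ a)
    (heq : a * q ^ s % n = a) : (cosetC q n a).ncard = s :=
  ncard_cosetC (lt_modulus_of_lt_pow hq hs hn ha) (by omega) heq fun _ he0 he =>
    (lt_mul_pow_mod_of_ne hq hn ha hqa he0 (by omega) he.ne).ne'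

end ProjectiveCoset

theorem coset_leaders_projective_odd_general (q m n : ℕ)
    (hq : IsPrimePow q) (hqodd : Odd q) (hm : 4 ≤ m) (hmeven : Even m)
    (hn : n = (q ^ m - 1) / (q - 1))
    (a : ℕ) (ha2 : a ≤ q ^ (m / 2)) (ha3 : ¬ q ∣ a) :
    ((a ∈ cosetC q n a ∧ ∀ b ∈ cosetC q n a, a ≤ b) ↔
      ¬ ∃ i : ℕ, (q + 1) / 2 ≤ i ∧ i ≤ q - 2 ∧
        a = (i + 1) + i * ((q ^ (m / 2) - q) / (q - 1))) ∧
    ((∀ b ∈ cosetC q n a, a ≤ b) →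
      (a ≠ (q ^ (m / 2) + 1) / 2 → (cosetC q n a).ncard = m) ∧
      (a = (q ^ (m / 2) + 1) / 2 → (cosetC q n a).ncard = m / 2)) := by
  obtain ⟨s, rfl⟩ := hmeven
  have hq2 := hq.two_le
  have hs : 1 ≤ s := by omega
  rw [← two_mul] at hn ha2 ⊢
  rw [Nat.mul_div_cancel_left s two_pos] at ha2 ⊢
  have hn' : (q - 1) * n = q ^ (2 * s) - 1 := by
    rw [hn]
    exact Nat.mul_div_cancel' (by simpa using Nat.sub_dvd_pow_sub_pow q 1 (2 * s))
  have ha : a < q ^ s := ha2.lt_of_ne fun h => ha3 (h ▸ dvd_pow_self q (by omega))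
  have hmem : a ∈ cosetC q n a :=
    ⟨0, by rw [pow_zero, mul_one, Nat.mod_eq_of_lt (lt_modulus_of_lt_pow hq2 hs hn' ha)]⟩
  have hfix := mul_pow_mod_eq_iff hq2 hqodd hs hn' ha ha3
  rw [forall_mem_cosetC_le_iff hq2 hs hn' ha ha3, ← mul_pow_mod_lt_iff hq2 hs hn' ha ha3, not_lt]
  refine ⟨and_iff_right hmem, fun _ => ⟨fun hne => ?_, fun heq => ?_⟩⟩
  · exact ncard_cosetC_of_mul_pow_mod_ne hq2 hs hn' ha ha3 fun h => hne (by omega)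
  · obtain ⟨c, hc⟩ := hqodd.pow (n := s)
    exact ncard_cosetC_of_mul_pow_mod_eq hq2 hs hn' ha ha3 (hfix.2 (by omega))

/-- Lemma 22(2): for `q` an odd prime power, `m ≥ 4` even and `n = (q^m − 1)/(q − 1)`,
an integer `a` with `q^{(m−2)/2} ≤ a ≤ q^{m/2}` and `q ∤ a` is a coset leader iff it is
not of the form `(i+1) + i(q^{m/2} − q)/(q − 1)` with `(q+1)/2 ≤ i ≤ q − 2`; moreover a
coset leader `a` satisfies `|C_a| = m` except for `a = (q^{m/2} + 1)/2`, where
`|C_a| = m/2`. -/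
theorem coset_leaders_projective_odd (q m n : ℕ)
    (hq : IsPrimePow q) (hqodd : Odd q) (hm : 4 ≤ m) (hmeven : Even m)
    (hn : n = (q ^ m - 1) / (q - 1))
    (a : ℕ) (ha1 : q ^ ((m - 2) / 2) ≤ a) (ha2 : a ≤ q ^ (m / 2)) (ha3 : ¬ q ∣ a) :
    ((a ∈ cosetC q n a ∧ ∀ b ∈ cosetC q n a, a ≤ b) ↔
      ¬ ∃ i : ℕ, (q + 1) / 2 ≤ i ∧ i ≤ q - 2 ∧
        a = (i + 1) + i * ((q ^ (m / 2) - q) / (q - 1))) ∧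
    ((∀ b ∈ cosetC q n a, a ≤ b) →
      (a ≠ (q ^ (m / 2) + 1) / 2 → (cosetC q n a).ncard = m) ∧
      (a = (q ^ (m / 2) + 1) / 2 → (cosetC q n a).ncard = m / 2)) :=
  coset_leaders_projective_odd_general q m n hq hqodd hm hmeven hn a ha2 ha3
end

section
/- Let q be a prime power, let m ≥ 4 be an even integer, let n = (q^m − 1)/(q − 1), let δ be an integer with 2 ≤ δ ≤ q^{m/2}, and set ε = ⌊(δ−2)(q−1)/(q^{m/2}−1)⌋. Then the union ⋃_{i=1}^{δ−1} C_i of q-cyclotomic cosets modulo n has cardinality m⌈(δ−1)(q−1)/q⌉ − (2ε − (q−2))·m/2 if ε ≥ ⌊(q−1)/2⌋, and cardinality m⌈(δ−1)(q−1)/q⌉ if ε < ⌊(q−1)/2⌋. Consequently, the narrow-sense BCH code C_{(q,n,δ,1)} of length n has dimension n minus this cardinality. -/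
/-!
Write `h = q^(m/2)`, so that `n (q - 1) = h² - 1`, and put `t = (h - 1)/(q - 1)`. Since
`C_{q i} = C_i`, the union is the union of the `C_i` with `1 ≤ i ≤ δ - 1` and `q ∤ i`. For two such
indices, multiplying `i q^k ≡ j (mod n)` by `q - 1` gives a congruence modulo `h² - 1` between
numbers below `(h - 1)(q - 1)`; it has no wrap-around unless `k = 0` or `k = m/2`, and
multiplication by `h` modulo `h² - 1` swaps the two base-`h` digits. Hence the only coincidences
are `(u t + 1) q^(m/2) ≡ v t + 1` with `u + v = q - 1`. Both indices lie below `δ` exactly when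
`q - 1 - ε ≤ u ≤ ε`, and each of these `2ε - (q - 2)` indices `u t + 1` loses `m/2` elements of
its coset.
-/

open Finset

theorem mul_modEq_mod_mul_add_div (a h : ℕ) : a * h ≡ a % h * h + a / h [MOD h * h - 1] := by
  rcases Nat.eq_zero_or_pos h with rfl | hh
  · simp [Nat.ModEq]
  have hsplit : a * h = a % h * h + a / h + a / h * (h * h - 1) := by
    have : 1 ≤ h * h := Nat.one_le_iff_ne_zero.2 (by positivity)
    conv_lhs => rw [← Nat.mod_add_div a h]
    zify [this]; ring
  rw [hsplit]
  exact Nat.add_mul_mod_self_right _ _ _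

theorem exists_eq_mul_add_one_of_swap {q t h i j : ℕ} (hq : 2 ≤ q) (ht : t * (q - 1) + 1 = h)
    (hi0 : 0 < i) (hi : i < h) (hj : j < h)
    (hswap : j * (q - 1) = i * (q - 1) % h * h + i * (q - 1) / h) :
    ∃ u v, u + v = q - 1 ∧ i = u * t + 1 ∧ j = v * t + 1 := by
  obtain ⟨p, rfl⟩ : ∃ p, q = p + 1 := ⟨q - 1, by omega⟩
  simp only [Nat.add_sub_cancel] at ht hswap ⊢
  set u := i * p / h
  set v := i * p % h
  have hdigits : i * p = u * h + v := by rw [mul_comm u]; exact (Nat.div_add_mod _ _).symm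
  refine ⟨u, v, ?_⟩
  have hp : (p : ℤ) ≠ 0 := by exact_mod_cast (by omega : p ≠ 0)
  have ht' : (t : ℤ) * p + 1 = h := by exact_mod_cast ht
  have hi' : (i : ℤ) * p = u * h + v := by exact_mod_cast hdigits
  have hj' : (j : ℤ) * p = v * h + u := by exact_mod_cast hswap
  -- `i - u t = j - v t = (u + v)/(q - 1)`, and `i + j` is this times `h + 1` but lies in `(0, 2h)`.
  have hc : (i : ℤ) - u * t = j - v * t :=
    mul_right_cancel₀ hp (by linear_combination hi' - hj' + (v - u) * ht')
  have hsum : ((i : ℤ) - u * t) * (h + 1) = i + j := by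
    linear_combination t * hi' - i * ht' + hc
  have hc1 : (i : ℤ) - u * t = 1 := by
    have hpos : (0 : ℤ) < i + j := by omega
    have hlt : (i : ℤ) + j < 2 * h := by omega
    have hc0 : (0 : ℤ) < i - u * t := by nlinarith
    nlinarith
  refine ⟨?_, ?_, ?_⟩
  · exact_mod_cast (by linear_combination -hi' + p * hc1 + u * ht' : (u : ℤ) + v = p)
  · exact_mod_cast (by linear_combination hc1 : (i : ℤ) = u * t + 1)
  · exact_mod_cast (by linear_combination hc1 - hc : (j : ℤ) = v * t + 1)

section PowModSqSubOne

variable {q r : ℕ}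

theorem pow_sub_one_mul_sub_one_lt (hq : 2 ≤ q) (hr : 0 < r) :
    (q ^ r - 1) * (q - 1) < q ^ (2 * r) - 1 := by
  have h1 : q ≤ q ^ r := Nat.le_self_pow hr.ne' q
  have h2 : q ^ (2 * r) = q ^ r * q ^ r := by rw [two_mul, pow_add]
  rw [h2]
  zify [(by omega : 1 ≤ q ^ r), (by omega : 1 ≤ q), (by nlinarith : 1 ≤ q ^ r * q ^ r)]
  nlinarith

theorem mul_pow_eq_of_modEq_of_lt (hq : 2 ≤ q) {a b k : ℕ} (ha : a ≤ (q ^ r - 1) * (q - 1))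
    (hb : b < q ^ (2 * r) - 1) (hk : k < r) (h : a * q ^ k ≡ b [MOD q ^ (2 * r) - 1]) :
    a * q ^ k = b := by
  refine h.eq_of_lt_of_lt ?_ hb
  obtain ⟨X, hX⟩ : ∃ X, q ^ r = q * X := ⟨q ^ (r - 1), by rw [← pow_succ']; congr 1; omega⟩
  have hX1 : 1 ≤ X := Nat.pos_of_ne_zero fun h0 => by subst h0; simp at hX; omega
  have hkX : q ^ k ≤ X := by
    rw [← Nat.mul_le_mul_left_iff (by omega : 0 < q), ← hX, ← pow_succ']
    exact Nat.pow_le_pow_right (by omega) hk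
  have hN : q ^ (2 * r) = q * X * (q * X) := by rw [two_mul, pow_add, hX]
  calc a * q ^ k ≤ (q * X - 1) * (q - 1) * X := by rw [← hX]; exact Nat.mul_le_mul ha hkX
    _ < q ^ (2 * r) - 1 := by
      rw [hN]
      have h1 : 1 ≤ q * X := by nlinarith
      have h2 : 1 ≤ q * X * (q * X) := by nlinarith
      zify [h1, h2, (by omega : 1 ≤ q)]
      nlinarith

theorem eq_zero_or_eq_of_mul_pow_modEq (hq : 2 ≤ q) {a b k : ℕ}
    (ha : a ≤ (q ^ r - 1) * (q - 1)) (hb : b ≤ (q ^ r - 1) * (q - 1))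
    (hqa : ¬ q ∣ a) (hqb : ¬ q ∣ b) (hk : k < 2 * r)
    (h : a * q ^ k ≡ b [MOD q ^ (2 * r) - 1]) : k = 0 ∨ k = r := by
  have hr : 0 < r := by omega
  have hbound : ∀ c, c ≤ (q ^ r - 1) * (q - 1) → c < q ^ (2 * r) - 1 := fun c hc =>
    hc.trans_lt (pow_sub_one_mul_sub_one_lt hq hr)
  by_contra! hk'
  rcases Nat.lt_or_gt_of_ne hk'.2 with hlt | hgt
  · apply hqb
    rw [← mul_pow_eq_of_modEq_of_lt hq ha (hbound b hb) hlt h]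
    exact Dvd.dvd.mul_left (dvd_pow_self q hk'.1) a
  · have hone : q ^ (2 * r) ≡ 1 [MOD q ^ (2 * r) - 1] :=
      Nat.modEq_sub (Nat.one_le_pow _ _ (by omega))
    have hback : b * q ^ (2 * r - k) ≡ a [MOD q ^ (2 * r) - 1] := by
      have := (h.mul_right (q ^ (2 * r - k))).symm
      rw [mul_assoc, ← pow_add, Nat.add_sub_cancel' hk.le] at this
      simpa using this.trans (hone.mul_left a)
    apply hqa
    rw [← mul_pow_eq_of_modEq_of_lt hq hb (hbound a ha) (by omega) hback]
    exact Dvd.dvd.mul_left (dvd_pow_self q (by omega)) b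

theorem mul_add_one_mul_pow_modEq (hq : 2 ≤ q) {t n : ℕ} (ht : t * (q - 1) + 1 = q ^ r)
    (hn : n * (q - 1) + 1 = q ^ (2 * r)) {u v : ℕ} (huv : u + v = q - 1) :
    (u * t + 1) * q ^ r ≡ v * t + 1 [MOD n] := by
  obtain ⟨p, rfl⟩ : ∃ p, q = p + 1 := ⟨q - 1, by omega⟩
  simp only [Nat.add_sub_cancel] at ht hn huv
  have hp : (p : ℤ) ≠ 0 := by exact_mod_cast (by omega : p ≠ 0)
  have ht' : (t : ℤ) * p + 1 = (p + 1) ^ r := by exact_mod_cast ht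
  have hn' : (n : ℤ) * p + 1 = ((p + 1) ^ r) ^ 2 := by
    rw [← pow_mul, mul_comm r]; exact_mod_cast hn
  have huv' : (u : ℤ) + v = p := by exact_mod_cast huv
  rw [Nat.modEq_iff_dvd]
  refine ⟨-u, mul_right_cancel₀ hp ?_⟩
  push_cast
  linear_combination (v - u * (p + 1 : ℤ) ^ r) * ht' + u * hn' + ((p + 1 : ℤ) ^ r - 1) * huv'

theorem mul_pow_modEq_cases (hq : 2 ≤ q) {t n : ℕ} (ht : t * (q - 1) + 1 = q ^ r)
    (hn : n * (q - 1) + 1 = q ^ (2 * r)) {i j k : ℕ} (hi : i < q ^ r) (hj : j < q ^ r)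
    (hqi : ¬ q ∣ i) (hqj : ¬ q ∣ j) (hk : k < 2 * r) (h : i * q ^ k ≡ j [MOD n]) :
    (k = 0 ∧ i = j) ∨ (k = r ∧ ∃ u v, u + v = q - 1 ∧ i = u * t + 1 ∧ j = v * t + 1) := by
  have hr : 0 < r := by omega
  have hN : n * (q - 1) = q ^ (2 * r) - 1 := by omega
  have hcop : Nat.Coprime q (q - 1) :=
    (Nat.coprime_self_sub_right (by omega)).2 (Nat.coprime_one_right q)
  have hle : ∀ c, c < q ^ r → c * (q - 1) ≤ (q ^ r - 1) * (q - 1) := fun c hc =>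
    Nat.mul_le_mul_right _ (by omega)
  have hlt : ∀ c, c < q ^ r → c * (q - 1) < q ^ (2 * r) - 1 := fun c hc =>
    (hle c hc).trans_lt (pow_sub_one_mul_sub_one_lt hq hr)
  have hmod : i * (q - 1) * q ^ k ≡ j * (q - 1) [MOD q ^ (2 * r) - 1] := by
    rw [← hN, mul_right_comm]; exact h.mul_right' (q - 1)
  rcases eq_zero_or_eq_of_mul_pow_modEq hq (hle i hi) (hle j hj)
    (fun hd => hqi (hcop.dvd_of_dvd_mul_right hd)) (fun hd => hqj (hcop.dvd_of_dvd_mul_right hd))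
    hk hmod with rfl | hkr
  · rw [pow_zero, mul_one] at hmod
    exact .inl ⟨rfl, Nat.eq_of_mul_eq_mul_right (by omega)
      (hmod.eq_of_lt_of_lt (hlt i hi) (hlt j hj))⟩
  subst k
  refine .inr ⟨rfl, exists_eq_mul_add_one_of_swap hq ht (Nat.pos_of_ne_zero ?_) hi hj ?_⟩
  · rintro rfl; exact hqi (dvd_zero q)
  have hswap := mul_modEq_mod_mul_add_div (i * (q - 1)) (q ^ r)
  rw [← pow_add, ← two_mul] at hswap
  refine (hmod.symm.trans hswap).eq_of_lt_of_lt (hlt j hj) ?_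
  have hh : q ≤ q ^ r := Nat.le_self_pow hr.ne' q
  have hhi : i * (q - 1) / q ^ r < q - 1 :=
    Nat.div_lt_of_lt_mul ((hle i hi).trans_lt (Nat.mul_lt_mul_of_pos_right (by omega) (by omega)))
  have hlo : i * (q - 1) % q ^ r * q ^ r ≤ (q ^ r - 1) * q ^ r :=
    Nat.mul_le_mul_right _ (Nat.le_sub_one_of_lt (Nat.mod_lt _ (by omega)))
  have hsq : (q ^ r - 1) * q ^ r + (q ^ r - 1) = q ^ (2 * r) - 1 := by
    rw [two_mul, pow_add]
    zify [(by omega : 1 ≤ q ^ r), (by nlinarith : 1 ≤ q ^ r * q ^ r)]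
    ring
  omega

end PowModSqSubOne

def indivisibleIcc (q L : ℕ) : Finset ℕ := (Icc 1 L).filter fun i => ¬ q ∣ i

section Cosets

variable {q n m : ℕ}

theorem cosetC_pow_mul_subset (e a : ℕ) : cosetC q n (q ^ e * a) ⊆ cosetC q n a := by
  rintro _ ⟨j, rfl⟩
  exact ⟨e + j, by ring_nf⟩

theorem cosetC_eq_image (hm : 0 < m) (hqm : q ^ m ≡ 1 [MOD n]) (a : ℕ) :
    cosetC q n a = (fun k => a * q ^ k % n) '' Set.Iio m := by
  ext x
  constructor
  · rintro ⟨j, rfl⟩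
    refine ⟨j % m, Nat.mod_lt j hm, ?_⟩
    have hpow : q ^ j ≡ q ^ (j % m) [MOD n] :=
      calc q ^ j = (q ^ m) ^ (j / m) * q ^ (j % m) := by rw [← pow_mul, ← pow_add, Nat.div_add_mod]
        _ ≡ 1 ^ (j / m) * q ^ (j % m) [MOD n] := (hqm.pow _).mul_right _
        _ = q ^ (j % m) := by rw [one_pow, one_mul]
    exact (hpow.mul_left a).symm
  · rintro ⟨k, -, rfl⟩
    exact ⟨k, rfl⟩

theorem iUnion_Icc_cosetC_eq_iUnion_indivisibleIcc (hq : q ≠ 1) (L : ℕ) :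
    ⋃ i ∈ Set.Icc 1 L, cosetC q n i = ⋃ i ∈ indivisibleIcc q L, cosetC q n i := by
  refine subset_antisymm ?_ (Set.biUnion_mono (fun i hi => by
    simpa [indivisibleIcc] using (mem_filter.1 hi).1) fun _ _ => subset_rfl)
  refine Set.iUnion₂_subset fun i ⟨hi1, hiL⟩ => ?_
  obtain ⟨e, i', hqi', rfl⟩ := Nat.exists_eq_pow_mul_and_not_dvd (n := i) (by omega) q hq
  have hi' : i' ∈ indivisibleIcc q L := by
    have := Nat.le_of_dvd (n := q ^ e * i') (by omega) (Dvd.intro_left _ rfl)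
    simp only [indivisibleIcc, mem_filter, mem_Icc]
    exact ⟨⟨Nat.pos_of_ne_zero (by rintro rfl; simp at hi1), by omega⟩, hqi'⟩
  exact (cosetC_pow_mul_subset e i').trans
    (Set.subset_biUnion_of_mem (u := fun i => cosetC q n i) hi')

theorem iUnion_indivisibleIcc_cosetC (hm : 0 < m) (hqm : q ^ m ≡ 1 [MOD n]) (L : ℕ) :
    ⋃ i ∈ indivisibleIcc q L, cosetC q n i =
      ↑((indivisibleIcc q L ×ˢ range m).image fun p : ℕ × ℕ => p.1 * q ^ p.2 % n) := by
  ext x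
  simp [cosetC_eq_image hm hqm, and_assoc]

end Cosets

-- For `e = ⌊(δ - 2)/t⌋`: the `u t + 1 < δ` whose partner `(q - 1 - u) t + 1` is also `< δ`.
def pairedIndices (q t e : ℕ) : Finset ℕ := (Icc (q - 1 - e) e).image (· * t + 1)

-- The pairs `(i, k)` for which `i q^k mod n` runs through the union of the cosets exactly once:
-- the coset of a paired index is covered by the first `m/2` exponents of it and of its partner.
def leaderDomain (q r t e L : ℕ) : Finset (ℕ × ℕ) :=
  (indivisibleIcc q L \ pairedIndices q t e) ×ˢ range (2 * r) ∪ pairedIndices q t e ×ˢ range r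

theorem card_indivisibleIcc (q L : ℕ) : #(indivisibleIcc q L) = L - L / q := by
  have hsplit := card_filter_add_card_filter_not (s := Icc 1 L) (p := fun i => q ∣ i)
  have hdvd : #((Icc 1 L).filter fun i => q ∣ i) = L / q := Nat.Ioc_filter_dvd_card_eq_div L q
  rw [Nat.card_Icc, hdvd] at hsplit
  rw [indivisibleIcc]
  omega

theorem card_pairedIndices {q t : ℕ} (ht : 0 < t) (e : ℕ) :
    #(pairedIndices q t e) = e + 1 - (q - 1 - e) := by
  rw [pairedIndices, card_image_of_injective _ fun a b hab => by
    simpa [ht.ne'] using hab, Nat.card_Icc]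

section LeaderDomain

variable {q r t e L : ℕ}

theorem mem_leaderDomain (hPI : pairedIndices q t e ⊆ indivisibleIcc q L) {p : ℕ × ℕ} :
    p ∈ leaderDomain q r t e L ↔
      p.1 ∈ indivisibleIcc q L ∧ p.2 < 2 * r ∧ (p.1 ∈ pairedIndices q t e → p.2 < r) := by
  simp only [leaderDomain, mem_union, mem_product, mem_sdiff, mem_range]
  constructor
  · rintro (⟨⟨hI, hP⟩, hk⟩ | ⟨hP, hk⟩)
    · exact ⟨hI, hk, fun h => absurd h hP⟩
    · exact ⟨hPI hP, by omega, fun _ => hk⟩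
  · rintro ⟨hI, hk, hP⟩
    by_cases h : p.1 ∈ pairedIndices q t e
    · exact .inr ⟨h, hP h⟩
    · exact .inl ⟨⟨hI, h⟩, hk⟩

theorem card_leaderDomain (hPI : pairedIndices q t e ⊆ indivisibleIcc q L) :
    #(leaderDomain q r t e L) =
      (#(indivisibleIcc q L) - #(pairedIndices q t e)) * (2 * r) + #(pairedIndices q t e) * r := by
  rw [leaderDomain, card_union_of_disjoint (disjoint_product.2 (.inl sdiff_disjoint)),
    card_product, card_product, card_sdiff_of_subset hPI, card_range, card_range]

end LeaderDomain

section Projective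

variable {q r t n δ : ℕ}

theorem pos_of_mul_sub_one_add_one_eq_pow (hq : 2 ≤ q) (hr : 0 < r)
    (ht : t * (q - 1) + 1 = q ^ r) : 0 < t := by
  have := Nat.le_self_pow hr.ne' q
  exact Nat.pos_of_ne_zero fun h0 => by subst h0; omega

theorem le_div_iff_mul_add_one_le (ht : 0 < t) (hδ : 2 ≤ δ) {w : ℕ} :
    w ≤ (δ - 2) / t ↔ w * t + 1 ≤ δ - 1 := by
  rw [Nat.le_div_iff_mul_le ht]; omega

theorem div_le_sub_two (hq : 2 ≤ q) (hr : 0 < r) (ht : t * (q - 1) + 1 = q ^ r)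
    (hδ : 2 ≤ δ) (hδh : δ ≤ q ^ r) : (δ - 2) / t ≤ q - 2 := by
  have := (Nat.div_lt_iff_lt_mul (pos_of_mul_sub_one_add_one_eq_pow hq hr ht)).2
    (show δ - 2 < (q - 1) * t by rw [mul_comm]; omega)
  omega

theorem not_dvd_mul_add_one (hr : 0 < r) (ht : t * (q - 1) + 1 = q ^ r) {w : ℕ}
    (hw : 1 ≤ w) (hw' : w ≤ q - 2) : ¬ q ∣ w * t + 1 := by
  intro hdvd
  have hsplit : (w * t + 1) * (q - 1) = w * q ^ r + (q - 1 - w) := by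
    rw [← ht]; zify [(by omega : 1 ≤ q), (by omega : w ≤ q - 1)]; ring
  have hdvd' : q ∣ q - 1 - w :=
    (Nat.dvd_add_right ((dvd_pow_self q hr.ne').mul_left w)).1 (hsplit ▸ hdvd.mul_right _)
  have := Nat.le_of_dvd (by omega) hdvd'
  omega

theorem pairedIndices_subset (hq : 2 ≤ q) (hr : 0 < r) (ht : t * (q - 1) + 1 = q ^ r)
    (hδ : 2 ≤ δ) (hδh : δ ≤ q ^ r) :
    pairedIndices q t ((δ - 2) / t) ⊆ indivisibleIcc q (δ - 1) := by
  have hε := div_le_sub_two hq hr ht hδ hδh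
  intro i hi
  obtain ⟨w, hw, rfl⟩ := mem_image.1 hi
  rw [mem_Icc] at hw
  simp only [indivisibleIcc, mem_filter, mem_Icc]
  have ht0 := pos_of_mul_sub_one_add_one_eq_pow hq hr ht
  exact ⟨⟨by omega, (le_div_iff_mul_add_one_le ht0 hδ).1 hw.2⟩,
    not_dvd_mul_add_one hr ht (by omega) (by omega)⟩

theorem image_leaderDomain (hq : 2 ≤ q) (hr : 0 < r) (ht : t * (q - 1) + 1 = q ^ r)
    (hn : n * (q - 1) + 1 = q ^ (2 * r)) (hδ : 2 ≤ δ) (hδh : δ ≤ q ^ r) :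
    (indivisibleIcc q (δ - 1) ×ˢ range (2 * r)).image (fun p : ℕ × ℕ => p.1 * q ^ p.2 % n) =
      (leaderDomain q r t ((δ - 2) / t) (δ - 1)).image fun p : ℕ × ℕ => p.1 * q ^ p.2 % n := by
  have hPI := pairedIndices_subset hq hr ht hδ hδh
  have hε := div_le_sub_two hq hr ht hδ hδh
  refine subset_antisymm (fun x hx => ?_) (image_subset_image fun p hp => ?_)
  · obtain ⟨⟨i, k⟩, hp, rfl⟩ := mem_image.1 hx
    rw [mem_product, mem_range] at hp
    by_cases hik : i ∈ pairedIndices q t ((δ - 2) / t) ∧ r ≤ k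
    · obtain ⟨hiP, hk⟩ := hik
      obtain ⟨w, hw, rfl⟩ := mem_image.1 hiP
      rw [mem_Icc] at hw
      have hpartner : (q - 1 - w) * t + 1 ∈ pairedIndices q t ((δ - 2) / t) :=
        mem_image.2 ⟨q - 1 - w, mem_Icc.2 ⟨by omega, by omega⟩, rfl⟩
      refine mem_image.2 ⟨((q - 1 - w) * t + 1, k - r),
        (mem_leaderDomain hPI).2 ⟨hPI hpartner, by omega, fun _ => by omega⟩, ?_⟩
      have hswap := (mul_add_one_mul_pow_modEq hq ht hn
        (by omega : w + (q - 1 - w) = q - 1)).mul_right (q ^ (k - r))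
      rw [mul_assoc, ← pow_add, Nat.add_sub_cancel' hk] at hswap
      exact hswap.symm
    · exact mem_image.2 ⟨(i, k), (mem_leaderDomain hPI).2
        ⟨hp.1, hp.2, fun hP => Nat.lt_of_not_le fun hk => hik ⟨hP, hk⟩⟩, rfl⟩
  · obtain ⟨hI, hk, -⟩ := (mem_leaderDomain hPI).1 hp
    exact mem_product.2 ⟨hI, mem_range.2 hk⟩

theorem injOn_leaderDomain (hq : 2 ≤ q) (hr : 0 < r) (ht : t * (q - 1) + 1 = q ^ r)
    (hn : n * (q - 1) + 1 = q ^ (2 * r)) (hδ : 2 ≤ δ) (hδh : δ ≤ q ^ r) :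
    Set.InjOn (fun p : ℕ × ℕ => p.1 * q ^ p.2 % n) (leaderDomain q r t ((δ - 2) / t) (δ - 1)) := by
  have hPI := pairedIndices_subset hq hr ht hδ hδh
  have ht0 := pos_of_mul_sub_one_add_one_eq_pow hq hr ht
  have hcop : Nat.Coprime n q := by
    have : Nat.Coprime n ((q - 1) * n + 1) :=
      (Nat.coprime_mul_right_add_right n 1 _).2 (Nat.coprime_one_right n)
    rw [mul_comm, hn] at this
    exact this.coprime_dvd_right (dvd_pow_self q (by omega))
  suffices key : ∀ p ∈ leaderDomain q r t ((δ - 2) / t) (δ - 1),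
      ∀ p' ∈ leaderDomain q r t ((δ - 2) / t) (δ - 1),
      p.2 ≤ p'.2 → p.1 * q ^ p.2 % n = p'.1 * q ^ p'.2 % n → p = p' by
    intro p hp p' hp' h
    rcases le_total p.2 p'.2 with hle | hle
    exacts [key p hp p' hp' hle h, (key p' hp' p hp hle h.symm).symm]
  rintro ⟨i, k⟩ hp ⟨j, l⟩ hp' (hkl : k ≤ l) (h : i * q ^ k % n = j * q ^ l % n)
  obtain ⟨hi, hk, -⟩ := (mem_leaderDomain hPI).1 hp
  obtain ⟨hj, hl, hjP⟩ := (mem_leaderDomain hPI).1 hp'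
  simp only [indivisibleIcc, mem_filter, mem_Icc] at hi hj
  have hmod : j * q ^ (l - k) ≡ i [MOD n] := by
    refine (Nat.ModEq.cancel_right_of_coprime (c := q ^ k) (hcop.pow_right k) ?_).symm
    rw [mul_assoc, ← pow_add, Nat.sub_add_cancel hkl]
    exact h
  rcases mul_pow_modEq_cases hq ht hn (by omega) (by omega) hj.2 hi.2 (by omega) hmod with
    ⟨hlk, rfl⟩ | ⟨hlk, u, v, huv, rfl, rfl⟩
  · rw [Prod.mk.injEq]; omega
  · have hu := (le_div_iff_mul_add_one_le ht0 hδ).2 hj.1.2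
    have hv := (le_div_iff_mul_add_one_le ht0 hδ).2 hi.1.2
    have := hjP (mem_image.2 ⟨u, mem_Icc.2 ⟨by omega, hu⟩, rfl⟩)
    omega

theorem ncard_iUnion_cosetC (hq : 2 ≤ q) (hr : 0 < r) (ht : t * (q - 1) + 1 = q ^ r)
    (hn : n * (q - 1) + 1 = q ^ (2 * r)) (hδ : 2 ≤ δ) (hδh : δ ≤ q ^ r) :
    (⋃ i ∈ Set.Icc 1 (δ - 1), cosetC q n i).ncard =
      2 * r * (δ - 1 - (δ - 1) / q) - (2 * ((δ - 2) / t) - (q - 2)) * r := by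
  have hPI := pairedIndices_subset hq hr ht hδ hδh
  have hε := div_le_sub_two hq hr ht hδ hδh
  have hqm : q ^ (2 * r) ≡ 1 [MOD n] := by
    rw [← hn]; simp [Nat.ModEq]
  have hcard := card_le_card hPI
  rw [iUnion_Icc_cosetC_eq_iUnion_indivisibleIcc (by omega),
    iUnion_indivisibleIcc_cosetC (by omega) hqm, image_leaderDomain hq hr ht hn hδ hδh,
    Set.ncard_coe_finset,
    card_image_of_injOn (injOn_leaderDomain hq hr ht hn hδ hδh), card_leaderDomain hPI]
  rw [card_indivisibleIcc, card_pairedIndices (pos_of_mul_sub_one_add_one_eq_pow hq hr ht),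
    show (δ - 2) / t + 1 - (q - 1 - (δ - 2) / t) = 2 * ((δ - 2) / t) - (q - 2) by omega] at hcard ⊢
  generalize δ - 1 - (δ - 1) / q = X at hcard ⊢
  generalize 2 * ((δ - 2) / t) - (q - 2) = s at hcard ⊢
  obtain ⟨d, rfl⟩ := Nat.exists_eq_add_of_le hcard
  rw [Nat.add_sub_cancel_left]
  zify [(by nlinarith : s * r ≤ 2 * r * (s + d))]
  ring

end Projective

theorem mul_sub_one_add_sub_one_div (D : ℕ) {q : ℕ} (hq : 0 < q) :
    (D * (q - 1) + q - 1) / q = D - D / q := by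
  have hD := Nat.mod_add_div D q
  have hs := Nat.mod_lt D hq
  have hk : D / q ≤ D := Nat.div_le_self D q
  generalize D / q = k at hD hk ⊢
  generalize D % q = s at hD hs
  apply Nat.div_eq_of_lt_le <;>
  · zify [hk, hq, (by omega : 1 ≤ D * (q - 1) + q)] at hD ⊢
    nlinarith

theorem narrow_sense_BCH_dimension_projective_general (q m n δ : ℕ) (hq : IsPrimePow q)
    (hmeven : Even m) (hn : n = (q ^ m - 1) / (q - 1))
    (hδ : 2 ≤ δ) (hδ' : δ ≤ q ^ (m / 2)) :
    (((δ - 2) * (q - 1)) / (q ^ (m / 2) - 1) ≥ (q - 1) / 2 →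
      (⋃ i ∈ Set.Icc 1 (δ - 1), cosetC q n i).ncard =
        m * (((δ - 1) * (q - 1) + q - 1) / q) -
          (2 * (((δ - 2) * (q - 1)) / (q ^ (m / 2) - 1)) - (q - 2)) * (m / 2)) ∧
    (((δ - 2) * (q - 1)) / (q ^ (m / 2) - 1) < (q - 1) / 2 →
      (⋃ i ∈ Set.Icc 1 (δ - 1), cosetC q n i).ncard =
        m * (((δ - 1) * (q - 1) + q - 1) / q)) := by
  have hq2 := hq.two_le
  obtain ⟨r, rfl⟩ := hmeven
  rw [← two_mul, Nat.mul_div_cancel_left r two_pos] at *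
  have hr : 0 < r := Nat.pos_of_ne_zero (by rintro rfl; simp at hδ'; omega)
  have hdiv : ∀ k, (q ^ k - 1) / (q - 1) * (q - 1) + 1 = q ^ k := fun k => by
    rw [Nat.div_mul_cancel (Nat.sub_one_dvd_pow_sub_one q k)]
    have := Nat.one_le_pow k q (by omega)
    omega
  have hε : (δ - 2) * (q - 1) / (q ^ r - 1) = (δ - 2) / ((q ^ r - 1) / (q - 1)) := by
    rw [show q ^ r - 1 = (q ^ r - 1) / (q - 1) * (q - 1) by have := hdiv r; omega,
      Nat.mul_div_mul_right _ _ (by omega), Nat.mul_div_cancel _ (by omega)]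
  rw [hε, mul_sub_one_add_sub_one_div _ (by omega),
    ncard_iUnion_cosetC hq2 hr (hdiv r) (hn ▸ hdiv (2 * r)) hδ hδ']
  refine ⟨fun _ => rfl, fun hlt => ?_⟩
  rw [show 2 * ((δ - 2) / ((q ^ r - 1) / (q - 1))) - (q - 2) = 0 by omega]
  simp

/-- Theorem 23: dimension of the narrow-sense BCH code `C_{(q,n,δ,1)}` of length
`n = (q^m − 1)/(q − 1)` for even `m ≥ 4` and `2 ≤ δ ≤ q^{m/2}`, with
`ε = ⌊(δ−2)(q−1)/(q^{m/2}−1)⌋`: the union `⋃_{i=1}^{δ−1} C_i` has cardinality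
`m⌈(δ−1)(q−1)/q⌉ − (2ε − (q−2))·m/2` when `ε ≥ ⌊(q−1)/2⌋`, and `m⌈(δ−1)(q−1)/q⌉`
when `ε < ⌊(q−1)/2⌋`; the code's dimension is `n` minus this cardinality. -/
theorem narrow_sense_BCH_dimension_projective (q m n δ : ℕ) (hq : IsPrimePow q)
    (hm : 4 ≤ m) (hmeven : Even m) (hn : n = (q ^ m - 1) / (q - 1))
    (hδ : 2 ≤ δ) (hδ' : δ ≤ q ^ (m / 2)) :
    (((δ - 2) * (q - 1)) / (q ^ (m / 2) - 1) ≥ (q - 1) / 2 →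
      (⋃ i ∈ Set.Icc 1 (δ - 1), cosetC q n i).ncard =
        m * (((δ - 1) * (q - 1) + q - 1) / q) -
          (2 * (((δ - 2) * (q - 1)) / (q ^ (m / 2) - 1)) - (q - 2)) * (m / 2)) ∧
    (((δ - 2) * (q - 1)) / (q ^ (m / 2) - 1) < (q - 1) / 2 →
      (⋃ i ∈ Set.Icc 1 (δ - 1), cosetC q n i).ncard =
        m * (((δ - 1) * (q - 1) + q - 1) / q)) :=
  narrow_sense_BCH_dimension_projective_general q m n δ hq hmeven hn hδ hδ'
end
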